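/- arXiv:1701.00370 — 5 statements merged into one kernel-verified Lean document; each statement's English description precedes it below -/
import Mathlib

section
/- Let 0 < s ≤ 1 and let g be a smooth real-valued function on an open neighbourhood of the punctured closed disk Δ_s* such that Δg ≥ 0 on that neighbourhood. Suppose there exist a ∈ ℝ and a subpolynomial function μ such that −log μ(1/|z|) ≤ g(z) + a·log|z| ≤ log μ(1/|z|) for all z with 0 < |z| ≤ s. Then the limit lim_{ε→0⁺} (1/2π)∫_{ε ≤ |z| ≤ s} Δg dA exists in ℝ, is nonnegative, and equals (1/2π)∫₀^{2π} s·(∂g/∂r)(s e^{iθ}) dθ + a. (Lemma 2.8 of the paper.) -/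
open Filter MeasureTheory Real

/-- A function `μ : ℝ_{>0} → ℝ_{>0}` is subpolynomial if `μ(x)/x^n → 0` as `x → ∞`
for every real `n > 0`. -/
def Subpolynomial (μ : ℝ → ℝ) : Prop :=
  (∀ x : ℝ, 0 < x → 0 < μ x) ∧
    ∀ n : ℝ, 0 < n → Tendsto (fun x : ℝ => μ x / x ^ n) atTop (nhds 0)

/-- The Laplacian of a function `g : ℂ → ℝ`, as the sum of the second directional
derivatives in the directions `1` and `i`. -/
noncomputable def laplacian (g : ℂ → ℝ) (z : ℂ) : ℝ :=
  iteratedFDeriv ℝ 2 g z ![1, 1] + iteratedFDeriv ℝ 2 g z ![Complex.I, Complex.I]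

section L28sec
open Set
namespace L28

noncomputable def P (r θ : ℝ) : ℂ := (r : ℂ) * Complex.exp ((θ : ℂ) * Complex.I)

noncomputable def Eθ (θ : ℝ) : ℂ := Complex.exp ((θ : ℂ) * Complex.I)

lemma P_eq (r θ : ℝ) : P r θ = Complex.polarCoord.symm (r, θ) := by
  simp [P, Complex.polarCoord_symm_apply, Complex.exp_mul_I, Complex.ofReal_cos,
    Complex.ofReal_sin]

lemma abs_P (r θ : ℝ) (hr : 0 ≤ r) : ‖P r θ‖ = r := by
  simp [P, abs_of_nonneg hr]

lemma P_ne_zero (r θ : ℝ) (hr : 0 < r) : P r θ ≠ 0 := by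
  simp [P, Complex.exp_ne_zero, hr.ne']

lemma Eθ_periodic : Function.Periodic Eθ (2 * π) := by
  intro θ
  simp only [Eθ]
  push_cast
  rw [add_mul, Complex.exp_add]
  simp [Complex.exp_two_pi_mul_I]

lemma P_periodic (r : ℝ) : Function.Periodic (P r) (2 * π) := by
  intro θ
  simp only [P]
  have := Eθ_periodic θ
  simp only [Eθ] at this
  rw [this]


section Calc

variable {g : ℂ → ℝ} {W : Set ℂ} (hW : IsOpen W) (hg : ContDiffOn ℝ (⊤ : ℕ∞) g W)

include hW hg

/-- first derivative notation -/
noncomputable def D1 (g : ℂ → ℝ) (z : ℂ) : ℂ →L[ℝ] ℝ := fderiv ℝ g z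

noncomputable def D2 (g : ℂ → ℝ) (z : ℂ) : ℂ →L[ℝ] ℂ →L[ℝ] ℝ :=
  fderiv ℝ (fderiv ℝ g) z

lemma hgat {z : ℂ} (hz : z ∈ W) : ContDiffAt ℝ (⊤ : ℕ∞) g z :=
  hg.contDiffAt (hW.mem_nhds hz)

lemma hasD1 {z : ℂ} (hz : z ∈ W) : HasFDerivAt g (D1 g z) z :=
  ((hgat hW hg hz).differentiableAt (by simp)).hasFDerivAt

lemma contDiffAt_fderiv {z : ℂ} (hz : z ∈ W) :
    ContDiffAt ℝ 1 (fun w => fderiv ℝ g w) z :=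
  (hgat hW hg hz).fderiv_right ((by exact WithTop.coe_le_coe.mpr le_top))

lemma hasD2 {z : ℂ} (hz : z ∈ W) :
    HasFDerivAt (fun w => fderiv ℝ g w) (D2 g z) z :=
  ((contDiffAt_fderiv hW hg hz).differentiableAt one_ne_zero).hasFDerivAt

omit hW hg in
lemma lap_eq {z : ℂ} : laplacian g z = D2 g z 1 1 + D2 g z Complex.I Complex.I := by
  simp [laplacian, iteratedFDeriv_two_apply, D2]

omit hW hg in
lemma rotation (z : ℂ) (θ : ℝ) :
    D2 g z (Eθ θ) (Eθ θ) + D2 g z (Complex.I * Eθ θ) (Complex.I * Eθ θ)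
      = D2 g z 1 1 + D2 g z Complex.I Complex.I := by
  have hE : Eθ θ = (Real.cos θ : ℝ) • (1 : ℂ) + (Real.sin θ : ℝ) • Complex.I := by
    simp [Eθ, Complex.exp_mul_I, Complex.ofReal_cos, Complex.ofReal_sin, Complex.real_smul]
  have hiE : Complex.I * Eθ θ
      = (-Real.sin θ : ℝ) • (1 : ℂ) + (Real.cos θ : ℝ) • Complex.I := by
    rw [hE, mul_add, mul_smul_comm, mul_smul_comm, Complex.I_mul_I, mul_one]
    simp only [smul_neg, neg_smul, smul_eq_mul, mul_one]
    abel
  rw [hiE, hE]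
  simp only [map_add, _root_.map_smul, ContinuousLinearMap.add_apply,
    ContinuousLinearMap.smul_apply, smul_eq_mul]
  have h1 := Real.sin_sq_add_cos_sq θ
  linear_combination (((D2 g z) 1) 1 + ((D2 g z) Complex.I) Complex.I) * h1

end Calc

noncomputable def Fb (g : ℂ → ℝ) (x : ℝ × ℝ) : ℝ := x.1 * (fderiv ℝ g (P x.1 x.2)) (Eθ x.2)

noncomputable def Gb (g : ℂ → ℝ) (x : ℝ × ℝ) : ℝ :=
  (fderiv ℝ g (P x.1 x.2)) (Complex.I * Eθ x.2)

lemma hasDerivAt_ofReal (r : ℝ) : HasDerivAt (fun t : ℝ => (t : ℂ)) 1 r := by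
  exact Complex.ofRealCLM.hasDerivAt (x := r)

lemma hasDerivAt_P_r (θ : ℝ) (r : ℝ) : HasDerivAt (fun r' => P r' θ) (Eθ θ) r := by
  have h := (hasDerivAt_ofReal r).mul_const (Eθ θ)
  rw [one_mul] at h
  exact h

lemma hasDerivAt_Eθ (θ : ℝ) : HasDerivAt Eθ (Eθ θ * Complex.I) θ := by
  have h : HasDerivAt (fun t : ℝ => (t : ℂ) * Complex.I) Complex.I θ := by
    simpa using (hasDerivAt_ofReal θ).mul_const Complex.I
  exact h.cexp

lemma hasDerivAt_P_θ (r θ : ℝ) : HasDerivAt (fun θ' => P r θ') (P r θ * Complex.I) θ := by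
  have := (hasDerivAt_Eθ θ).const_mul (r : ℂ)
  simpa [P, Eθ, mul_assoc] using this

lemma hasDerivAt_iEθ (θ : ℝ) :
    HasDerivAt (fun θ' => Complex.I * Eθ θ') (-(Eθ θ)) θ := by
  have := (hasDerivAt_Eθ θ).const_mul Complex.I
  have h2 : Complex.I * (Eθ θ * Complex.I) = -(Eθ θ) := by
    rw [mul_comm, mul_assoc, Complex.I_mul_I]; ring
  rw [h2] at this; exact this

section FG

variable {g : ℂ → ℝ} {W : Set ℂ} (hW : IsOpen W) (hg : ContDiffOn ℝ (⊤ : ℕ∞) g W)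
include hW hg

lemma hasDerivAt_F_r {r θ : ℝ} (hz : P r θ ∈ W) :
    HasDerivAt (fun r' => Fb g (r', θ))
      (D1 g (P r θ) (Eθ θ) + r * D2 g (P r θ) (Eθ θ) (Eθ θ)) r := by
  have h1 : HasDerivAt (fun r' => fderiv ℝ g (P r' θ)) (D2 g (P r θ) (Eθ θ)) r :=
    (hasD2 hW hg hz).comp_hasDerivAt r (hasDerivAt_P_r θ r)
  have h2 : HasDerivAt (fun r' => (fderiv ℝ g (P r' θ)) (Eθ θ))
      (D2 g (P r θ) (Eθ θ) (Eθ θ)) r := by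
    simpa using h1.clm_apply (hasDerivAt_const r (Eθ θ))
  have h3 := (hasDerivAt_id r).mul h2
  simp only [Fb]
  rw [show D1 g (P r θ) (Eθ θ) + r * D2 g (P r θ) (Eθ θ) (Eθ θ)
    = 1 * (fderiv ℝ g (P r θ)) (Eθ θ) + id r * D2 g (P r θ) (Eθ θ) (Eθ θ) by simp [D1]]
  exact h3

lemma hasDerivAt_G_θ {r θ : ℝ} (hz : P r θ ∈ W) :
    HasDerivAt (fun θ' => Gb g (r, θ'))
      (r * D2 g (P r θ) (Complex.I * Eθ θ) (Complex.I * Eθ θ) - D1 g (P r θ) (Eθ θ)) θ := by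
  have h1 : HasDerivAt (fun θ' => fderiv ℝ g (P r θ'))
      (D2 g (P r θ) (P r θ * Complex.I)) θ :=
    (hasD2 hW hg hz).comp_hasDerivAt θ (hasDerivAt_P_θ r θ)
  have h2 := h1.clm_apply (hasDerivAt_iEθ θ)
  have key : P r θ * Complex.I = r • (Complex.I * Eθ θ) := by
    simp only [P, Eθ, Complex.real_smul]
    ring
  rw [key] at h2
  simp only [_root_.map_smul, ContinuousLinearMap.smul_apply, smul_eq_mul, map_neg] at h2
  simp only [Gb]
  rw [sub_eq_add_neg]
  exact h2

omit hW hg in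
lemma contDiff_Pfun : ContDiff ℝ 1 (fun x : ℝ × ℝ => P x.1 x.2) := by
  unfold P
  exact (Complex.ofRealCLM.contDiff.comp contDiff_fst).mul
    (Complex.contDiff_exp.comp ((Complex.ofRealCLM.contDiff.comp contDiff_snd).mul contDiff_const))

omit hW hg in
lemma contDiff_Efun : ContDiff ℝ 1 (fun x : ℝ × ℝ => Eθ x.2) := by
  unfold Eθ
  exact Complex.contDiff_exp.comp ((Complex.ofRealCLM.contDiff.comp contDiff_snd).mul contDiff_const)

lemma contDiffAt_F {x : ℝ × ℝ} (hz : P x.1 x.2 ∈ W) : ContDiffAt ℝ 1 (Fb g) x := by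
  have cDg : ContDiffAt ℝ 1 (fun y : ℝ × ℝ => fderiv ℝ g (P y.1 y.2)) x :=
    (contDiffAt_fderiv hW hg hz).comp x contDiff_Pfun.contDiffAt
  exact contDiff_fst.contDiffAt.mul (cDg.clm_apply contDiff_Efun.contDiffAt)

lemma contDiffAt_G {x : ℝ × ℝ} (hz : P x.1 x.2 ∈ W) : ContDiffAt ℝ 1 (Gb g) x := by
  have cDg : ContDiffAt ℝ 1 (fun y : ℝ × ℝ => fderiv ℝ g (P y.1 y.2)) x :=
    (contDiffAt_fderiv hW hg hz).comp x contDiff_Pfun.contDiffAt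
  exact cDg.clm_apply ((contDiff_const.mul contDiff_Efun).contDiffAt)

lemma fderiv_F_fst {x : ℝ × ℝ} (hz : P x.1 x.2 ∈ W) :
    fderiv ℝ (Fb g) x (1, 0)
      = D1 g (P x.1 x.2) (Eθ x.2) + x.1 * D2 g (P x.1 x.2) (Eθ x.2) (Eθ x.2) := by
  have hd : HasFDerivAt (Fb g) (fderiv ℝ (Fb g) x) x :=
    ((contDiffAt_F hW hg hz).differentiableAt one_ne_zero).hasFDerivAt
  have hline : HasDerivAt (fun r : ℝ => (r, x.2)) ((1 : ℝ), (0 : ℝ)) x.1 :=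
    (hasDerivAt_id x.1).prodMk (hasDerivAt_const _ _)
  have h1 : HasDerivAt (fun r => Fb g (r, x.2)) (fderiv ℝ (Fb g) x (1, 0)) x.1 :=
    (hd.comp_hasDerivAt x.1 hline :)
  exact h1.unique (hasDerivAt_F_r hW hg hz)

lemma fderiv_G_snd {x : ℝ × ℝ} (hz : P x.1 x.2 ∈ W) :
    fderiv ℝ (Gb g) x (0, 1)
      = x.1 * D2 g (P x.1 x.2) (Complex.I * Eθ x.2) (Complex.I * Eθ x.2)
        - D1 g (P x.1 x.2) (Eθ x.2) := by
  have hd : HasFDerivAt (Gb g) (fderiv ℝ (Gb g) x) x :=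
    ((contDiffAt_G hW hg hz).differentiableAt one_ne_zero).hasFDerivAt
  have hline : HasDerivAt (fun t : ℝ => (x.1, t)) ((0 : ℝ), (1 : ℝ)) x.2 :=
    (hasDerivAt_const _ _).prodMk (hasDerivAt_id x.2)
  have h1 : HasDerivAt (fun t => Gb g (x.1, t)) (fderiv ℝ (Gb g) x (0, 1)) x.2 :=
    (hd.comp_hasDerivAt x.2 hline :)
  exact h1.unique (hasDerivAt_G_θ hW hg hz)

lemma divergence_eq {x : ℝ × ℝ} (hz : P x.1 x.2 ∈ W) :
    fderiv ℝ (Fb g) x (1, 0) + fderiv ℝ (Gb g) x (0, 1)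
      = x.1 * laplacian g (P x.1 x.2) := by
  rw [fderiv_F_fst hW hg hz, fderiv_G_snd hW hg hz, lap_eq, ← rotation (θ := x.2)]
  ring

end FG


noncomputable def Ann (ε s : ℝ) : Set ℂ := {z : ℂ | ε ≤ ‖z‖ ∧ ‖z‖ ≤ s}

noncomputable def bI (g : ℂ → ℝ) (t : ℝ) : ℝ := ∫ θ in (-π)..π, (fderiv ℝ g (P t θ)) (Eθ θ)

lemma Ann_measurable (ε s : ℝ) : MeasurableSet (Ann ε s) := by
  have : Ann ε s = (fun z : ℂ => ‖z‖) ⁻¹' (Icc ε s) := rfl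
  rw [this]
  exact measurableSet_Icc.preimage continuous_norm.measurable

section Green

variable {g : ℂ → ℝ} {W : Set ℂ} {s : ℝ} (hW : IsOpen W) (hg : ContDiffOn ℝ (⊤ : ℕ∞) g W)
  (hs0 : 0 < s) (hWsub : {z : ℂ | z ≠ 0 ∧ ‖z‖ ≤ s} ⊆ W)

include hWsub in
lemma memP {r θ : ℝ} (hr : 0 < r) (hrs : r ≤ s) : P r θ ∈ W := by
  refine hWsub ⟨P_ne_zero r θ hr, ?_⟩
  rw [abs_P r θ hr.le]; exact hrs

include hW hg in
lemma continuousAt_lap {z : ℂ} (hz : z ∈ W) : ContinuousAt (laplacian g) z := by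
  have hD2 : ContinuousAt (fun w => fderiv ℝ (fderiv ℝ g) w) z :=
    ((((hgat hW hg hz).fderiv_right (m := 1) (by exact WithTop.coe_le_coe.mpr le_top))).fderiv_right (m := 0)
      le_rfl).continuousAt
  have h1 : ContinuousAt (fun w : ℂ => fderiv ℝ (fderiv ℝ g) w (1 : ℂ) (1 : ℂ)) z := by
    exact ((ContinuousLinearMap.apply ℝ ℝ (1 : ℂ)).continuous.comp
      ((ContinuousLinearMap.apply ℝ (ℂ →L[ℝ] ℝ) (1 : ℂ)).continuous)).continuousAt.comp hD2
  have h2 : ContinuousAt (fun w : ℂ =>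
      fderiv ℝ (fderiv ℝ g) w Complex.I Complex.I) z := by
    exact ((ContinuousLinearMap.apply ℝ ℝ (Complex.I)).continuous.comp
      ((ContinuousLinearMap.apply ℝ (ℂ →L[ℝ] ℝ) (Complex.I)).continuous)).continuousAt.comp hD2
  have : laplacian g = fun w => fderiv ℝ (fderiv ℝ g) w 1 1
      + fderiv ℝ (fderiv ℝ g) w Complex.I Complex.I := funext fun _ => lap_eq
  rw [this]
  exact h1.add h2

include hW hg hs0 hWsub in
lemma contOn_rlap {ε : ℝ} (hε : 0 < ε) :
    ContinuousOn (fun x : ℝ × ℝ => x.1 • laplacian g (P x.1 x.2)) (Icc ε s ×ˢ Icc (-π) π) := by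
  intro x hx
  have hx1 : 0 < x.1 := lt_of_lt_of_le hε hx.1.1
  have hPx : P x.1 x.2 ∈ W := memP hWsub hx1 hx.1.2
  have hPc : ContinuousAt (fun y : ℝ × ℝ => P y.1 y.2) x :=
    contDiff_Pfun.continuous.continuousAt
  have hc2 : ContinuousAt (fun y : ℝ × ℝ => laplacian g (P y.1 y.2)) x :=
    ((continuousAt_lap hW hg hPx).comp (x := x) hPc :)
  exact (continuousAt_fst.smul hc2).continuousWithinAt

include hW hg hs0 hWsub in
lemma green {ε : ℝ} (hε : 0 < ε) (hεs : ε ≤ s) :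
    ∫ z in Ann ε s, laplacian g z = s * bI g s - ε * bI g ε := by
  have hππ : (-π : ℝ) ≤ π := by linarith [Real.pi_pos]
  -- Step 1: polar change of variables
  have h1 : ∫ z in Ann ε s, laplacian g z
      = ∫ x in (Icc ε s) ×ˢ (Ioo (-π) π), x.1 • laplacian g (P x.1 x.2) := by
    rw [← integral_indicator (Ann_measurable ε s),
      ← Complex.integral_comp_polarCoord_symm ((Ann ε s).indicator (laplacian g))]
    rw [polarCoord_target]
    have hsub : (Icc ε s) ×ˢ (Ioo (-π) π) ⊆ (Ioi (0:ℝ)) ×ˢ (Ioo (-π) π) :=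
      Set.prod_mono_left (fun r hr => lt_of_lt_of_le hε hr.1)
    have heq : ∀ p ∈ (Ioi (0:ℝ)) ×ˢ (Ioo (-π) π),
        p.1 • (Ann ε s).indicator (laplacian g) (Complex.polarCoord.symm p)
          = ((Icc ε s) ×ˢ (Ioo (-π) π)).indicator
              (fun x : ℝ × ℝ => x.1 • laplacian g (P x.1 x.2)) p := by
      rintro ⟨r, θ⟩ ⟨hr, hθ⟩
      have habs : ‖Complex.polarCoord.symm (r, θ)‖ = r := by
        rw [← P_eq, abs_P _ _ (le_of_lt hr)]
      by_cases hmem : ε ≤ r ∧ r ≤ s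
      · have hm1 : Complex.polarCoord.symm (r, θ) ∈ Ann ε s :=
          ⟨by rw [habs]; exact hmem.1, by rw [habs]; exact hmem.2⟩
        have hm2 : (r, θ) ∈ (Icc ε s) ×ˢ (Ioo (-π) π) :=
          Set.mem_prod.mpr ⟨⟨hmem.1, hmem.2⟩, hθ⟩
        rw [Set.indicator_of_mem hm1, Set.indicator_of_mem hm2, ← P_eq]
      · have hm1 : Complex.polarCoord.symm (r, θ) ∉ Ann ε s := by
          intro hc
          rw [Ann, Set.mem_setOf_eq, habs] at hc
          exact hmem hc
        have hm2 : (r, θ) ∉ (Icc ε s) ×ˢ (Ioo (-π) π) := by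
          intro hc
          exact hmem ⟨hc.1.1, hc.1.2⟩
        rw [Set.indicator_of_notMem hm1, Set.indicator_of_notMem hm2, smul_zero]
    rw [setIntegral_congr_fun (measurableSet_Ioi.prod measurableSet_Ioo) heq,
      setIntegral_indicator (measurableSet_Icc.prod measurableSet_Ioo),
      Set.inter_eq_self_of_subset_right hsub]
  -- Integrability
  have hint : IntegrableOn (fun x : ℝ × ℝ => x.1 • laplacian g (P x.1 x.2))
      ((Icc ε s) ×ˢ (Icc (-π) π)) :=
    (contOn_rlap hW hg hs0 hWsub hε).integrableOn_compact (isCompact_Icc.prod isCompact_Icc)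
  have hint' : IntegrableOn (fun x : ℝ × ℝ => x.1 • laplacian g (P x.1 x.2))
      ((Icc ε s) ×ˢ (Ioo (-π) π)) :=
    hint.mono_set (Set.prod_mono_right Ioo_subset_Icc_self)
  -- Step 2: iterated integral
  have h2 : ∫ x in (Icc ε s) ×ˢ (Ioo (-π) π), x.1 • laplacian g (P x.1 x.2)
      = ∫ r in ε..s, ∫ θ in (-π)..π, r • laplacian g (P r θ) := by
    have hint'' : IntegrableOn (fun x : ℝ × ℝ => x.1 • laplacian g (P x.1 x.2))
        ((Icc ε s) ×ˢ (Ioo (-π) π)) ((volume : Measure ℝ).prod volume) := hint'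
    have hfub := setIntegral_prod (μ := (volume : Measure ℝ)) (ν := (volume : Measure ℝ))
      (fun x : ℝ × ℝ => x.1 • laplacian g (P x.1 x.2)) hint''
    rw [show (volume : Measure (ℝ × ℝ)) = (volume : Measure ℝ).prod volume from rfl, hfub]
    calc ∫ r in Icc ε s, ∫ y in Ioo (-π) π, r • laplacian g (P r y)
        = ∫ r in Ioc ε s, ∫ y in Ioo (-π) π, r • laplacian g (P r y) :=
          setIntegral_congr_set (Ioc_ae_eq_Icc).symm
      _ = ∫ r in Ioc ε s, ∫ y in Ioc (-π) π, r • laplacian g (P r y) :=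
          setIntegral_congr_fun measurableSet_Ioc
            (fun r _ => setIntegral_congr_set Ioo_ae_eq_Ioc)
      _ = ∫ r in ε..s, ∫ θ in (-π)..π, r • laplacian g (P r θ) := by
          rw [intervalIntegral.integral_of_le hεs]
          refine setIntegral_congr_fun measurableSet_Ioc (fun r _ => ?_)
          rw [intervalIntegral.integral_of_le hππ]
  -- Step 3: divergence theorem
  have huIccr : uIcc ε s = Icc ε s := uIcc_of_le hεs
  have huIccθ : uIcc (-π) π = Icc (-π) π := uIcc_of_le hππ
  have hmemRect : ∀ x : ℝ × ℝ, x ∈ Icc ε s ×ˢ Icc (-π) π → P x.1 x.2 ∈ W := fun x hx =>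
    memP hWsub (lt_of_lt_of_le hε hx.1.1) hx.1.2
  have HcF : ContinuousOn (Fb g) (uIcc ε s ×ˢ uIcc (-π) π) := by
    rw [huIccr, huIccθ]
    exact fun x hx => ((contDiffAt_F hW hg (hmemRect x hx)).continuousAt).continuousWithinAt
  have HcG : ContinuousOn (Gb g) (uIcc ε s ×ˢ uIcc (-π) π) := by
    rw [huIccr, huIccθ]
    exact fun x hx => ((contDiffAt_G hW hg (hmemRect x hx)).continuousAt).continuousWithinAt
  have hmem' : ∀ x : ℝ × ℝ, x ∈ Ioo (min ε s) (max ε s) ×ˢ Ioo (min (-π) π) (max (-π) π)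
      → P x.1 x.2 ∈ W := by
    intro x hx
    rw [min_eq_left hεs, max_eq_right hεs] at hx
    exact memP hWsub (lt_of_lt_of_le hε hx.1.1.le) hx.1.2.le
  have HdF : ∀ x ∈ Ioo (min ε s) (max ε s) ×ˢ Ioo (min (-π) π) (max (-π) π) \ (∅ : Set (ℝ × ℝ)),
      HasFDerivAt (Fb g) (fderiv ℝ (Fb g) x) x := by
    rintro x ⟨hx, -⟩
    exact ((contDiffAt_F hW hg (hmem' x hx)).differentiableAt one_ne_zero).hasFDerivAt
  have HdG : ∀ x ∈ Ioo (min ε s) (max ε s) ×ˢ Ioo (min (-π) π) (max (-π) π) \ (∅ : Set (ℝ × ℝ)),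
      HasFDerivAt (Gb g) (fderiv ℝ (Gb g) x) x := by
    rintro x ⟨hx, -⟩
    exact ((contDiffAt_G hW hg (hmem' x hx)).differentiableAt one_ne_zero).hasFDerivAt
  have Hi : IntegrableOn (fun x : ℝ × ℝ => fderiv ℝ (Fb g) x (1, 0) + fderiv ℝ (Gb g) x (0, 1))
      (uIcc ε s ×ˢ uIcc (-π) π) := by
    rw [huIccr, huIccθ]
    exact hint.congr_fun
      (fun x hx => by dsimp only; rw [smul_eq_mul, ← divergence_eq hW hg (hmemRect x hx)])
      (measurableSet_Icc.prod measurableSet_Icc)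
  have hdiv := integral2_divergence_prod_of_hasFDerivAt_off_countable (Fb g) (Gb g)
    (fun x => fderiv ℝ (Fb g) x) (fun x => fderiv ℝ (Gb g) x) ε (-π) s π ∅ countable_empty
    HcF HcG HdF HdG Hi
  have hLHS : (∫ r in ε..s, ∫ θ in (-π)..π,
        fderiv ℝ (Fb g) (r, θ) (1, 0) + fderiv ℝ (Gb g) (r, θ) (0, 1))
      = ∫ r in ε..s, ∫ θ in (-π)..π, r • laplacian g (P r θ) := by
    refine intervalIntegral.integral_congr (fun r hr => ?_)
    rw [huIccr] at hr
    refine intervalIntegral.integral_congr (fun θ hθ => ?_)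
    have hd := divergence_eq hW hg (x := (r, θ))
      (memP hWsub (lt_of_lt_of_le hε hr.1) hr.2)
    simpa [smul_eq_mul] using hd
  have hE3 : Complex.exp (-((π : ℂ) * Complex.I)) = -1 := by
    rw [Complex.exp_neg, Complex.exp_pi_mul_I]
    norm_num
  have hGcancel : ∀ r : ℝ, Gb g (r, π) = Gb g (r, -π) := by
    intro r
    simp [Gb, P, Eθ, Complex.ofReal_neg, neg_mul, hE3, Complex.exp_pi_mul_I]
  have hFbd : ∀ t : ℝ, (∫ θ in (-π)..π, Fb g (t, θ)) = t * bI g t := by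
    intro t
    rw [bI, ← intervalIntegral.integral_const_mul]
    exact intervalIntegral.integral_congr (fun θ _ => rfl)
  have hGint : (∫ r in ε..s, Gb g (r, π)) = ∫ r in ε..s, Gb g (r, -π) :=
    intervalIntegral.integral_congr (fun r _ => hGcancel r)
  rw [h1, h2, ← hLHS, hdiv, hGint, hFbd s, hFbd ε]
  ring

end Green

noncomputable def mI (g : ℂ → ℝ) (t : ℝ) : ℝ := ∫ θ in (-π)..π, g (P t θ)

section Radial

variable {g : ℂ → ℝ} {W : Set ℂ} {s : ℝ} (hW : IsOpen W) (hg : ContDiffOn ℝ (⊤ : ℕ∞) g W)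
  (hWsub : {z : ℂ | z ≠ 0 ∧ ‖z‖ ≤ s} ⊆ W)

include hW hg hWsub in
lemma hasDerivAt_g_radial {r θ : ℝ} (hr : 0 < r) (hrs : r ≤ s) :
    HasDerivAt (fun r' => g (P r' θ)) (fderiv ℝ g (P r θ) (Eθ θ)) r := by
  have h : HasDerivAt (g ∘ fun r' => P r' θ) ((D1 g (P r θ)) (Eθ θ)) r :=
    (hasD1 hW hg (memP hWsub hr hrs)).comp_hasDerivAt (f := fun r' => P r' θ) r
      (hasDerivAt_P_r θ r)
  exact h

include hW hg in
lemma contAt_dgE {x : ℝ × ℝ} (hz : P x.1 x.2 ∈ W) :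
    ContinuousAt (fun y : ℝ × ℝ => fderiv ℝ g (P y.1 y.2) (Eθ y.2)) x := by
  have cDg : ContDiffAt ℝ 1 (fun y : ℝ × ℝ => fderiv ℝ g (P y.1 y.2)) x :=
    (contDiffAt_fderiv hW hg hz).comp x contDiff_Pfun.contDiffAt
  exact (cDg.clm_apply contDiff_Efun.contDiffAt).continuousAt

include hW hg hWsub in
lemma contOn_gP {t t' : ℝ} (ht : 0 < t) (ht's : t' ≤ s) :
    ContinuousOn (fun x : ℝ × ℝ => fderiv ℝ g (P x.1 x.2) (Eθ x.2))
      (Icc t t' ×ˢ Icc (-π) π) := by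
  intro x hx
  exact (contAt_dgE hW hg
    (memP hWsub (lt_of_lt_of_le ht hx.1.1) (hx.1.2.trans ht's))).continuousWithinAt

include hW hg hWsub in
lemma bI_cont_radial {t θ : ℝ} (ht : 0 < t) (hts : t ≤ s) :
    ContinuousAt (fun r : ℝ => fderiv ℝ g (P r θ) (Eθ θ)) t := by
  have h := contAt_dgE hW hg (x := (t, θ)) (memP hWsub ht hts)
  have hline : ContinuousAt (fun r : ℝ => ((r, θ) : ℝ × ℝ)) t :=
    (continuous_id.prodMk continuous_const).continuousAt
  exact h.comp (x := t) hline

include hW hg hWsub in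
lemma mI_sub {t t' : ℝ} (ht : 0 < t) (htt' : t ≤ t') (ht's : t' ≤ s) :
    mI g t' - mI g t = ∫ r in t..t', bI g r := by
  have hππ : (-π : ℝ) ≤ π := by linarith [Real.pi_pos]
  -- FTC in the radial direction
  have key : ∀ θ : ℝ, g (P t' θ) - g (P t θ)
      = ∫ r in t..t', fderiv ℝ g (P r θ) (Eθ θ) := by
    intro θ
    have hIcc : uIcc t t' = Icc t t' := uIcc_of_le htt'
    refine (intervalIntegral.integral_eq_sub_of_hasDerivAt (f := fun u => g (P u θ))
      (fun r hr => ?_) ?_).symm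
    · rw [hIcc] at hr
      exact hasDerivAt_g_radial hW hg hWsub (lt_of_lt_of_le ht hr.1) (hr.2.trans ht's)
    · apply ContinuousOn.intervalIntegrable
      intro r hr
      rw [hIcc] at hr
      exact (bI_cont_radial hW hg hWsub (lt_of_lt_of_le ht hr.1)
        (hr.2.trans ht's)).continuousWithinAt
  -- continuity of g ∘ P on circles
  have hgc : ∀ u : ℝ, 0 < u → u ≤ s → IntervalIntegrable (fun θ => g (P u θ)) volume (-π) π := by
    intro u hu hus
    apply ContinuousOn.intervalIntegrable
    intro θ _
    have : ContinuousAt (fun θ' : ℝ => g (P u θ')) θ := by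
      have hc : ContinuousAt g (P u θ) := ((hgat hW hg (memP hWsub hu hus)).continuousAt)
      have : ContinuousAt (fun θ' : ℝ => P u θ') θ := (hasDerivAt_P_θ u θ).continuousAt
      exact hc.comp (x := θ) this
    exact this.continuousWithinAt
  have h1 : mI g t' - mI g t
      = ∫ θ in (-π)..π, (g (P t' θ) - g (P t θ)) := by
    rw [mI, mI, ← intervalIntegral.integral_sub (hgc t' (lt_of_lt_of_le ht htt') ht's)
      (hgc t ht (htt'.trans ht's))]
  rw [h1]
  -- rewrite using key
  have h2 : (∫ θ in (-π)..π, (g (P t' θ) - g (P t θ)))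
      = ∫ θ in (-π)..π, ∫ r in t..t', fderiv ℝ g (P r θ) (Eθ θ) :=
    intervalIntegral.integral_congr (fun θ _ => key θ)
  rw [h2]
  -- Fubini swap
  have hcont2 : ContinuousOn (fun x : ℝ × ℝ => fderiv ℝ g (P x.1 x.2) (Eθ x.2))
      (Icc t t' ×ˢ Icc (-π) π) := contOn_gP hW hg hWsub ht ht's
  have hint : IntegrableOn (fun x : ℝ × ℝ => fderiv ℝ g (P x.1 x.2) (Eθ x.2))
      (Icc t t' ×ˢ Icc (-π) π) :=
    hcont2.integrableOn_compact (isCompact_Icc.prod isCompact_Icc)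
  have hint2 : Integrable (Function.uncurry (fun r θ => fderiv ℝ g (P r θ) (Eθ θ)))
      ((volume.restrict (Ioc t t')).prod (volume.restrict (Ioc (-π) π))) := by
    rw [Measure.prod_restrict]
    exact (hint.mono_set (Set.prod_mono Ioc_subset_Icc_self Ioc_subset_Icc_self))
  have hswap := integral_integral_swap hint2
  -- convert interval integrals to set integrals
  have e1 : (∫ θ in (-π)..π, ∫ r in t..t', fderiv ℝ g (P r θ) (Eθ θ))
      = ∫ θ in Ioc (-π) π, ∫ r in Ioc t t', fderiv ℝ g (P r θ) (Eθ θ) := by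
    rw [intervalIntegral.integral_of_le hππ]
    refine setIntegral_congr_fun measurableSet_Ioc (fun θ _ => ?_)
    rw [intervalIntegral.integral_of_le htt']
  have e2 : (∫ r in t..t', bI g r)
      = ∫ r in Ioc t t', ∫ θ in Ioc (-π) π, fderiv ℝ g (P r θ) (Eθ θ) := by
    rw [intervalIntegral.integral_of_le htt']
    refine setIntegral_congr_fun measurableSet_Ioc (fun r _ => ?_)
    rw [bI, intervalIntegral.integral_of_le hππ]
  rw [e1, e2]
  exact hswap.symm

end Radial

section Asym

variable {g : ℂ → ℝ} {W : Set ℂ} {s : ℝ} (hW : IsOpen W) (hg : ContDiffOn ℝ (⊤ : ℕ∞) g W)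
  (hs0 : 0 < s) (hWsub : {z : ℂ | z ≠ 0 ∧ ‖z‖ ≤ s} ⊆ W)

omit hW hg hs0 hWsub in
lemma Ann_subset_W (hε : 0 < ε) (hWsub : {z : ℂ | z ≠ 0 ∧ ‖z‖ ≤ s} ⊆ W) :
    Ann ε s ⊆ W := by
  intro z hz
  refine hWsub ⟨?_, hz.2⟩
  intro h0
  have h1 : ε ≤ (0:ℝ) := by
    have := hz.1
    rw [h0] at this
    simpa using this
  exact absurd (hε.trans_le h1) (lt_irrefl _)

include hW hg hWsub in
lemma Ig_integrableOn {ε : ℝ} (hε : 0 < ε) :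
    IntegrableOn (laplacian g) (Ann ε s) := by
  have hcomp : IsCompact (Ann ε s) := by
    have hclosed : IsClosed (Ann ε s) := by
      have : Ann ε s = (fun z : ℂ => ‖z‖) ⁻¹' (Icc ε s) := rfl
      rw [this]
      exact isClosed_Icc.preimage continuous_norm
    have hbdd : Bornology.IsBounded (Ann ε s) := by
      refine Metric.isBounded_closedBall (x := (0:ℂ)) (r := s) |>.subset ?_
      intro z hz
      simpa [Metric.mem_closedBall, Complex.dist_eq] using hz.2
    exact Metric.isCompact_of_isClosed_isBounded hclosed hbdd
  refine ContinuousOn.integrableOn_compact hcomp ?_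
  exact fun z hz => (continuousAt_lap hW hg (Ann_subset_W hε hWsub hz)).continuousWithinAt

include hW hg hWsub in
lemma Ig_nonneg {ε : ℝ} (hε : 0 < ε) (hΔ : ∀ z ∈ W, 0 ≤ laplacian g z) :
    0 ≤ ∫ z in Ann ε s, laplacian g z :=
  setIntegral_nonneg (Ann_measurable ε s) (fun z hz => hΔ z (Ann_subset_W hε hWsub hz))

include hW hg hs0 hWsub in
lemma beta_mono (hΔ : ∀ z ∈ W, 0 ≤ laplacian g z) {t t' : ℝ} (ht : 0 < t) (htt' : t ≤ t')
    (ht's : t' ≤ s) : t * bI g t ≤ t' * bI g t' := by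
  have hIle : ∫ z in Ann t' s, laplacian g z ≤ ∫ z in Ann t s, laplacian g z := by
    refine setIntegral_mono_set (Ig_integrableOn hW hg hWsub ht) ?_ ?_
    · filter_upwards [ae_restrict_mem (Ann_measurable t s)] with z hz
      exact hΔ z (Ann_subset_W ht hWsub hz)
    · refine HasSubset.Subset.eventuallyLE ?_
      intro z hz
      exact ⟨htt'.trans hz.1, hz.2⟩
  have g1 := green hW hg hs0 hWsub ht (htt'.trans ht's)
  have g2 := green hW hg hs0 hWsub (ht.trans_le htt') ht's
  linarith

include hW hg hs0 hWsub in
lemma bI_intervalIntegrable {t u : ℝ} (ht : 0 < t) (htu : t ≤ u) (hus : u ≤ s) :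
    IntervalIntegrable (bI g) volume t u := by
  set c : ℝ → ℝ := fun r => min (max r t) s with hc_def
  have hc : Continuous c := (continuous_id.max continuous_const).min continuous_const
  have hcb : ∀ r, 0 < c r ∧ c r ≤ s := by
    intro r
    constructor
    · have : t ≤ max r t := le_max_right _ _
      have : min (max r t) s ≥ min t s := min_le_min_right s this |>.trans_eq' rfl
      calc (0:ℝ) < min t s := lt_min ht hs0
        _ ≤ min (max r t) s := min_le_min_right s (le_max_right _ _)
    · exact min_le_right _ _
  have hfd : ContinuousOn (fun z => fderiv ℝ g z) W := fun z hz =>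
    ((contDiffAt_fderiv hW hg hz).continuousAt).continuousWithinAt
  have hPc : Continuous (fun x : ℝ × ℝ => P (c x.1) x.2) := by
    have := contDiff_Pfun.continuous
    exact this.comp ((hc.comp continuous_fst).prodMk continuous_snd)
  have hrange : ∀ x : ℝ × ℝ, P (c x.1) x.2 ∈ W := fun x =>
    memP hWsub (hcb x.1).1 (hcb x.1).2
  have hcont : Continuous (Function.uncurry
      (fun r θ => fderiv ℝ g (P (c r) θ) (Eθ θ))) := by
    have h1 : Continuous (fun x : ℝ × ℝ => fderiv ℝ g (P (c x.1) x.2)) :=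
      hfd.comp_continuous hPc hrange
    have h2 : Continuous (fun x : ℝ × ℝ => Eθ x.2) := contDiff_Efun.continuous
    exact h1.clm_apply h2
  have hcont2 : Continuous (fun r => ∫ θ in (-π)..π, fderiv ℝ g (P (c r) θ) (Eθ θ)) :=
    intervalIntegral.continuous_parametric_intervalIntegral_of_continuous' hcont _ _
  have heq : EqOn (bI g) (fun r => ∫ θ in (-π)..π, fderiv ℝ g (P (c r) θ) (Eθ θ))
      (uIcc t u) := by
    intro r hr
    rw [uIcc_of_le htu] at hr
    have hcr : c r = r := by
      rw [hc_def]
      simp only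
      rw [max_eq_left hr.1, min_eq_left (hr.2.trans hus)]
    simp only [bI, hcr]
  exact (hcont2.continuousOn.congr heq).intervalIntegrable

end Asym

section Asym2

variable {g : ℂ → ℝ} {W : Set ℂ} {s : ℝ} (hW : IsOpen W) (hg : ContDiffOn ℝ (⊤ : ℕ∞) g W)
  (hs0 : 0 < s) (hWsub : {z : ℂ | z ≠ 0 ∧ ‖z‖ ≤ s} ⊆ W)

omit hW hg hs0 hWsub in
lemma log_mu_bound {μ : ℝ → ℝ} (hμ : Subpolynomial μ) {n : ℝ} (hn : 0 < n) :
    ∀ᶠ x : ℝ in atTop, Real.log (μ x) ≤ n * Real.log x := by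
  filter_upwards [(hμ.2 n hn).eventually_lt_const one_pos, eventually_ge_atTop (1:ℝ)]
    with x h1 hx1
  have hx0 : (0:ℝ) < x := lt_of_lt_of_le one_pos hx1
  have hμx : 0 < μ x := hμ.1 x hx0
  have hxn : (0:ℝ) < x ^ n := Real.rpow_pos_of_pos hx0 n
  have hle : μ x ≤ x ^ n := by
    by_contra hlt
    push_neg at hlt
    have : 1 < μ x / x ^ n := (one_lt_div hxn).2 hlt
    linarith
  calc Real.log (μ x) ≤ Real.log (x ^ n) := Real.log_le_log hμx hle
    _ = n * Real.log x := Real.log_rpow hx0 n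

include hW hg hWsub in
lemma gP_intervalIntegrable {u : ℝ} (hu : 0 < u) (hus : u ≤ s) :
    IntervalIntegrable (fun θ => g (P u θ)) volume (-π) π := by
  apply ContinuousOn.intervalIntegrable
  intro θ _
  have hc : ContinuousAt g (P u θ) := (hgat hW hg (memP hWsub hu hus)).continuousAt
  have hp : ContinuousAt (fun θ' : ℝ => P u θ') θ := (hasDerivAt_P_θ u θ).continuousAt
  exact (hc.comp (x := θ) hp).continuousWithinAt

include hW hg hs0 hWsub in
lemma mI_add_bound {μ : ℝ → ℝ} (hμ : Subpolynomial μ) {a n : ℝ} (hn : 0 < n)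
    (hbound : ∀ z : ℂ, z ≠ 0 → ‖z‖ ≤ s →
      -Real.log (μ (1 / ‖z‖)) ≤ g z + a * Real.log (‖z‖) ∧
        g z + a * Real.log (‖z‖) ≤ Real.log (μ (1 / ‖z‖))) :
    ∀ᶠ t in nhdsWithin (0:ℝ) (Set.Ioi 0),
      |mI g t + (2*π) * (a * Real.log t)| ≤ (2*π*n) * (-Real.log t) := by
  obtain ⟨x0, hx0⟩ := eventually_atTop.1 (log_mu_bound hμ hn)
  have hM : (0:ℝ) < max x0 1 := lt_of_lt_of_le one_pos (le_max_right _ _)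
  have hmem : Ioo (0:ℝ) (min s (min 1 (1 / max x0 1))) ∈ nhdsWithin (0:ℝ) (Set.Ioi 0) := by
    refine Ioo_mem_nhdsGT_of_mem ⟨le_refl _, ?_⟩
    have : (0:ℝ) < 1 / max x0 1 := by positivity
    simp only [lt_min_iff]
    exact ⟨hs0, one_pos, this⟩
  filter_upwards [hmem] with t ht
  obtain ⟨ht0, htlt⟩ := ht
  have hts : t ≤ s := le_of_lt (lt_of_lt_of_le htlt (min_le_left _ _))
  have ht1 : t < 1 := lt_of_lt_of_le htlt ((min_le_right _ _).trans (min_le_left _ _))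
  have htM : t < 1 / max x0 1 := lt_of_lt_of_le htlt ((min_le_right _ _).trans (min_le_right _ _))
  have hinvt : x0 ≤ 1 / t := by
    have h1 : max x0 1 < 1 / t := by
      rw [lt_div_iff₀ ht0]
      calc (max x0 1) * t < (max x0 1) * (1 / max x0 1) := by
            exact mul_lt_mul_of_pos_left htM hM
        _ = 1 := mul_one_div_cancel (ne_of_gt hM)
    exact le_of_lt (lt_of_le_of_lt (le_max_left _ _) h1)
  have hlogmu : Real.log (μ (1 / t)) ≤ n * (-Real.log t) := by
    have h := hx0 (1 / t) hinvt
    rw [show Real.log (1 / t) = -Real.log t by rw [one_div, Real.log_inv]] at h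
    exact h
  have hptw : ∀ θ : ℝ, |g (P t θ) + a * Real.log t| ≤ n * (-Real.log t) := by
    intro θ
    have hb := hbound (P t θ) (P_ne_zero t θ ht0) (by rw [abs_P t θ ht0.le]; exact hts)
    rw [abs_P t θ ht0.le] at hb
    refine abs_le.2 ⟨?_, ?_⟩
    · linarith [hb.1]
    · linarith [hb.2]
  have hgint := gP_intervalIntegrable hW hg hWsub ht0 hts
  have hadd : (∫ θ in (-π)..π, (g (P t θ) + a * Real.log t))
      = mI g t + (2*π) * (a * Real.log t) := by
    rw [intervalIntegral.integral_add hgint intervalIntegrable_const,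
      intervalIntegral.integral_const, mI]
    simp only [smul_eq_mul]
    ring
  have hb2 := intervalIntegral.norm_integral_le_of_norm_le_const
    (C := n * (-Real.log t)) (f := fun θ => g (P t θ) + a * Real.log t)
    (a := -π) (b := π) (fun θ _ => by simpa [Real.norm_eq_abs] using hptw θ)
  rw [hadd] at hb2
  have habs : |π - (-π)| = 2*π := by
    rw [abs_of_pos (by linarith [Real.pi_pos])]
    ring
  rw [Real.norm_eq_abs, habs] at hb2
  calc |mI g t + (2*π) * (a * Real.log t)| ≤ n * (-Real.log t) * (2*π) := hb2
    _ = (2*π*n) * (-Real.log t) := by ring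

include hW hg hs0 hWsub in
lemma key_estimate (hΔ : ∀ z ∈ W, 0 ≤ laplacian g z) {a n t : ℝ} (hn : 0 < n)
    (ht0 : 0 < t) (ht1 : t < 1) (hts : t ≤ s)
    (hQt : |mI g t + (2*π) * (a * Real.log t)| ≤ (2*π*n) * (-Real.log t))
    (hQt2 : |mI g (t^2) + (2*π) * (a * Real.log (t^2))| ≤ (2*π*n) * (-Real.log (t^2))) :
    t^2 * bI g (t^2) ≤ -(2*π*a) + 6*π*n ∧ -(2*π*a) - 6*π*n ≤ t * bI g t := by
  set L := -Real.log t with hL_def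
  have hL : 0 < L := by
    rw [hL_def]
    simpa using neg_pos.2 (Real.log_neg ht0 ht1)
  have ht2pos : 0 < t^2 := pow_pos ht0 2
  have ht2t : t^2 ≤ t := by nlinarith
  have hlog2 : Real.log (t^2) = 2 * Real.log t := by
    rw [Real.log_pow]
    push_cast
    ring
  have hm := mI_sub hW hg hWsub ht2pos ht2t hts
  have hIb := bI_intervalIntegrable hW hg hs0 hWsub ht2pos ht2t hts
  have hIconst : ∀ C : ℝ, IntervalIntegrable (fun r => C * r⁻¹) volume (t^2) t := by
    intro C
    apply ContinuousOn.intervalIntegrable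
    intro r hr
    rw [uIcc_of_le ht2t] at hr
    exact (continuousAt_const.mul
      (continuousAt_inv₀ (ne_of_gt (lt_of_lt_of_le ht2pos hr.1)))).continuousWithinAt
  have hinv : (∫ r in (t^2)..t, r⁻¹) = L := by
    rw [integral_inv_of_pos ht2pos ht0,
      Real.log_div (ne_of_gt ht0) (ne_of_gt ht2pos), hlog2, hL_def]
    ring
  have hlow : (t^2 * bI g (t^2)) * L ≤ mI g t - mI g (t^2) := by
    rw [hm]
    calc (t^2 * bI g (t^2)) * L = ∫ r in (t^2)..t, (t^2 * bI g (t^2)) * r⁻¹ := by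
          rw [intervalIntegral.integral_const_mul, hinv]
      _ ≤ ∫ r in (t^2)..t, bI g r := by
          refine intervalIntegral.integral_mono_on ht2t (hIconst _) hIb (fun r hr => ?_)
          have hr0 : 0 < r := lt_of_lt_of_le ht2pos hr.1
          have hmono := beta_mono hW hg hs0 hWsub hΔ ht2pos hr.1 (hr.2.trans hts)
          rw [← div_eq_mul_inv, div_le_iff₀ hr0]
          linarith [mul_comm (bI g r) r]
  have hupp : mI g t - mI g (t^2) ≤ (t * bI g t) * L := by
    rw [hm]
    calc (∫ r in (t^2)..t, bI g r) ≤ ∫ r in (t^2)..t, (t * bI g t) * r⁻¹ := by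
          refine intervalIntegral.integral_mono_on ht2t hIb (hIconst _) (fun r hr => ?_)
          have hr0 : 0 < r := lt_of_lt_of_le ht2pos hr.1
          have hmono := beta_mono hW hg hs0 hWsub hΔ hr0 hr.2 hts
          rw [← div_eq_mul_inv, le_div_iff₀ hr0]
          linarith [mul_comm (bI g r) r]
      _ = (t * bI g t) * L := by rw [intervalIntegral.integral_const_mul, hinv]
  have hQt' := abs_le.1 hQt
  have hQt2' := abs_le.1 hQt2
  have hrw : -Real.log (t^2) = 2*L := by rw [hlog2, hL_def]; ring
  rw [hrw] at hQt2'
  have hlogt : Real.log t = -L := by rw [hL_def]; ring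
  rw [hlogt] at hQt'
  rw [hlog2, hlogt] at hQt2'
  constructor
  · have h1 : (t^2 * bI g (t^2)) * L ≤ (-(2*π*a) + 6*π*n) * L := by
      nlinarith [hQt'.1, hQt'.2, hQt2'.1, hQt2'.2, hlow]
    exact le_of_mul_le_mul_right h1 hL
  · have h2 : (-(2*π*a) - 6*π*n) * L ≤ (t * bI g t) * L := by
      nlinarith [hQt'.1, hQt'.2, hQt2'.1, hQt2'.2, hupp]
    exact le_of_mul_le_mul_right h2 hL

end Asym2

section Fin

variable {g : ℂ → ℝ} {W : Set ℂ} {s : ℝ} (hW : IsOpen W) (hg : ContDiffOn ℝ (⊤ : ℕ∞) g W)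
  (hs0 : 0 < s) (hWsub : {z : ℂ | z ≠ 0 ∧ ‖z‖ ≤ s} ⊆ W)

include hW hg hs0 hWsub in
lemma beta_tendsto {μ : ℝ → ℝ} (hμ : Subpolynomial μ) {a : ℝ}
    (hΔ : ∀ z ∈ W, 0 ≤ laplacian g z)
    (hbound : ∀ z : ℂ, z ≠ 0 → ‖z‖ ≤ s →
      -Real.log (μ (1 / ‖z‖)) ≤ g z + a * Real.log (‖z‖) ∧
        g z + a * Real.log (‖z‖) ≤ Real.log (μ (1 / ‖z‖))) :
    Tendsto (fun t => t * bI g t) (nhdsWithin (0:ℝ) (Set.Ioi 0)) (nhds (-(2*π*a))) := by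
  rw [Metric.tendsto_nhds]
  intro δ hδ
  have hπ := Real.pi_pos
  set n : ℝ := δ / (16*π) with hn_def
  have hn : 0 < n := by positivity
  have hQ := mI_add_bound hW hg hs0 hWsub hμ hn hbound
  have hsq : Tendsto (fun t : ℝ => t^2)
      (nhdsWithin (0:ℝ) (Set.Ioi 0)) (nhdsWithin (0:ℝ) (Set.Ioi 0)) := by
    rw [tendsto_nhdsWithin_iff]
    constructor
    · have h : Tendsto (fun t : ℝ => t^2) (nhds 0) (nhds 0) := by
        simpa using (continuous_pow 2).tendsto (0:ℝ)
      exact h.mono_left nhdsWithin_le_nhds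
    · filter_upwards [self_mem_nhdsWithin] with t ht
      exact pow_pos (show (0:ℝ) < t from ht) 2
  have hsqrt : Tendsto Real.sqrt
      (nhdsWithin (0:ℝ) (Set.Ioi 0)) (nhdsWithin (0:ℝ) (Set.Ioi 0)) := by
    rw [tendsto_nhdsWithin_iff]
    constructor
    · have h : Tendsto Real.sqrt (nhds 0) (nhds 0) := by
        simpa using Real.continuous_sqrt.tendsto (0:ℝ)
      exact h.mono_left nhdsWithin_le_nhds
    · filter_upwards [self_mem_nhdsWithin] with t ht
      exact Real.sqrt_pos.2 ht
  have hsmall : Ioo (0:ℝ) (min (s^2) (min s 1)) ∈ nhdsWithin (0:ℝ) (Set.Ioi 0) := by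
    refine Ioo_mem_nhdsGT_of_mem ⟨le_refl _, ?_⟩
    simp only [lt_min_iff]
    exact ⟨by positivity, hs0, one_pos⟩
  filter_upwards [hQ, hsq.eventually hQ, hsqrt.eventually hQ, hsmall]
    with t hQt hQt2 hQst hts
  obtain ⟨ht0, htlt⟩ := hts
  have hts2 : t < s^2 := lt_of_lt_of_le htlt (min_le_left _ _)
  have htss : t ≤ s := le_of_lt
    (lt_of_lt_of_le htlt ((min_le_right _ _).trans (min_le_left _ _)))
  have ht1 : t < 1 := lt_of_lt_of_le htlt ((min_le_right _ _).trans (min_le_right _ _))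
  have hkey1 := key_estimate hW hg hs0 hWsub hΔ hn ht0 ht1 htss hQt hQt2
  have hst0 : 0 < Real.sqrt t := Real.sqrt_pos.2 ht0
  have hst1 : Real.sqrt t < 1 := by
    rw [show (1:ℝ) = Real.sqrt 1 by simp]
    exact Real.sqrt_lt_sqrt ht0.le ht1
  have hsts : Real.sqrt t ≤ s := by
    have h := Real.sqrt_lt_sqrt ht0.le hts2
    rw [Real.sqrt_sq hs0.le] at h
    exact h.le
  have hsq_eq : (Real.sqrt t)^2 = t := Real.sq_sqrt ht0.le
  have hkey2 := key_estimate hW hg hs0 hWsub hΔ hn hst0 hst1 hsts hQst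
    (by rw [hsq_eq]; exact hQt)
  rw [hsq_eq] at hkey2
  rw [Real.dist_eq]
  have h1 : t * bI g t ≤ -(2*π*a) + 6*π*n := hkey2.1
  have h2 : -(2*π*a) - 6*π*n ≤ t * bI g t := hkey1.2
  have habs : |t * bI g t - (-(2*π*a))| ≤ 6*π*n := abs_le.2 ⟨by linarith, by linarith⟩
  have hlt : 6*π*n < δ := by
    have he : 6*π*n = 6*δ/16 := by
      rw [hn_def]
      field_simp
    rw [he]
    linarith
  exact lt_of_le_of_lt habs hlt

omit hW hg hs0 hWsub in
lemma boundary_eq (s : ℝ) :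
    (∫ θ in (0:ℝ)..(2*π), fderiv ℝ g (P s θ) (P s θ)) = s * bI g s := by
  have hper : Function.Periodic (fun θ : ℝ => fderiv ℝ g (P s θ) (P s θ)) (2*π) := by
    intro θ
    simp only [P_periodic s θ]
  have h1 := hper.intervalIntegral_add_eq 0 (-π)
  rw [zero_add] at h1
  rw [show -π + 2*π = π by ring] at h1
  rw [h1]
  have h2 : ∀ θ : ℝ, fderiv ℝ g (P s θ) (P s θ) = s * fderiv ℝ g (P s θ) (Eθ θ) := by
    intro θ
    have hPs : P s θ = (s:ℝ) • Eθ θ := by simp [P, Eθ, Complex.real_smul]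
    calc fderiv ℝ g (P s θ) (P s θ)
        = fderiv ℝ g (P s θ) ((s:ℝ) • Eθ θ) := by rw [← hPs]
      _ = s * fderiv ℝ g (P s θ) (Eθ θ) := by rw [_root_.map_smul]; simp
  rw [intervalIntegral.integral_congr (fun θ _ => h2 θ),
    intervalIntegral.integral_const_mul]
  rfl

end Fin

end L28

/-- Lemma 2.8: for `g` smooth with `Δg ≥ 0` on a neighbourhood of the punctured closed
disk of radius `s`, satisfying a two-sided subpolynomial growth bound
`-log μ(1/|z|) ≤ g(z) + a log|z| ≤ log μ(1/|z|)`, the improper integral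
`(1/2π)∫_{Δ_s} Δg dA` exists, is nonnegative, and equals
`(1/2π)∫₀^{2π} s (∂g/∂r)(s e^{iθ}) dθ + a`. -/
theorem stmt0 (s : ℝ) (hs0 : 0 < s) (hs1 : s ≤ 1)
    (g : ℂ → ℝ) (W : Set ℂ) (hW : IsOpen W)
    (hWsub : {z : ℂ | z ≠ 0 ∧ ‖z‖ ≤ s} ⊆ W)
    (hg : ContDiffOn ℝ (⊤ : ℕ∞) g W)
    (hΔ : ∀ z ∈ W, 0 ≤ laplacian g z)
    (a : ℝ) (μ : ℝ → ℝ) (hμ : Subpolynomial μ)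
    (hbound : ∀ z : ℂ, z ≠ 0 → ‖z‖ ≤ s →
      -Real.log (μ (1 / ‖z‖)) ≤ g z + a * Real.log (‖z‖) ∧
        g z + a * Real.log (‖z‖) ≤ Real.log (μ (1 / ‖z‖))) :
    0 ≤ (1 / (2 * π)) * (∫ θ in (0:ℝ)..(2 * π),
          fderiv ℝ g ((s : ℂ) * Complex.exp ((θ : ℂ) * Complex.I))
            ((s : ℂ) * Complex.exp ((θ : ℂ) * Complex.I))) + a ∧
      Tendsto (fun ε : ℝ =>
          (1 / (2 * π)) * ∫ z in {z : ℂ | ε ≤ ‖z‖ ∧ ‖z‖ ≤ s}, laplacian g z)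
        (nhdsWithin 0 (Set.Ioi 0))
        (nhds ((1 / (2 * π)) * (∫ θ in (0:ℝ)..(2 * π),
          fderiv ℝ g ((s : ℂ) * Complex.exp ((θ : ℂ) * Complex.I))
            ((s : ℂ) * Complex.exp ((θ : ℂ) * Complex.I))) + a)) := by
  have hπ := Real.pi_pos
  have hbd : (∫ θ in (0:ℝ)..(2 * π),
        fderiv ℝ g ((s : ℂ) * Complex.exp ((θ : ℂ) * Complex.I))
          ((s : ℂ) * Complex.exp ((θ : ℂ) * Complex.I))) = s * L28.bI g s :=
    L28.boundary_eq s
  have htend : Tendsto (fun ε : ℝ =>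
      (1 / (2 * π)) * ∫ z in {z : ℂ | ε ≤ ‖z‖ ∧ ‖z‖ ≤ s}, laplacian g z)
      (nhdsWithin 0 (Set.Ioi 0))
      (nhds ((1 / (2 * π)) * (s * L28.bI g s) + a)) := by
    have hβ := L28.beta_tendsto hW hg hs0 hWsub hμ hΔ hbound
    have h2 : Tendsto (fun ε : ℝ => (1/(2*π)) * (s * L28.bI g s - ε * L28.bI g ε))
        (nhdsWithin (0:ℝ) (Set.Ioi 0))
        (nhds ((1/(2*π)) * (s * L28.bI g s - -(2*π*a)))) :=
      (tendsto_const_nhds.sub hβ).const_mul _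
    have heq : (1/(2*π)) * (s * L28.bI g s - -(2*π*a))
        = (1/(2*π)) * (s * L28.bI g s) + a := by
      field_simp
      ring
    rw [heq] at h2
    refine h2.congr' ?_
    filter_upwards [Ioo_mem_nhdsGT_of_mem ⟨le_refl (0:ℝ), hs0⟩] with ε hε
    have hg1 := L28.green hW hg hs0 hWsub hε.1 hε.2.le
    show _ = (1 / (2 * π)) * ∫ z in L28.Ann ε s, laplacian g z
    rw [hg1]
  constructor
  · rw [hbd]
    refine ge_of_tendsto htend ?_
    filter_upwards [Ioo_mem_nhdsGT_of_mem ⟨le_refl (0:ℝ), hs0⟩] with ε hε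
    have hnn := L28.Ig_nonneg hW hg hWsub hε.1 hΔ
    have h2π : (0:ℝ) ≤ 1/(2*π) := by positivity
    exact mul_nonneg h2π hnn
  · rw [hbd]
    exact htend

end L28sec
end

section
/- Let 0 < s ≤ 1 and let g be a smooth real-valued function on an open neighbourhood of the punctured closed disk Δ_s* such that Δg ≥ 0 on that neighbourhood. Suppose there exist a ∈ ℝ and a subpolynomial function μ such that −log μ(1/|z|) ≤ g(z) + a·log|z| ≤ log μ(1/|z|) for all z with 0 < |z| ≤ s. Then, with F(t) := −(1/2π)∫₀^{2π} t·(∂g/∂r)(t e^{iθ}) dθ, the limit lim_{t→0⁺} F(t) exists and equals a. (Equation (limit_to_zero) in the proof of Lemma 2.8 of the paper.) -/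
open Filter MeasureTheory Real

/-- `F(t) = -(1/2π) ∫₀^{2π} t (∂g/∂r)(t e^{iθ}) dθ`; note that
`t·(∂g/∂r)(te^{iθ})` is the derivative of `g` at `te^{iθ}` in the direction `te^{iθ}`. -/
noncomputable def Fcirc (g : ℂ → ℝ) (t : ℝ) : ℝ :=
  -((1 / (2 * π)) * ∫ θ in (0:ℝ)..(2 * π),
      fderiv ℝ g ((t : ℂ) * Complex.exp ((θ : ℂ) * Complex.I))
        ((t : ℂ) * Complex.exp ((θ : ℂ) * Complex.I)))

open ContinuousLinearMap
noncomputable def Emap (p : ℝ × ℝ) : ℂ := Complex.exp (p.1 + p.2 * Complex.I)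

noncomputable def Lre : ℝ × ℝ →L[ℝ] ℂ :=
  Complex.ofRealCLM.comp (ContinuousLinearMap.fst ℝ ℝ ℝ) +
    Complex.I • Complex.ofRealCLM.comp (ContinuousLinearMap.snd ℝ ℝ ℝ)

@[simp] lemma Lre_apply (v : ℝ × ℝ) : Lre v = (v.1 : ℂ) + v.2 * Complex.I := by
  simp [Lre, mul_comm]

lemma Emap_eq (p : ℝ × ℝ) : Emap p = Complex.exp (Lre p) := by simp [Emap]

@[simp] lemma abs_Emap (p : ℝ × ℝ) : ‖Emap p‖ = Real.exp p.1 := by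
  simp [Emap, Complex.norm_exp]

lemma Emap_ne_zero (p : ℝ × ℝ) : Emap p ≠ 0 := Complex.exp_ne_zero _

lemma continuous_Emap : Continuous Emap := by
  unfold Emap; fun_prop

lemma hasFDerivAt_Emap (p : ℝ × ℝ) : HasFDerivAt Emap (Emap p • Lre) p := by
  have h1 : HasFDerivAt (fun q : ℝ × ℝ => Complex.exp (Lre q))
      ((Complex.exp (Lre p) • (1 : ℂ →L[ℝ] ℂ)).comp Lre) p :=
    (Complex.hasDerivAt_exp (Lre p)).complexToReal_fderiv.comp p Lre.hasFDerivAt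
  have h2 : (Complex.exp (Lre p) • (1 : ℂ →L[ℝ] ℂ)).comp Lre = Emap p • Lre := by
    ext v
    · simp [Emap_eq]
    · simp [Emap_eq]
  rw [h2] at h1
  exact h1.congr_of_eventuallyEq (by filter_upwards with q using (Emap_eq q))

section main
variable (g : ℂ → ℝ)

noncomputable def D2 (z : ℂ) : ℂ →L[ℝ] ℂ →L[ℝ] ℝ := fderiv ℝ (fderiv ℝ g) z

noncomputable def Gr (p : ℝ × ℝ) : ℝ := fderiv ℝ g (Emap p) (Emap p)
noncomputable def Gθ (p : ℝ × ℝ) : ℝ := fderiv ℝ g (Emap p) (Complex.I * Emap p)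

noncomputable def Gr' (p : ℝ × ℝ) : ℝ × ℝ →L[ℝ] ℝ :=
  (fderiv ℝ g (Emap p)).comp (Emap p • Lre) +
    ((D2 g (Emap p)).comp (Emap p • Lre)).flip (Emap p)

noncomputable def Gθ' (p : ℝ × ℝ) : ℝ × ℝ →L[ℝ] ℝ :=
  (fderiv ℝ g (Emap p)).comp (Complex.I • (Emap p • Lre)) +
    ((D2 g (Emap p)).comp (Emap p • Lre)).flip (Complex.I * Emap p)

variable {W : Set ℂ} {g}

lemma hgat (hW : IsOpen W) (hg : ContDiffOn ℝ (⊤ : ℕ∞) g W) {z : ℂ} (hz : z ∈ W) :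
    ContDiffAt ℝ (⊤ : ℕ∞) g z :=
  ((hg z hz).contDiffAt (hW.mem_nhds hz)).of_le (by simp)

lemma hasFDerivAt_g (hW : IsOpen W) (hg : ContDiffOn ℝ (⊤ : ℕ∞) g W) {z : ℂ} (hz : z ∈ W) :
    HasFDerivAt g (fderiv ℝ g z) z :=
  ((hgat hW hg hz).differentiableAt (by simp)).hasFDerivAt

lemma hasFDerivAt_fderiv (hW : IsOpen W) (hg : ContDiffOn ℝ (⊤ : ℕ∞) g W) {z : ℂ} (hz : z ∈ W) :
    HasFDerivAt (fderiv ℝ g) (D2 g z) z := by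
  have h : ContDiffAt ℝ 1 (fderiv ℝ g) z :=
    (hgat hW hg hz).fderiv_right (m := 1) (by norm_cast)
  exact (h.differentiableAt one_ne_zero).hasFDerivAt

lemma hasFDerivAt_Gr (hW : IsOpen W) (hg : ContDiffOn ℝ (⊤ : ℕ∞) g W) {p : ℝ × ℝ} (hz : Emap p ∈ W) :
    HasFDerivAt (Gr g) (Gr' g p) p := by
  have hc : HasFDerivAt (fun q => fderiv ℝ g (Emap q))
      ((D2 g (Emap p)).comp (Emap p • Lre)) p :=
    (hasFDerivAt_fderiv hW hg hz).comp p (hasFDerivAt_Emap p)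
  exact hc.clm_apply (hasFDerivAt_Emap p)

lemma hasFDerivAt_Gθ (hW : IsOpen W) (hg : ContDiffOn ℝ (⊤ : ℕ∞) g W) {p : ℝ × ℝ} (hz : Emap p ∈ W) :
    HasFDerivAt (Gθ g) (Gθ' g p) p := by
  have hc : HasFDerivAt (fun q => fderiv ℝ g (Emap q))
      ((D2 g (Emap p)).comp (Emap p • Lre)) p :=
    (hasFDerivAt_fderiv hW hg hz).comp p (hasFDerivAt_Emap p)
  have hu : HasFDerivAt (fun q => Complex.I * Emap q) (Complex.I • (Emap p • Lre)) p :=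
    (hasFDerivAt_Emap p).const_mul Complex.I
  exact hc.clm_apply hu

lemma Gr'_eval (p : ℝ × ℝ) :
    Gr' g p (1, 0) = fderiv ℝ g (Emap p) (Emap p) + D2 g (Emap p) (Emap p) (Emap p) := by
  have h : (Emap p • Lre) (1, 0) = Emap p := by
    simp [ContinuousLinearMap.smul_apply, smul_eq_mul]
  simp [Gr', ContinuousLinearMap.add_apply, ContinuousLinearMap.comp_apply,
    ContinuousLinearMap.flip_apply, h]

lemma Gθ'_eval (p : ℝ × ℝ) :
    Gθ' g p (0, 1) = -(fderiv ℝ g (Emap p) (Emap p))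
      + D2 g (Emap p) (Emap p * Complex.I) (Emap p * Complex.I) := by
  have h : (Emap p • Lre) (0, 1) = Emap p * Complex.I := by
    simp [ContinuousLinearMap.smul_apply, smul_eq_mul]
  have h2 : (Complex.I • (Emap p • Lre)) (0, 1) = -(Emap p) := by
    simp [ContinuousLinearMap.smul_apply, h, smul_eq_mul]
    ring_nf
    rw [Complex.I_sq]
    ring
  have h3 : Complex.I * Emap p = Emap p * Complex.I := mul_comm _ _
  simp [Gθ', ContinuousLinearMap.add_apply, ContinuousLinearMap.comp_apply,
    ContinuousLinearMap.flip_apply, h, h2, h3, map_neg]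

lemma divergence_eval (p : ℝ × ℝ) :
    Gr' g p (1, 0) + Gθ' g p (0, 1)
      = D2 g (Emap p) (Emap p) (Emap p)
        + D2 g (Emap p) (Emap p * Complex.I) (Emap p * Complex.I) := by
  rw [Gr'_eval, Gθ'_eval]; ring

lemma D2_quadratic (z : ℂ) :
    D2 g z z z + D2 g z (z * Complex.I) (z * Complex.I)
      = Complex.normSq z * laplacian g z := by
  have key : ∀ (x y : ℝ), D2 g z (x • (1:ℂ) + y • Complex.I) (x • (1:ℂ) + y • Complex.I)
      = x * x * (D2 g z 1 1) + x * y * (D2 g z 1 Complex.I)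
        + y * x * (D2 g z Complex.I 1) + y * y * (D2 g z Complex.I Complex.I) := by
    intro x y
    simp only [map_add, ContinuousLinearMap.map_smul, ContinuousLinearMap.add_apply,
      ContinuousLinearMap.smul_apply, smul_eq_mul]
    ring
  have e1 : z = z.re • (1:ℂ) + z.im • Complex.I := by
    simp [Complex.real_smul, Complex.re_add_im]
  have e2 : z * Complex.I = (-z.im) • (1:ℂ) + z.re • Complex.I := by
    simp [Complex.real_smul, Complex.ext_iff]
  have h1 : D2 g z z z
      = D2 g z (z.re • (1:ℂ) + z.im • Complex.I) (z.re • (1:ℂ) + z.im • Complex.I) := by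
    rw [← e1]
  have h2 : D2 g z (z * Complex.I) (z * Complex.I)
      = D2 g z ((-z.im) • (1:ℂ) + z.re • Complex.I) ((-z.im) • (1:ℂ) + z.re • Complex.I) := by
    rw [← e2]
  rw [h1, h2, key, key, laplacian, iteratedFDeriv_two_apply, iteratedFDeriv_two_apply]
  simp only [Matrix.cons_val_zero, Matrix.cons_val_one, Matrix.head_cons, Complex.normSq_apply]
  show _ = _ * (D2 g z 1 1 + D2 g z Complex.I Complex.I)
  ring

-- continuity
lemma contOn_fderivg (hW : IsOpen W) (hg : ContDiffOn ℝ (⊤ : ℕ∞) g W) :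
    ContinuousOn (fderiv ℝ g) W :=
  hg.continuousOn_fderiv_of_isOpen hW (by exact_mod_cast le_top)

lemma contOn_D2 (hW : IsOpen W) (hg : ContDiffOn ℝ (⊤ : ℕ∞) g W) :
    ContinuousOn (fun z => D2 g z) W := by
  have h1 : ContDiffOn ℝ (⊤ : ℕ∞) (fderiv ℝ g) W := hg.fderiv_of_isOpen hW (by simp)
  exact h1.continuousOn_fderiv_of_isOpen hW (by exact_mod_cast le_top)

lemma contOn_Gr (hW : IsOpen W) (hg : ContDiffOn ℝ (⊤ : ℕ∞) g W) :
    ContinuousOn (Gr g) (Emap ⁻¹' W) :=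
  ((contOn_fderivg hW hg).comp continuous_Emap.continuousOn (fun _ h => h)).clm_apply
    continuous_Emap.continuousOn

lemma contOn_Gθ (hW : IsOpen W) (hg : ContDiffOn ℝ (⊤ : ℕ∞) g W) :
    ContinuousOn (Gθ g) (Emap ⁻¹' W) :=
  ((contOn_fderivg hW hg).comp continuous_Emap.continuousOn (fun _ h => h)).clm_apply
    (continuous_const.mul continuous_Emap).continuousOn

lemma contOn_div (hW : IsOpen W) (hg : ContDiffOn ℝ (⊤ : ℕ∞) g W) :
    ContinuousOn (fun p => D2 g (Emap p) (Emap p) (Emap p)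
      + D2 g (Emap p) (Emap p * Complex.I) (Emap p * Complex.I)) (Emap ⁻¹' W) := by
  have hD : ContinuousOn (fun p => D2 g (Emap p)) (Emap ⁻¹' W) :=
    (contOn_D2 hW hg).comp continuous_Emap.continuousOn (fun _ h => h)
  have hE : ContinuousOn Emap (Emap ⁻¹' W) := continuous_Emap.continuousOn
  have hEI : ContinuousOn (fun p => Emap p * Complex.I) (Emap ⁻¹' W) :=
    (continuous_Emap.mul continuous_const).continuousOn
  exact ((hD.clm_apply hE).clm_apply hE).add ((hD.clm_apply hEI).clm_apply hEI)

end main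

noncomputable def Φf (g : ℂ → ℝ) (ρ : ℝ) : ℝ := ∫ θ in (0:ℝ)..(2*π), Gr g (ρ, θ)
noncomputable def Af (g : ℂ → ℝ) (ρ : ℝ) : ℝ := ∫ θ in (0:ℝ)..(2*π), g (Emap (ρ, θ))

lemma Emap_periodic (ρ : ℝ) : Emap (ρ, 2*π) = Emap (ρ, 0) := by
  have h : ((2*π : ℝ) : ℂ) * Complex.I = 2*π*Complex.I := by push_cast; ring
  simp only [Emap, h, Complex.ofReal_zero, zero_mul, add_zero]
  rw [Complex.exp_add, Complex.exp_two_pi_mul_I, mul_one]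

lemma mem_uIcc_of_Ioo {a b x : ℝ} (h : x ∈ Set.Ioo (min a b) (max a b)) : x ∈ Set.uIcc a b := by
  rw [Set.uIcc]
  exact Set.Ioo_subset_Icc_self h

section div
variable {g : ℂ → ℝ} {W : Set ℂ} {ρ₁ ρ₂ : ℝ}

lemma mono_step (hW : IsOpen W) (hg : ContDiffOn ℝ (⊤ : ℕ∞) g W)
    (hΔ : ∀ z ∈ W, 0 ≤ laplacian g z) (h12 : ρ₁ ≤ ρ₂)
    (hmem : Set.uIcc ρ₁ ρ₂ ×ˢ Set.uIcc 0 (2*π) ⊆ Emap ⁻¹' W) :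
    Φf g ρ₁ ≤ Φf g ρ₂ := by
  have h2π : (0:ℝ) ≤ 2*π := by positivity
  have key := MeasureTheory.integral2_divergence_prod_of_hasFDerivAt_off_countable
    (Gr g) (Gθ g) (Gr' g) (Gθ' g) ρ₁ 0 ρ₂ (2*π) ∅ Set.countable_empty
    ((contOn_Gr hW hg).mono hmem) ((contOn_Gθ hW hg).mono hmem)
    (fun x hx => hasFDerivAt_Gr hW hg (hmem ⟨mem_uIcc_of_Ioo hx.1.1, mem_uIcc_of_Ioo hx.1.2⟩))
    (fun x hx => hasFDerivAt_Gθ hW hg (hmem ⟨mem_uIcc_of_Ioo hx.1.1, mem_uIcc_of_Ioo hx.1.2⟩))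
    (by
      have h0 := ((contOn_div hW hg).mono hmem).integrableOn_compact (μ := volume)
        (isCompact_uIcc.prod isCompact_uIcc)
      exact MeasureTheory.IntegrableOn.congr_fun h0 (fun x _ => (divergence_eval x).symm)
        (measurableSet_uIcc.prod measurableSet_uIcc))
  have hper : (∫ x in ρ₁..ρ₂, Gθ g (x, 2*π)) = ∫ x in ρ₁..ρ₂, Gθ g (x, 0) := by
    refine intervalIntegral.integral_congr (fun x _ => ?_)
    simp [Gθ, Emap_periodic]
  have hnn : 0 ≤ ∫ x in ρ₁..ρ₂, ∫ y in (0:ℝ)..(2*π), Gr' g (x, y) (1, 0) + Gθ' g (x, y) (0, 1) := by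
    refine intervalIntegral.integral_nonneg h12 (fun x hx => ?_)
    refine intervalIntegral.integral_nonneg h2π (fun y hy => ?_)
    have hmemxy : Emap (x, y) ∈ W := hmem ⟨by
      rw [Set.uIcc_of_le h12]; exact hx, by rw [Set.uIcc_of_le h2π]; exact hy⟩
    rw [divergence_eval, D2_quadratic]
    exact mul_nonneg (Complex.normSq_nonneg _) (hΔ _ hmemxy)
  rw [key, hper] at hnn
  have e1 : (∫ y in (0:ℝ)..(2*π), Gr g (ρ₁, y)) = Φf g ρ₁ := rfl
  have e2 : (∫ y in (0:ℝ)..(2*π), Gr g (ρ₂, y)) = Φf g ρ₂ := rfl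
  rw [e1, e2] at hnn
  linarith

lemma A_step (hW : IsOpen W) (hg : ContDiffOn ℝ (⊤ : ℕ∞) g W) (h12 : ρ₁ ≤ ρ₂)
    (hmem : Set.uIcc ρ₁ ρ₂ ×ˢ Set.uIcc 0 (2*π) ⊆ Emap ⁻¹' W) :
    Af g ρ₂ - Af g ρ₁ = ∫ ρ in ρ₁..ρ₂, Φf g ρ := by
  have hf'eval : ∀ p : ℝ × ℝ, ((fderiv ℝ g (Emap p)).comp (Emap p • Lre)) (1, 0) = Gr g p := by
    intro p
    have h : (Emap p • Lre) (1, 0) = Emap p := by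
      simp [ContinuousLinearMap.smul_apply, smul_eq_mul]
    simp [ContinuousLinearMap.comp_apply, h, Gr]
  have key := MeasureTheory.integral2_divergence_prod_of_hasFDerivAt_off_countable
    (fun p => g (Emap p)) (fun _ => (0:ℝ))
    (fun p => (fderiv ℝ g (Emap p)).comp (Emap p • Lre)) (fun _ => 0)
    ρ₁ 0 ρ₂ (2*π) ∅ Set.countable_empty
    ((hg.continuousOn.comp continuous_Emap.continuousOn (fun _ h => h)).mono hmem)
    continuousOn_const
    (fun x hx => (hasFDerivAt_g hW hg
      (hmem ⟨mem_uIcc_of_Ioo hx.1.1, mem_uIcc_of_Ioo hx.1.2⟩)).comp x (hasFDerivAt_Emap x))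
    (fun x _ => hasFDerivAt_const 0 x)
    (by
      have h0 := ((contOn_Gr hW hg).mono hmem).integrableOn_compact (μ := volume)
        (isCompact_uIcc.prod isCompact_uIcc)
      refine MeasureTheory.IntegrableOn.congr_fun h0 (fun x _ => ?_)
        (measurableSet_uIcc.prod measurableSet_uIcc)
      simp [hf'eval x])
  have hL : (∫ x in ρ₁..ρ₂, ∫ y in (0:ℝ)..(2*π),
      ((fun p => (fderiv ℝ g (Emap p)).comp (Emap p • Lre)) (x, y)) (1, 0)
        + ((fun _ => (0 : ℝ × ℝ →L[ℝ] ℝ)) (x, y)) (0, 1)) = ∫ ρ in ρ₁..ρ₂, Φf g ρ := by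
    refine intervalIntegral.integral_congr (fun x _ => ?_)
    refine intervalIntegral.integral_congr (fun y _ => ?_)
    simp [hf'eval, Φf]
  rw [hL] at key
  have e1 : (∫ y in (0:ℝ)..(2*π), g (Emap (ρ₁, y))) = Af g ρ₁ := rfl
  have e2 : (∫ y in (0:ℝ)..(2*π), g (Emap (ρ₂, y))) = Af g ρ₂ := rfl
  simp only [ContinuousLinearMap.zero_apply, intervalIntegral.integral_zero] at key
  rw [e1, e2] at key
  linarith
end div

lemma subpoly_log {μ : ℝ → ℝ} (hμ : Subpolynomial μ) {δ : ℝ} (hδ : 0 < δ) :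
    ∀ᶠ σ in atBot, Real.log (μ (Real.exp (-σ))) ≤ δ * (-σ) := by
  have h1 : Tendsto (fun σ : ℝ => Real.exp (-σ)) atBot atTop :=
    Real.tendsto_exp_atTop.comp tendsto_neg_atBot_atTop
  have h2 : ∀ᶠ x in atTop, μ x / x ^ δ < 1 :=
    (hμ.2 δ hδ).eventually_lt_const one_pos
  have h3 : ∀ᶠ x : ℝ in atTop, (1:ℝ) ≤ x := eventually_ge_atTop 1
  filter_upwards [h1.eventually (h2.and h3)] with σ hσ
  obtain ⟨hlt, hx1⟩ := hσ
  have hxpos : (0:ℝ) < Real.exp (-σ) := Real.exp_pos _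
  have hμpos : 0 < μ (Real.exp (-σ)) := hμ.1 _ hxpos
  have hppos : (0:ℝ) < Real.exp (-σ) ^ δ := Real.rpow_pos_of_pos hxpos δ
  have hle : μ (Real.exp (-σ)) ≤ Real.exp (-σ) ^ δ := by
    rw [div_lt_one hppos] at hlt; exact hlt.le
  calc Real.log (μ (Real.exp (-σ))) ≤ Real.log (Real.exp (-σ) ^ δ) :=
        Real.log_le_log hμpos hle
    _ = δ * Real.log (Real.exp (-σ)) := Real.log_rpow hxpos δ
    _ = δ * (-σ) := by rw [Real.log_exp]

section final
variable {g : ℂ → ℝ} {W : Set ℂ} {s a : ℝ} {μ : ℝ → ℝ}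

lemma A_bound (hg : ContDiffOn ℝ (⊤ : ℕ∞) g W)
    (hWsub : {z : ℂ | z ≠ 0 ∧ ‖z‖ ≤ s} ⊆ W)
    (hbound : ∀ z : ℂ, z ≠ 0 → ‖z‖ ≤ s →
      -Real.log (μ (1 / ‖z‖)) ≤ g z + a * Real.log (‖z‖) ∧
        g z + a * Real.log (‖z‖) ≤ Real.log (μ (1 / ‖z‖)))
    {ρ : ℝ} (hρ : Real.exp ρ ≤ s) :
    |Af g ρ + 2*π*(a*ρ)| ≤ 2*π * Real.log (μ (Real.exp (-ρ))) := by
  have h2π : (0:ℝ) ≤ 2*π := by positivity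
  have hmem : ∀ θ : ℝ, Emap (ρ, θ) ∈ W := fun θ =>
    hWsub ⟨Emap_ne_zero _, by rw [abs_Emap]; exact hρ⟩
  have hptw : ∀ θ : ℝ, |g (Emap (ρ, θ)) + a * ρ| ≤ Real.log (μ (Real.exp (-ρ))) := by
    intro θ
    have hb := hbound (Emap (ρ, θ)) (Emap_ne_zero _) (by rw [abs_Emap]; exact hρ)
    rw [abs_Emap] at hb
    simp only [Real.log_exp] at hb
    rw [abs_le]
    have h1 : 1 / Real.exp ρ = Real.exp (-ρ) := by rw [Real.exp_neg]; ring
    rw [h1] at hb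
    exact ⟨hb.1, hb.2⟩
  have hcont : ContinuousOn (fun θ => g (Emap (ρ, θ))) (Set.uIcc 0 (2*π)) :=
    hg.continuousOn.comp (continuous_Emap.comp (by fun_prop)).continuousOn
      (fun θ _ => hmem θ)
  have hint : IntervalIntegrable (fun θ => g (Emap (ρ, θ))) volume 0 (2*π) :=
    hcont.intervalIntegrable
  have hsplit : Af g ρ + 2*π*(a*ρ) = ∫ θ in (0:ℝ)..(2*π), (g (Emap (ρ, θ)) + a * ρ) := by
    rw [intervalIntegral.integral_add hint (intervalIntegrable_const (c := a * ρ))]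
    simp [Af, intervalIntegral.integral_const, smul_eq_mul]
    ring
  rw [hsplit]
  have := intervalIntegral.norm_integral_le_of_norm_le_const
    (C := Real.log (μ (Real.exp (-ρ)))) (f := fun θ => g (Emap (ρ, θ)) + a * ρ)
    (a := 0) (b := 2*π) (fun x _ => hptw x)
  rw [Real.norm_eq_abs] at this
  calc |∫ θ in (0:ℝ)..(2*π), (g (Emap (ρ, θ)) + a * ρ)|
      ≤ Real.log (μ (Real.exp (-ρ))) * |2*π - 0| := this
    _ = 2*π * Real.log (μ (Real.exp (-ρ))) := by
        rw [sub_zero, abs_of_nonneg h2π]; ring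

lemma bound2 (hs0 : 0 < s) (hW : IsOpen W) (hg : ContDiffOn ℝ (⊤ : ℕ∞) g W)
    (hΔ : ∀ z ∈ W, 0 ≤ laplacian g z)
    (hWsub : {z : ℂ | z ≠ 0 ∧ ‖z‖ ≤ s} ⊆ W)
    {ρ₁ ρ₂ : ℝ} (h12 : ρ₁ ≤ ρ₂) (h2s : ρ₂ ≤ Real.log s) :
    Φf g ρ₁ * (ρ₂ - ρ₁) ≤ Af g ρ₂ - Af g ρ₁ ∧
      Af g ρ₂ - Af g ρ₁ ≤ Φf g ρ₂ * (ρ₂ - ρ₁) := by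
  have hmem : ∀ {σ₁ σ₂ : ℝ}, σ₁ ≤ σ₂ → σ₂ ≤ Real.log s →
      Set.uIcc σ₁ σ₂ ×ˢ Set.uIcc 0 (2*π) ⊆ Emap ⁻¹' W := by
    intro σ₁ σ₂ hle hls p hp
    refine hWsub ⟨Emap_ne_zero _, ?_⟩
    rw [abs_Emap]
    have hp1 : p.1 ≤ σ₂ := by
      have := hp.1; rw [Set.uIcc_of_le hle] at this; exact this.2
    calc Real.exp p.1 ≤ Real.exp (Real.log s) := Real.exp_le_exp.2 (hp1.trans hls)
      _ = s := Real.exp_log hs0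
  have hmono : MonotoneOn (Φf g) (Set.uIcc ρ₁ ρ₂) := by
    intro x hx y hy hxy
    rw [Set.uIcc_of_le h12] at hx hy
    exact mono_step hW hg hΔ hxy (hmem hxy (hy.2.trans h2s))
  have hΦint : IntervalIntegrable (Φf g) volume ρ₁ ρ₂ := hmono.intervalIntegrable
  have hAs : Af g ρ₂ - Af g ρ₁ = ∫ ρ in ρ₁..ρ₂, Φf g ρ :=
    A_step hW hg h12 (hmem h12 h2s)
  constructor
  · rw [hAs]
    have : (∫ _ in ρ₁..ρ₂, Φf g ρ₁) ≤ ∫ ρ in ρ₁..ρ₂, Φf g ρ := by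
      refine intervalIntegral.integral_mono_on h12 intervalIntegrable_const hΦint
        (fun x hx => ?_)
      exact hmono (by rw [Set.uIcc_of_le h12]; exact ⟨le_refl _, h12⟩)
        (by rw [Set.uIcc_of_le h12]; exact hx) hx.1
    rw [intervalIntegral.integral_const, smul_eq_mul] at this
    linarith
  · rw [hAs]
    have : (∫ ρ in ρ₁..ρ₂, Φf g ρ) ≤ ∫ _ in ρ₁..ρ₂, Φf g ρ₂ := by
      refine intervalIntegral.integral_mono_on h12 hΦint intervalIntegrable_const
        (fun x hx => ?_)
      exact hmono (by rw [Set.uIcc_of_le h12]; exact hx)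
        (by rw [Set.uIcc_of_le h12]; exact ⟨h12, le_refl _⟩) hx.2
    rw [intervalIntegral.integral_const, smul_eq_mul] at this
    linarith
end final

lemma Emap_log {t : ℝ} (ht : 0 < t) (θ : ℝ) :
    Emap (Real.log t, θ) = (t : ℂ) * Complex.exp ((θ : ℂ) * Complex.I) := by
  simp only [Emap, Complex.exp_add]
  congr 1
  rw [← Complex.ofReal_exp, Real.exp_log ht]

lemma Fcirc_eq {g : ℂ → ℝ} {t : ℝ} (ht : 0 < t) :
    Fcirc g t = -(1 / (2*π) * Φf g (Real.log t)) := by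
  unfold Fcirc Φf
  congr 2
  refine intervalIntegral.integral_congr (fun θ _ => ?_)
  rw [Gr, Emap_log ht]



/-- Equation (limit_to_zero) in the proof of Lemma 2.8: under the hypotheses of
Lemma 2.8, `F(t) → a` as `t → 0⁺`. -/
theorem stmt2 (s : ℝ) (hs0 : 0 < s) (hs1 : s ≤ 1)
    (g : ℂ → ℝ) (W : Set ℂ) (hW : IsOpen W)
    (hWsub : {z : ℂ | z ≠ 0 ∧ ‖z‖ ≤ s} ⊆ W)
    (hg : ContDiffOn ℝ (⊤ : ℕ∞) g W)
    (hΔ : ∀ z ∈ W, 0 ≤ laplacian g z)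
    (a : ℝ) (μ : ℝ → ℝ) (hμ : Subpolynomial μ)
    (hbound : ∀ z : ℂ, z ≠ 0 → ‖z‖ ≤ s →
      -Real.log (μ (1 / ‖z‖)) ≤ g z + a * Real.log (‖z‖) ∧
        g z + a * Real.log (‖z‖) ≤ Real.log (μ (1 / ‖z‖))) :
    Tendsto (Fcirc g) (nhdsWithin 0 (Set.Ioi 0)) (nhds a) := by
  have hπ : (0:ℝ) < π := Real.pi_pos
  set ρ₀ := Real.log s with hρ₀
  -- the limit in logarithmic coordinates
  have hlim : Tendsto (fun ρ => -(1 / (2*π) * Φf g ρ)) atBot (nhds a) := by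
    rw [Metric.tendsto_nhds]
    intro ε hε
    set δ := ε/10 with hδdef
    have hδ : 0 < δ := by positivity
    obtain ⟨SS, hSS⟩ := eventually_atBot.1 (subpoly_log hμ hδ)
    filter_upwards [eventually_le_atBot (min (-1) (min (2*ρ₀) (2*SS)))] with ρ hρ
    have hρ1 : ρ ≤ -1 := hρ.trans (min_le_left _ _)
    have hρ2 : ρ ≤ 2*ρ₀ := hρ.trans ((min_le_right _ _).trans (min_le_left _ _))
    have hρ3 : ρ ≤ 2*SS := hρ.trans ((min_le_right _ _).trans (min_le_right _ _))
    have hT : (0:ℝ) < -ρ/2 := by linarith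
    -- membership facts
    have hb1 := bound2 hs0 hW hg hΔ hWsub (show ρ ≤ ρ/2 by linarith)
      (show ρ/2 ≤ ρ₀ by linarith)
    have hb2 := bound2 hs0 hW hg hΔ hWsub (show 3*ρ/2 ≤ ρ by linarith)
      (show ρ ≤ ρ₀ by linarith)
    have hexp : ∀ {σ : ℝ}, σ ≤ ρ₀ → Real.exp σ ≤ s := by
      intro σ hσ
      calc Real.exp σ ≤ Real.exp ρ₀ := Real.exp_le_exp.2 hσ
        _ = s := Real.exp_log hs0
    have ha1 := A_bound hg hWsub hbound (hexp (show ρ ≤ ρ₀ by linarith))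
    have ha2 := A_bound hg hWsub hbound (hexp (show ρ/2 ≤ ρ₀ by linarith))
    have ha3 := A_bound hg hWsub hbound (hexp (show 3*ρ/2 ≤ ρ₀ by linarith))
    have hm1 : Real.log (μ (Real.exp (-ρ))) ≤ δ * (-ρ) := hSS ρ (by linarith)
    have hm2 : Real.log (μ (Real.exp (-(ρ/2)))) ≤ δ * (-(ρ/2)) := hSS (ρ/2) (by linarith)
    have hm3 : Real.log (μ (Real.exp (-(3*ρ/2)))) ≤ δ * (-(3*ρ/2)) := hSS (3*ρ/2) (by linarith)
    have habs1 := abs_le.1 ha1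
    have habs2 := abs_le.1 ha2
    have habs3 := abs_le.1 ha3
    have hπm1 : 2*π * Real.log (μ (Real.exp (-ρ))) ≤ 2*π * (δ * (-ρ)) :=
      mul_le_mul_of_nonneg_left hm1 (by positivity)
    have hπm2 : 2*π * Real.log (μ (Real.exp (-(ρ/2)))) ≤ 2*π * (δ * (-(ρ/2))) :=
      mul_le_mul_of_nonneg_left hm2 (by positivity)
    have hπm3 : 2*π * Real.log (μ (Real.exp (-(3*ρ/2)))) ≤ 2*π * (δ * (-(3*ρ/2))) :=
      mul_le_mul_of_nonneg_left hm3 (by positivity)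
    -- upper bound for Φf g ρ
    have hub : Φf g ρ ≤ 2*π*(-a) + 6*π*δ := by
      have key : Φf g ρ * (-ρ/2) ≤ (2*π*(-a) + 6*π*δ) * (-ρ/2) := by
        have hb := hb1.1
        have hgoal : (2*π*(-a) + 6*π*δ) * (-ρ/2) = 2*π*(a*ρ) - 2*π*(a*(ρ/2)) + (2*π*(δ * (-(ρ/2))) + 2*π*(δ*(-ρ))) := by ring
        have hlhs : Φf g ρ * (-ρ/2) = Φf g ρ * (ρ/2 - ρ) := by ring
        rw [hgoal, hlhs]
        linarith [habs1.1, habs2.2, hπm1, hπm2]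
      exact le_of_mul_le_mul_right key hT
    -- lower bound for Φf g ρ
    have hlb : 2*π*(-a) - 10*π*δ ≤ Φf g ρ := by
      have key : (2*π*(-a) - 10*π*δ) * (-ρ/2) ≤ Φf g ρ * (-ρ/2) := by
        have hb := hb2.2
        have hgoal : (2*π*(-a) - 10*π*δ) * (-ρ/2) = 2*π*(a*(3*ρ/2)) - 2*π*(a*ρ) - (2*π*(δ * (-(3*ρ/2))) + 2*π*(δ*(-ρ))) := by ring
        have hlhs : Φf g ρ * (-ρ/2) = Φf g ρ * (ρ - 3*ρ/2) := by ring
        rw [hgoal, hlhs]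
        linarith [habs1.1, habs3.2, hπm1, hπm3]
      exact le_of_mul_le_mul_right key hT
    rw [Real.dist_eq, abs_lt]
    have e1 : 1/(2*π) * (2*π*(-a) + 6*π*δ) = -a + 3*δ := by field_simp; ring
    have e2 : 1/(2*π) * (2*π*(-a) - 10*π*δ) = -a - 5*δ := by field_simp; ring
    have f1 : 1/(2*π) * Φf g ρ ≤ -a + 3*δ := by
      rw [← e1]; exact mul_le_mul_of_nonneg_left hub (by positivity)
    have f2 : -a - 5*δ ≤ 1/(2*π) * Φf g ρ := by
      rw [← e2]; exact mul_le_mul_of_nonneg_left hlb (by positivity)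
    constructor <;> [skip; skip] <;> [linarith; linarith]
  have hcomp : Tendsto (fun t => -(1 / (2*π) * Φf g (Real.log t)))
      (nhdsWithin 0 (Set.Ioi 0)) (nhds a) :=
    hlim.comp Real.tendsto_log_nhdsGT_zero
  refine hcomp.congr' ?_
  filter_upwards [self_mem_nhdsWithin] with t ht
  exact (Fcirc_eq ht).symm
end

section
/- Let 0 < s ≤ 1 and let g be a smooth real-valued function on an open neighbourhood of the punctured closed disk Δ_s* such that Δg ≥ 0 on that neighbourhood. Suppose there exist a ∈ ℝ and a subpolynomial function μ such that g(z) + a·log|z| ≤ log μ(1/|z|) for all z with 0 < |z| ≤ s. Then, with F(t) := −(1/2π)∫₀^{2π} t·(∂g/∂r)(t e^{iθ}) dθ, one has F(t) ≤ a for all 0 < t ≤ s. (Step in the proof of Lemma 2.8 of the paper.) -/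
open Filter MeasureTheory Real

private lemma my_rect_integrable {f : ℝ → ℝ → ℝ} {a b c d : ℝ}
    (hf : ContinuousOn (Function.uncurry f) (Set.Icc a b ×ˢ Set.Icc c d)) :
    Integrable (Function.uncurry f)
      ((volume.restrict (Set.Ioc a b)).prod (volume.restrict (Set.Ioc c d))) := by
  rw [Measure.prod_restrict]
  have h1 : IntegrableOn (Function.uncurry f) (Set.Icc a b ×ˢ Set.Icc c d)
      (volume.prod volume) := by
    rw [← Measure.volume_eq_prod]
    exact hf.integrableOn_compact (isCompact_Icc.prod isCompact_Icc)
  exact h1.mono_set (Set.prod_mono Set.Ioc_subset_Icc_self Set.Ioc_subset_Icc_self)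

private lemma my_swap {f : ℝ → ℝ → ℝ} {a b c d : ℝ} (hab : a ≤ b) (hcd : c ≤ d)
    (hf : ContinuousOn (Function.uncurry f) (Set.Icc a b ×ˢ Set.Icc c d)) :
    (∫ x in a..b, ∫ y in c..d, f x y) = ∫ y in c..d, ∫ x in a..b, f x y := by
  simp only [intervalIntegral.integral_of_le hab, intervalIntegral.integral_of_le hcd]
  exact MeasureTheory.integral_integral_swap (my_rect_integrable hf)

private lemma my_marg {f : ℝ → ℝ → ℝ} {a b c d : ℝ} (hab : a ≤ b) (hcd : c ≤ d)
    (hf : ContinuousOn (Function.uncurry f) (Set.Icc a b ×ˢ Set.Icc c d)) :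
    IntervalIntegrable (fun y => ∫ x in a..b, f x y) volume c d := by
  have h := (my_rect_integrable hf).integral_prod_right
  rw [intervalIntegrable_iff, Set.uIoc_of_le hcd]
  simp only [intervalIntegral.integral_of_le hab, Function.uncurry_apply_pair] at h ⊢
  unfold IntegrableOn
  convert h using 1 <;> rfl

private lemma my_marg' {f : ℝ → ℝ → ℝ} {a b c d : ℝ} (hab : a ≤ b) (hcd : c ≤ d)
    (hf : ContinuousOn (Function.uncurry f) (Set.Icc a b ×ˢ Set.Icc c d)) :
    IntervalIntegrable (fun x => ∫ y in c..d, f x y) volume a b := by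
  have h := (my_rect_integrable hf).integral_prod_left
  rw [intervalIntegrable_iff, Set.uIoc_of_le hab]
  simp only [intervalIntegral.integral_of_le hcd, Function.uncurry_apply_pair] at h ⊢
  unfold IntegrableOn
  convert h using 1 <;> rfl

/-- the unit circle point `e^{iθ}` -/
noncomputable def EC (θ : ℝ) : ℂ := Complex.exp ((θ : ℂ) * Complex.I)

/-- `t e^{iθ}` -/
noncomputable def cc (t θ : ℝ) : ℂ := (t : ℝ) • EC θ

private lemma cc_eq (t θ : ℝ) : cc t θ = (t : ℂ) * EC θ := by
  simp [cc, Complex.real_smul]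

private lemma EC_cont : Continuous EC := by
  unfold EC; fun_prop

private lemma cc_cont : Continuous (fun p : ℝ × ℝ => cc p.1 p.2) := by
  unfold cc EC; fun_prop

private lemma abs_EC (θ : ℝ) : ‖EC θ‖ = 1 := Complex.norm_exp_ofReal_mul_I θ

private lemma EC_ne (θ : ℝ) : EC θ ≠ 0 := Complex.exp_ne_zero _

private lemma abs_cc {t : ℝ} (ht : 0 ≤ t) (θ : ℝ) : ‖cc t θ‖ = t := by
  rw [cc_eq]
  simp [abs_EC, abs_of_nonneg ht]

private lemma cc_ne {t : ℝ} (ht : 0 < t) (θ : ℝ) : cc t θ ≠ 0 := by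
  rw [cc_eq]
  exact mul_ne_zero (by exact_mod_cast ht.ne') (EC_ne θ)

private lemma EC_deriv (θ : ℝ) : HasDerivAt EC (Complex.I * EC θ) θ := by
  have h : HasDerivAt (fun w : ℂ => Complex.exp (w * Complex.I))
      (Complex.exp ((θ : ℂ) * Complex.I) * Complex.I) (θ : ℂ) :=
    (hasDerivAt_mul_const Complex.I).cexp
  have h2 := h.comp_ofReal
  have h3 : Complex.I * EC θ = Complex.exp ((θ : ℂ) * Complex.I) * Complex.I := by
    rw [EC]; ring
  rw [h3]; exact h2

private lemma cc_deriv_theta (t θ : ℝ) :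
    HasDerivAt (fun θ => cc t θ) (Complex.I * cc t θ) θ := by
  have h := (EC_deriv θ).const_smul t
  have h2 : Complex.I * cc t θ = t • (Complex.I * EC θ) := by
    rw [cc, mul_smul_comm]
  rw [h2]; exact h

private lemma cc_deriv_t (e : ℂ) (u : ℝ) :
    HasDerivAt (fun u : ℝ => (u : ℝ) • e) e u := by
  simpa using (hasDerivAt_id u).smul_const e


section aux
variable {s : ℝ} {g : ℂ → ℝ} {W : Set ℂ}

private lemma hasAt (hW : IsOpen W) {F : Type} [NormedAddCommGroup F] [NormedSpace ℝ F]
    {f : ℂ → F} (hf : ContDiffOn ℝ (⊤ : ℕ∞) f W) {z : ℂ} (hz : z ∈ W) :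
    HasFDerivAt f (fderiv ℝ f z) z :=
  ((hf.differentiableOn (by simp) z hz).differentiableAt (hW.mem_nhds hz)).hasFDerivAt

private lemma cd1 (hW : IsOpen W) (hg : ContDiffOn ℝ (⊤ : ℕ∞) g W) :
    ContDiffOn ℝ (⊤ : ℕ∞) (fderiv ℝ g) W := hg.fderiv_of_isOpen hW (by simp)

private lemma lap_eq (g : ℂ → ℝ) (z : ℂ) :
    laplacian g z = fderiv ℝ (fderiv ℝ g) z 1 1
      + fderiv ℝ (fderiv ℝ g) z Complex.I Complex.I := by
  simp [laplacian, iteratedFDeriv_two_apply]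

private lemma rot (B : ℂ →L[ℝ] ℂ →L[ℝ] ℝ) (θ : ℝ) :
    B (EC θ) (EC θ) + B (Complex.I * EC θ) (Complex.I * EC θ)
      = B 1 1 + B Complex.I Complex.I := by
  have hE : EC θ = (Real.cos θ) • (1:ℂ) + (Real.sin θ) • Complex.I := by
    simp [EC, Complex.exp_mul_I, Complex.real_smul, Complex.ofReal_cos, Complex.ofReal_sin]
  have hIE : Complex.I * EC θ = (-Real.sin θ) • (1:ℂ) + (Real.cos θ) • Complex.I := by
    rw [hE]
    simp only [Complex.real_smul, Complex.ofReal_neg]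
    ring_nf
    rw [Complex.I_sq]
    ring
  rw [hIE, hE]
  simp only [map_add, _root_.map_smul, ContinuousLinearMap.add_apply,
    ContinuousLinearMap.smul_apply, smul_eq_mul, ContinuousLinearMap.coe_smul',
    Pi.smul_apply, ContinuousLinearMap.coe_add', Pi.add_apply]
  linear_combination ((B 1) 1 + (B Complex.I) Complex.I) * (Real.sin_sq_add_cos_sq θ)

private lemma mem_W (hWsub : {z : ℂ | z ≠ 0 ∧ ‖z‖ ≤ s} ⊆ W)
    {t : ℝ} (ht0 : 0 < t) (hts : t ≤ s) (θ : ℝ) : cc t θ ∈ W :=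
  hWsub ⟨cc_ne ht0 θ, by rw [abs_cc ht0.le]; exact hts⟩

private lemma g_deriv_t (hW : IsOpen W) (hg : ContDiffOn ℝ (⊤ : ℕ∞) g W)
    (hWsub : {z : ℂ | z ≠ 0 ∧ ‖z‖ ≤ s} ⊆ W)
    {t : ℝ} (ht0 : 0 < t) (hts : t ≤ s) (θ : ℝ) :
    HasDerivAt (fun u : ℝ => g (cc u θ)) (fderiv ℝ g (cc t θ) (EC θ)) t := by
  have hz := mem_W hWsub ht0 hts θ
  exact (hasAt hW hg hz).comp_hasDerivAt t (cc_deriv_t (EC θ) t)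

private lemma Pt_deriv (hW : IsOpen W) (hg : ContDiffOn ℝ (⊤ : ℕ∞) g W)
    (hWsub : {z : ℂ | z ≠ 0 ∧ ‖z‖ ≤ s} ⊆ W)
    {t : ℝ} (ht0 : 0 < t) (hts : t ≤ s) (θ : ℝ) :
    HasDerivAt (fun u : ℝ => fderiv ℝ g (cc u θ) (cc u θ))
      (fderiv ℝ g (cc t θ) (EC θ)
        + fderiv ℝ (fderiv ℝ g) (cc t θ) (EC θ) (cc t θ)) t := by
  have hz := mem_W hWsub ht0 hts θ
  have h1 : HasFDerivAt (fun z : ℂ => fderiv ℝ g z z)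
      (((fderiv ℝ g (cc t θ)).comp (ContinuousLinearMap.id ℝ ℂ))
        + (fderiv ℝ (fderiv ℝ g) (cc t θ)).flip (cc t θ)) (cc t θ) :=
    (hasAt hW (cd1 hW hg) hz).clm_apply (hasFDerivAt_id _)
  have h2 := h1.comp_hasDerivAt t (cc_deriv_t (EC θ) t)
  simp [cc, ContinuousLinearMap.add_apply, ContinuousLinearMap.coe_comp',
    ContinuousLinearMap.flip_apply] at h2
  convert h2 using 1 <;> rfl

private lemma Q_deriv (hW : IsOpen W) (hg : ContDiffOn ℝ (⊤ : ℕ∞) g W)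
    (hWsub : {z : ℂ | z ≠ 0 ∧ ‖z‖ ≤ s} ⊆ W)
    {t : ℝ} (ht0 : 0 < t) (hts : t ≤ s) (θ : ℝ) :
    HasDerivAt (fun θ : ℝ => fderiv ℝ g (cc t θ) (Complex.I * cc t θ))
      (fderiv ℝ (fderiv ℝ g) (cc t θ) (Complex.I * cc t θ) (Complex.I * cc t θ)
        - fderiv ℝ g (cc t θ) (cc t θ)) θ := by
  have hz := mem_W hWsub ht0 hts θ
  have hmul : HasFDerivAt (fun z : ℂ => Complex.I * z)
      ((ContinuousLinearMap.mul ℝ ℂ) Complex.I) (cc t θ) := by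
    exact ((ContinuousLinearMap.mul ℝ ℂ) Complex.I).hasFDerivAt
  have h1 : HasFDerivAt (fun z : ℂ => fderiv ℝ g z (Complex.I * z))
      (((fderiv ℝ g (cc t θ)).comp ((ContinuousLinearMap.mul ℝ ℂ) Complex.I))
        + (fderiv ℝ (fderiv ℝ g) (cc t θ)).flip (Complex.I * cc t θ)) (cc t θ) :=
    (hasAt hW (cd1 hW hg) hz).clm_apply hmul
  have h2 := h1.comp_hasDerivAt θ (cc_deriv_theta t θ)
  have h3 : Complex.I * (Complex.I * cc t θ) = -(cc t θ) := by
    rw [← mul_assoc, Complex.I_mul_I, neg_one_mul]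
  simp only [ContinuousLinearMap.add_apply, ContinuousLinearMap.coe_comp',
    Function.comp_apply, ContinuousLinearMap.flip_apply,
    ContinuousLinearMap.mul_apply'] at h2
  rw [h3, map_neg] at h2
  convert h2 using 1
  case e'_9 => ring
  all_goals rfl

private lemma contOn_g (hg : ContDiffOn ℝ (⊤ : ℕ∞) g W) {α : Type} [TopologicalSpace α]
    {φ : α → ℂ} {S : Set α} (hφ : ContinuousOn φ S) (hm : ∀ x ∈ S, φ x ∈ W) :
    ContinuousOn (fun x => g (φ x)) S :=
  (hg.continuousOn).comp hφ hm

private lemma contOn_f1ap (hW : IsOpen W) (hg : ContDiffOn ℝ (⊤ : ℕ∞) g W) {α : Type}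
    [TopologicalSpace α] {φ ψ : α → ℂ} {S : Set α}
    (hφ : ContinuousOn φ S) (hψ : ContinuousOn ψ S) (hm : ∀ x ∈ S, φ x ∈ W) :
    ContinuousOn (fun x => fderiv ℝ g (φ x) (ψ x)) S :=
  (((cd1 hW hg).continuousOn).comp hφ hm).clm_apply hψ

private lemma contOn_f2ap (hW : IsOpen W) (hg : ContDiffOn ℝ (⊤ : ℕ∞) g W) {α : Type}
    [TopologicalSpace α] {φ ψ χ : α → ℂ} {S : Set α}
    (hφ : ContinuousOn φ S) (hψ : ContinuousOn ψ S) (hχ : ContinuousOn χ S)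
    (hm : ∀ x ∈ S, φ x ∈ W) :
    ContinuousOn (fun x => fderiv ℝ (fderiv ℝ g) (φ x) (ψ x) (χ x)) S :=
  (((ContDiffOn.continuousOn (n := (⊤:ℕ∞))
    (ContDiffOn.fderiv_of_isOpen (m := (⊤:ℕ∞)) (cd1 hW hg) hW (by simp))).comp hφ hm).clm_apply
    hψ).clm_apply hχ

private lemma int_theta_zero (hW : IsOpen W) (hg : ContDiffOn ℝ (⊤ : ℕ∞) g W)
    (hWsub : {z : ℂ | z ≠ 0 ∧ ‖z‖ ≤ s} ⊆ W)
    {t : ℝ} (ht0 : 0 < t) (hts : t ≤ s) :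
    (∫ θ in (0:ℝ)..(2*π),
        (fderiv ℝ (fderiv ℝ g) (cc t θ) (Complex.I * cc t θ) (Complex.I * cc t θ)
          - fderiv ℝ g (cc t θ) (cc t θ))) = 0 := by
  have hccθ : Continuous (fun θ : ℝ => cc t θ) := by unfold cc EC; fun_prop
  have hIcc : Continuous (fun θ : ℝ => Complex.I * cc t θ) := continuous_const.mul hccθ
  have hm : ∀ θ ∈ Set.uIcc (0:ℝ) (2*π), cc t θ ∈ W := fun θ _ => mem_W hWsub ht0 hts θ
  have hint : IntervalIntegrable
      (fun θ => fderiv ℝ (fderiv ℝ g) (cc t θ) (Complex.I * cc t θ) (Complex.I * cc t θ)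
        - fderiv ℝ g (cc t θ) (cc t θ)) volume 0 (2*π) :=
    ((contOn_f2ap hW hg hccθ.continuousOn hIcc.continuousOn hIcc.continuousOn hm).sub
      (contOn_f1ap hW hg hccθ.continuousOn hccθ.continuousOn hm)).intervalIntegrable
  rw [intervalIntegral.integral_eq_sub_of_hasDerivAt
    (fun θ _ => Q_deriv hW hg hWsub ht0 hts θ) hint]
  have hE : cc t (2*π) = cc t 0 := by
    unfold cc EC
    norm_num
  rw [hE, sub_self]

private lemma clm2_smul (B : ℂ →L[ℝ] ℂ →L[ℝ] ℝ) (u : ℝ) (v w : ℂ) :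
    B (u • v) (u • w) = u * (u * B v w) := by
  simp only [_root_.map_smul, ContinuousLinearMap.smul_apply, smul_eq_mul]

private lemma clm2_smul' (B : ℂ →L[ℝ] ℂ →L[ℝ] ℝ) (u : ℝ) (v w : ℂ) :
    B v (u • w) = u * B v w := by rw [_root_.map_smul, smul_eq_mul]

private lemma clm1_smul (L : ℂ →L[ℝ] ℝ) (u : ℝ) (w : ℂ) :
    L (u • w) = u * L w := by rw [_root_.map_smul, smul_eq_mul]

private lemma key_id (g : ℂ → ℝ) {u : ℝ} (hu0 : 0 < u) (θ : ℝ) :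
    fderiv ℝ g (cc u θ) (EC θ) + fderiv ℝ (fderiv ℝ g) (cc u θ) (EC θ) (cc u θ)
      = u * laplacian g (cc u θ)
        - (1/u) * (fderiv ℝ (fderiv ℝ g) (cc u θ) (Complex.I * cc u θ) (Complex.I * cc u θ)
            - fderiv ℝ g (cc u θ) (cc u θ)) := by
  show fderiv ℝ g (cc u θ) (EC θ)
      + fderiv ℝ (fderiv ℝ g) (cc u θ) (EC θ) (u • EC θ)
    = u * laplacian g (cc u θ)
      - (1/u) * (fderiv ℝ (fderiv ℝ g) (cc u θ) (Complex.I * (u • EC θ))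
            (Complex.I * (u • EC θ))
          - fderiv ℝ g (cc u θ) (u • EC θ))
  rw [lap_eq g (cc u θ), ← rot (fderiv ℝ (fderiv ℝ g) (cc u θ)) θ, mul_smul_comm,
    clm2_smul', clm2_smul, clm1_smul]
  field_simp
  ring

private lemma Btil_mono (hW : IsOpen W) (hg : ContDiffOn ℝ (⊤ : ℕ∞) g W)
    (hWsub : {z : ℂ | z ≠ 0 ∧ ‖z‖ ≤ s} ⊆ W)
    (hΔ : ∀ z ∈ W, 0 ≤ laplacian g z)
    {t₁ t₂ : ℝ} (h1 : 0 < t₁) (h12 : t₁ ≤ t₂) (h2s : t₂ ≤ s) :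
    (∫ θ in (0:ℝ)..(2*π), fderiv ℝ g (cc t₁ θ) (cc t₁ θ))
      ≤ ∫ θ in (0:ℝ)..(2*π), fderiv ℝ g (cc t₂ θ) (cc t₂ θ) := by
  have h2pi : (0:ℝ) ≤ 2*π := by positivity
  have huIcc : Set.uIcc t₁ t₂ = Set.Icc t₁ t₂ := Set.uIcc_of_le h12
  -- membership facts
  have hmemu : ∀ u ∈ Set.Icc t₁ t₂, 0 < u ∧ u ≤ s :=
    fun u hu => ⟨h1.trans_le hu.1, hu.2.trans h2s⟩
  -- θ-integrability of P on circles
  have hPθ : ∀ r : ℝ, 0 < r → r ≤ s →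
      IntervalIntegrable (fun θ => fderiv ℝ g (cc r θ) (cc r θ)) volume 0 (2*π) := by
    intro r hr0 hrs
    have hccθ : Continuous (fun θ : ℝ => cc r θ) := by unfold cc EC; fun_prop
    exact (contOn_f1ap hW hg hccθ.continuousOn hccθ.continuousOn
      (fun θ _ => mem_W hWsub hr0 hrs θ)).intervalIntegrable
  -- u-continuity data on the rectangle
  have hccR : Continuous (fun p : ℝ × ℝ => cc p.1 p.2) := by unfold cc EC; fun_prop
  have hECs : Continuous (fun p : ℝ × ℝ => EC p.2) := EC_cont.comp continuous_snd
  have hRm : ∀ p ∈ Set.Icc t₁ t₂ ×ˢ Set.Icc (0:ℝ) (2*π), cc p.1 p.2 ∈ W :=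
    fun p hp => mem_W hWsub (hmemu p.1 hp.1).1 (hmemu p.1 hp.1).2 p.2
  have hLapR : ContinuousOn (Function.uncurry fun u θ : ℝ => u * laplacian g (cc u θ))
      (Set.Icc t₁ t₂ ×ˢ Set.Icc (0:ℝ) (2*π)) := by
    show ContinuousOn (fun p : ℝ × ℝ => p.1 * laplacian g (cc p.1 p.2))
      (Set.Icc t₁ t₂ ×ˢ Set.Icc (0:ℝ) (2*π))
    have he : (fun p : ℝ × ℝ => p.1 * laplacian g (cc p.1 p.2))
        = fun p : ℝ × ℝ => p.1 * (fderiv ℝ (fderiv ℝ g) (cc p.1 p.2) 1 1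
            + fderiv ℝ (fderiv ℝ g) (cc p.1 p.2) Complex.I Complex.I) := by
      funext p; rw [lap_eq]
    rw [he]
    exact continuous_fst.continuousOn.mul
      ((contOn_f2ap hW hg hccR.continuousOn continuousOn_const continuousOn_const hRm).add
        (contOn_f2ap hW hg hccR.continuousOn continuousOn_const continuousOn_const hRm))
  have hDR : ContinuousOn (Function.uncurry fun u θ : ℝ =>
      (1/u) * (fderiv ℝ (fderiv ℝ g) (cc u θ) (Complex.I * cc u θ)
          (Complex.I * cc u θ)
        - fderiv ℝ g (cc u θ) (cc u θ)))
      (Set.Icc t₁ t₂ ×ˢ Set.Icc (0:ℝ) (2*π)) := by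
    show ContinuousOn (fun p : ℝ × ℝ =>
      (1/p.1) * (fderiv ℝ (fderiv ℝ g) (cc p.1 p.2) (Complex.I * cc p.1 p.2)
          (Complex.I * cc p.1 p.2)
        - fderiv ℝ g (cc p.1 p.2) (cc p.1 p.2)))
      (Set.Icc t₁ t₂ ×ˢ Set.Icc (0:ℝ) (2*π))
    refine (continuousOn_const.div continuous_fst.continuousOn
      (fun p hp => ne_of_gt (hmemu p.1 hp.1).1)).mul ?_
    exact (contOn_f2ap hW hg hccR.continuousOn
        (continuous_const.mul hccR).continuousOn (continuous_const.mul hccR).continuousOn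
        hRm).sub
      (contOn_f1ap hW hg hccR.continuousOn hccR.continuousOn hRm)
  -- FTC in u followed by the key identity, for each θ
  have hFTC : ∀ θ : ℝ,
      fderiv ℝ g (cc t₂ θ) (cc t₂ θ) - fderiv ℝ g (cc t₁ θ) (cc t₁ θ)
        = (∫ u in t₁..t₂, u * laplacian g (cc u θ))
          - ∫ u in t₁..t₂, (1/u) * (fderiv ℝ (fderiv ℝ g) (cc u θ) (Complex.I * cc u θ)
              (Complex.I * cc u θ) - fderiv ℝ g (cc u θ) (cc u θ)) := by
    intro θ
    have hccu : Continuous (fun u : ℝ => cc u θ) := by unfold cc EC; fun_prop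
    have hmu : ∀ u ∈ Set.uIcc t₁ t₂, cc u θ ∈ W := by
      rw [huIcc]; exact fun u hu => mem_W hWsub (hmemu u hu).1 (hmemu u hu).2 θ
    have hint1 : IntervalIntegrable (fun u => u * laplacian g (cc u θ)) volume t₁ t₂ := by
      have he : (fun u : ℝ => u * laplacian g (cc u θ))
          = fun u : ℝ => u * (fderiv ℝ (fderiv ℝ g) (cc u θ) 1 1
              + fderiv ℝ (fderiv ℝ g) (cc u θ) Complex.I Complex.I) := by
        funext u; rw [lap_eq]
      rw [he]
      exact (continuousOn_id.mul
        ((contOn_f2ap hW hg hccu.continuousOn continuousOn_const continuousOn_const hmu).add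
          (contOn_f2ap hW hg hccu.continuousOn continuousOn_const continuousOn_const
            hmu))).intervalIntegrable
    have hint2 : IntervalIntegrable (fun u => (1/u) * (fderiv ℝ (fderiv ℝ g) (cc u θ)
        (Complex.I * cc u θ) (Complex.I * cc u θ)
          - fderiv ℝ g (cc u θ) (cc u θ))) volume t₁ t₂ := by
      refine ContinuousOn.intervalIntegrable ?_
      refine (continuousOn_const.div continuousOn_id ?_).mul ?_
      · rw [huIcc]; exact fun u hu => ne_of_gt (hmemu u hu).1
      exact (contOn_f2ap hW hg hccu.continuousOn
          (continuous_const.mul hccu).continuousOn (continuous_const.mul hccu).continuousOn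
          hmu).sub
        (contOn_f1ap hW hg hccu.continuousOn hccu.continuousOn hmu)
    have hder : ∀ u ∈ Set.uIcc t₁ t₂,
        HasDerivAt (fun u : ℝ => fderiv ℝ g (cc u θ) (cc u θ))
          (u * laplacian g (cc u θ)
            - (1/u) * (fderiv ℝ (fderiv ℝ g) (cc u θ) (Complex.I * cc u θ)
                (Complex.I * cc u θ) - fderiv ℝ g (cc u θ) (cc u θ))) u := by
      intro u hu
      rw [huIcc] at hu
      have h := Pt_deriv hW hg hWsub (hmemu u hu).1 (hmemu u hu).2 θ
      rwa [key_id g (hmemu u hu).1 θ] at h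
    rw [← intervalIntegral.integral_eq_sub_of_hasDerivAt hder (hint1.sub hint2)]
    rw [intervalIntegral.integral_sub hint1 hint2]
  -- assemble
  rw [← sub_nonneg, ← intervalIntegral.integral_sub (hPθ t₂ (h1.trans_le h12) h2s)
    (hPθ t₁ h1 (h12.trans h2s))]
  rw [intervalIntegral.integral_congr (g := fun θ =>
      (∫ u in t₁..t₂, u * laplacian g (cc u θ))
        - ∫ u in t₁..t₂, (1/u) * (fderiv ℝ (fderiv ℝ g) (cc u θ) (Complex.I * cc u θ)
            (Complex.I * cc u θ) - fderiv ℝ g (cc u θ) (cc u θ)))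
    (fun θ _ => hFTC θ)]
  rw [intervalIntegral.integral_sub (my_marg h12 h2pi hLapR) (my_marg h12 h2pi hDR)]
  have hzero : (∫ θ in (0:ℝ)..(2*π), ∫ u in t₁..t₂,
      (1/u) * (fderiv ℝ (fderiv ℝ g) (cc u θ) (Complex.I * cc u θ)
        (Complex.I * cc u θ) - fderiv ℝ g (cc u θ) (cc u θ))) = 0 := by
    rw [← my_swap h12 h2pi hDR]
    have : ∀ u ∈ Set.uIcc t₁ t₂, (∫ θ in (0:ℝ)..(2*π),
        (1/u) * (fderiv ℝ (fderiv ℝ g) (cc u θ) (Complex.I * cc u θ)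
          (Complex.I * cc u θ) - fderiv ℝ g (cc u θ) (cc u θ))) = 0 := by
      intro u hu
      rw [huIcc] at hu
      rw [intervalIntegral.integral_const_mul,
        int_theta_zero hW hg hWsub (hmemu u hu).1 (hmemu u hu).2, mul_zero]
    rw [intervalIntegral.integral_congr (g := fun _ => (0:ℝ)) this]
    simp
  rw [hzero, sub_zero]
  refine intervalIntegral.integral_nonneg h2pi ?_
  intro θ hθ
  refine intervalIntegral.integral_nonneg h12 ?_
  intro u hu
  exact mul_nonneg (hmemu u hu).1.le
    (hΔ _ (mem_W hWsub (hmemu u hu).1 (hmemu u hu).2 θ))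

private lemma G_diff (hW : IsOpen W) (hg : ContDiffOn ℝ (⊤ : ℕ∞) g W)
    (hWsub : {z : ℂ | z ≠ 0 ∧ ‖z‖ ≤ s} ⊆ W)
    {t t₀ : ℝ} (ht : 0 < t) (htt0 : t ≤ t₀) (ht0s : t₀ ≤ s) :
    (∫ θ in (0:ℝ)..(2*π), g (cc t₀ θ)) - (∫ θ in (0:ℝ)..(2*π), g (cc t θ))
      = ∫ u in t..t₀, (∫ θ in (0:ℝ)..(2*π), fderiv ℝ g (cc u θ) (EC θ)) := by
  have h2pi : (0:ℝ) ≤ 2*π := by positivity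
  have huIcc : Set.uIcc t t₀ = Set.Icc t t₀ := Set.uIcc_of_le htt0
  have hmemu : ∀ u ∈ Set.Icc t t₀, 0 < u ∧ u ≤ s :=
    fun u hu => ⟨ht.trans_le hu.1, hu.2.trans ht0s⟩
  have hgθ : ∀ r : ℝ, 0 < r → r ≤ s →
      IntervalIntegrable (fun θ => g (cc r θ)) volume 0 (2*π) := by
    intro r hr0 hrs
    have hccθ : Continuous (fun θ : ℝ => cc r θ) := by unfold cc EC; fun_prop
    exact (contOn_g hg hccθ.continuousOn
      (fun θ _ => mem_W hWsub hr0 hrs θ)).intervalIntegrable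
  have hccR : Continuous (fun p : ℝ × ℝ => cc p.1 p.2) := by unfold cc EC; fun_prop
  have hECs : Continuous (fun p : ℝ × ℝ => EC p.2) := EC_cont.comp continuous_snd
  have hRm : ∀ p ∈ Set.Icc t t₀ ×ˢ Set.Icc (0:ℝ) (2*π), cc p.1 p.2 ∈ W :=
    fun p hp => mem_W hWsub (hmemu p.1 hp.1).1 (hmemu p.1 hp.1).2 p.2
  have hAR : ContinuousOn (Function.uncurry fun u θ : ℝ => fderiv ℝ g (cc u θ) (EC θ))
      (Set.Icc t t₀ ×ˢ Set.Icc (0:ℝ) (2*π)) := by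
    show ContinuousOn (fun p : ℝ × ℝ => fderiv ℝ g (cc p.1 p.2) (EC p.2))
      (Set.Icc t t₀ ×ˢ Set.Icc (0:ℝ) (2*π))
    exact contOn_f1ap hW hg hccR.continuousOn hECs.continuousOn hRm
  have hFTC : ∀ θ : ℝ, g (cc t₀ θ) - g (cc t θ)
      = ∫ u in t..t₀, fderiv ℝ g (cc u θ) (EC θ) := by
    intro θ
    have hccu : Continuous (fun u : ℝ => cc u θ) := by unfold cc EC; fun_prop
    have hmu : ∀ u ∈ Set.uIcc t t₀, cc u θ ∈ W := by
      rw [huIcc]; exact fun u hu => mem_W hWsub (hmemu u hu).1 (hmemu u hu).2 θ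
    have hint : IntervalIntegrable (fun u => fderiv ℝ g (cc u θ) (EC θ)) volume t t₀ :=
      (contOn_f1ap hW hg hccu.continuousOn continuousOn_const hmu).intervalIntegrable
    exact (intervalIntegral.integral_eq_sub_of_hasDerivAt (f := fun u => g (cc u θ))
      (fun u hu => by
        rw [huIcc] at hu
        exact g_deriv_t hW hg hWsub (hmemu u hu).1 (hmemu u hu).2 θ) hint).symm
  rw [← intervalIntegral.integral_sub (hgθ t₀ (ht.trans_le htt0) ht0s)
    (hgθ t ht (htt0.trans ht0s))]
  rw [intervalIntegral.integral_congr
    (g := fun θ => ∫ u in t..t₀, fderiv ℝ g (cc u θ) (EC θ)) (fun θ _ => hFTC θ)]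
  rw [← my_swap htt0 h2pi hAR]

end aux

/-- Step in the proof of Lemma 2.8: for `g` smooth with `Δg ≥ 0` on a neighbourhood of
the punctured closed disk of radius `s`, satisfying the one-sided subpolynomial upper
bound `g(z) + a log|z| ≤ log μ(1/|z|)`, one has `F(t) ≤ a` for all `0 < t ≤ s`. -/
theorem stmt4 (s : ℝ) (hs0 : 0 < s) (hs1 : s ≤ 1)
    (g : ℂ → ℝ) (W : Set ℂ) (hW : IsOpen W)
    (hWsub : {z : ℂ | z ≠ 0 ∧ ‖z‖ ≤ s} ⊆ W)
    (hg : ContDiffOn ℝ (⊤ : ℕ∞) g W)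
    (hΔ : ∀ z ∈ W, 0 ≤ laplacian g z)
    (a : ℝ) (μ : ℝ → ℝ) (hμ : Subpolynomial μ)
    (hbound : ∀ z : ℂ, z ≠ 0 → ‖z‖ ≤ s →
      g z + a * Real.log (‖z‖) ≤ Real.log (μ (1 / ‖z‖))) :
    ∀ t : ℝ, 0 < t → t ≤ s → Fcirc g t ≤ a := by
  intro t₀ ht₀0 ht₀s
  by_contra hcon
  push_neg at hcon
  have hπ : 0 < π := Real.pi_pos
  have h2pi : (0:ℝ) ≤ 2*π := by positivity
  -- rewrite Fcirc in terms of cc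
  have hF : Fcirc g t₀
      = -((1/(2*π)) * ∫ θ in (0:ℝ)..(2*π), fderiv ℝ g (cc t₀ θ) (cc t₀ θ)) := by
    unfold Fcirc
    have he : (fun θ : ℝ => fderiv ℝ g ((t₀:ℂ) * Complex.exp ((θ:ℂ) * Complex.I))
        ((t₀:ℂ) * Complex.exp ((θ:ℂ) * Complex.I)))
        = fun θ : ℝ => fderiv ℝ g (cc t₀ θ) (cc t₀ θ) := by
      funext θ
      rw [cc_eq]
      rfl
    rw [he]
  set Bt₀ : ℝ := ∫ θ in (0:ℝ)..(2*π), fderiv ℝ g (cc t₀ θ) (cc t₀ θ) with hBdef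
  set Gt₀ : ℝ := ∫ θ in (0:ℝ)..(2*π), g (cc t₀ θ) with hGdef
  set ε : ℝ := -Bt₀ - 2*π*a with hεdef
  have hε : 0 < ε := by
    rw [hF] at hcon
    have : (1/(2*π)) * Bt₀ < -a := by linarith
    have h2 : Bt₀ < -(2*π*a) := by
      have := (mul_lt_mul_iff_right₀ (by positivity : (0:ℝ) < 2*π)).mpr this
      have hne : (2*π) * ((1/(2*π)) * Bt₀) = Bt₀ := by field_simp
      nlinarith
    simp only [hεdef]
    linarith
  set C : ℝ := Gt₀ - Bt₀ * Real.log t₀ with hCdef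
  -- the key inequality, for every x ≥ max (1/t₀) 1 essentially
  have hkey : ∀ x : ℝ, 0 < x → 1/t₀ ≤ x →
      C + ε * Real.log x ≤ 2*π * Real.log (μ x) := by
    intro x hx0 hxt
    set t : ℝ := 1/x with htdef
    have ht : 0 < t := by positivity
    have htt0 : t ≤ t₀ := by
      rw [htdef]
      rw [div_le_iff₀ hx0]
      rw [div_le_iff₀ ht₀0] at hxt
      linarith
    have hts : t ≤ s := htt0.trans ht₀s
    have h1t : 1/t = x := by rw [htdef, one_div_one_div]
    have hlogt : Real.log t = -Real.log x := by
      rw [htdef, one_div, Real.log_inv]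
    have hmemu : ∀ u ∈ Set.Icc t t₀, 0 < u ∧ u ≤ s :=
      fun u hu => ⟨ht.trans_le hu.1, hu.2.trans ht₀s⟩
    -- G difference identity
    have h1 := G_diff hW hg hWsub ht htt0 ht₀s
    -- rectangle continuity for the marginal integrability
    have hccR : Continuous (fun p : ℝ × ℝ => cc p.1 p.2) := by unfold cc EC; fun_prop
    have hECs : Continuous (fun p : ℝ × ℝ => EC p.2) := EC_cont.comp continuous_snd
    have hRm : ∀ p ∈ Set.Icc t t₀ ×ˢ Set.Icc (0:ℝ) (2*π), cc p.1 p.2 ∈ W :=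
      fun p hp => mem_W hWsub (hmemu p.1 hp.1).1 (hmemu p.1 hp.1).2 p.2
    have hAR : ContinuousOn (Function.uncurry fun u θ : ℝ => fderiv ℝ g (cc u θ) (EC θ))
        (Set.Icc t t₀ ×ˢ Set.Icc (0:ℝ) (2*π)) := by
      show ContinuousOn (fun p : ℝ × ℝ => fderiv ℝ g (cc p.1 p.2) (EC p.2))
        (Set.Icc t t₀ ×ˢ Set.Icc (0:ℝ) (2*π))
      exact contOn_f1ap hW hg hccR.continuousOn hECs.continuousOn hRm
    -- pointwise comparison of the inner integral with Bt₀ * (1/u)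
    have hφle : ∀ u ∈ Set.Icc t t₀,
        (∫ θ in (0:ℝ)..(2*π), fderiv ℝ g (cc u θ) (EC θ)) ≤ Bt₀ * (1/u) := by
      intro u hu
      have hu0 : 0 < u := (hmemu u hu).1
      have hcongr : (∫ θ in (0:ℝ)..(2*π), fderiv ℝ g (cc u θ) (EC θ))
          = (1/u) * ∫ θ in (0:ℝ)..(2*π), fderiv ℝ g (cc u θ) (cc u θ) := by
        rw [← intervalIntegral.integral_const_mul]
        refine intervalIntegral.integral_congr fun θ _ => ?_
        have h2 : fderiv ℝ g (cc u θ) (cc u θ) = u * fderiv ℝ g (cc u θ) (EC θ) :=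
          clm1_smul (fderiv ℝ g (cc u θ)) u (EC θ)
        rw [h2]
        field_simp
      rw [hcongr]
      have hmono := Btil_mono hW hg hWsub hΔ hu0 hu.2 ht₀s
      calc (1/u) * ∫ θ in (0:ℝ)..(2*π), fderiv ℝ g (cc u θ) (cc u θ)
          ≤ (1/u) * Bt₀ := by
            exact mul_le_mul_of_nonneg_left hmono (by positivity)
        _ = Bt₀ * (1/u) := mul_comm _ _
    -- integral comparison
    have hint1 : IntervalIntegrable
        (fun u => ∫ θ in (0:ℝ)..(2*π), fderiv ℝ g (cc u θ) (EC θ)) volume t t₀ :=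
      my_marg' htt0 h2pi hAR
    have hint2 : IntervalIntegrable (fun u => Bt₀ * (1/u)) volume t t₀ := by
      refine ContinuousOn.intervalIntegrable ?_
      refine continuousOn_const.mul (continuousOn_const.div continuousOn_id ?_)
      rw [Set.uIcc_of_le htt0]
      exact fun u hu => ne_of_gt (ht.trans_le hu.1)
    have hcomp : (∫ u in t..t₀, (∫ θ in (0:ℝ)..(2*π), fderiv ℝ g (cc u θ) (EC θ)))
        ≤ ∫ u in t..t₀, Bt₀ * (1/u) :=
      intervalIntegral.integral_mono_on htt0 hint1 hint2 hφle
    have hlogint : (∫ u in t..t₀, Bt₀ * (1/u)) = Bt₀ * (Real.log t₀ - Real.log t) := by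
      rw [intervalIntegral.integral_const_mul]
      have h0 : (0:ℝ) ∉ Set.uIcc t t₀ := by
        rw [Set.uIcc_of_le htt0]
        rintro ⟨h0, -⟩
        exact absurd h0 (not_le.mpr ht)
      rw [integral_one_div h0, Real.log_div (ne_of_gt ht₀0) (ne_of_gt ht)]
    -- pointwise upper bound for g on the circle of radius t
    have hgint : IntervalIntegrable (fun θ => g (cc t θ)) volume 0 (2*π) := by
      have hccθ : Continuous (fun θ : ℝ => cc t θ) := by unfold cc EC; fun_prop
      exact (contOn_g hg hccθ.continuousOn
        (fun θ _ => mem_W hWsub ht hts θ)).intervalIntegrable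
    have hGt_le : (∫ θ in (0:ℝ)..(2*π), g (cc t θ))
        ≤ 2*π * (Real.log (μ x) - a * Real.log t) := by
      have hub : ∀ θ ∈ Set.Icc (0:ℝ) (2*π),
          g (cc t θ) ≤ Real.log (μ x) - a * Real.log t := by
        intro θ _
        have hb := hbound (cc t θ) (cc_ne ht θ) (by rw [abs_cc ht.le]; exact hts)
        rw [abs_cc ht.le, h1t] at hb
        linarith
      calc (∫ θ in (0:ℝ)..(2*π), g (cc t θ))
          ≤ ∫ _ in (0:ℝ)..(2*π), (Real.log (μ x) - a * Real.log t) :=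
            intervalIntegral.integral_mono_on h2pi hgint intervalIntegrable_const hub
        _ = 2*π * (Real.log (μ x) - a * Real.log t) := by
            rw [intervalIntegral.integral_const]
            rw [smul_eq_mul]
            ring
    -- combine everything
    have hA : Gt₀ - (∫ θ in (0:ℝ)..(2*π), g (cc t θ))
        ≤ Bt₀ * (Real.log t₀ - Real.log t) := by
      rw [hGdef, h1]
      rw [← hlogint]
      exact hcomp
    rw [hlogt] at hA hGt_le
    simp only [hCdef, hεdef]
    nlinarith [hA, hGt_le]
  -- endgame: contradiction with subpolynomial growth
  set n : ℝ := ε/(4*π) with hndef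
  have hn : 0 < n := by positivity
  obtain ⟨x₀, hx₀⟩ := Filter.eventually_atTop.mp
    ((hμ.2 n hn).eventually_lt_const (by norm_num : (0:ℝ) < 1))
  set M : ℝ := 2*(|C|+1)/ε with hMdef
  set x : ℝ := max x₀ (max (1/t₀) (Real.exp M)) with hxdef
  have hxM : Real.exp M ≤ x := le_trans (le_max_right _ _) (le_max_right _ _)
  have hx0 : 0 < x := lt_of_lt_of_le (Real.exp_pos M) hxM
  have hxt : 1/t₀ ≤ x := le_trans (le_max_left _ _) (le_max_right _ _)
  have hxx₀ : x₀ ≤ x := le_max_left _ _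
  have hlogM : M ≤ Real.log x := (Real.le_log_iff_exp_le hx0).mpr hxM
  have hkx := hkey x hx0 hxt
  have hμlt : μ x / x ^ n < 1 := hx₀ x hxx₀
  have hxn : (0:ℝ) < x ^ n := Real.rpow_pos_of_pos hx0 n
  have hμx : μ x < x ^ n := (div_lt_one hxn).mp hμlt
  have hlogμ : Real.log (μ x) < n * Real.log x := by
    have := Real.log_lt_log (hμ.1 x hx0) hμx
    rwa [Real.log_rpow hx0] at this
  have h2πn : 2*π*n = ε/2 := by
    rw [hndef]
    field_simp
    ring
  have hL : (ε/2) * M ≤ (ε/2) * Real.log x :=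
    mul_le_mul_of_nonneg_left hlogM (by positivity)
  have hM2 : (ε/2) * M = |C| + 1 := by
    rw [hMdef]
    field_simp
  have habs : -|C| ≤ C := neg_abs_le C
  have h5 : 2*π * Real.log (μ x) < (ε/2) * Real.log x := by
    have h6 := mul_lt_mul_of_pos_left hlogμ (by positivity : (0:ℝ) < 2*π)
    calc 2*π * Real.log (μ x) < 2*π * (n * Real.log x) := h6
      _ = (2*π*n) * Real.log x := by ring
      _ = (ε/2) * Real.log x := by rw [h2πn]
  have h7 : C + ε * Real.log x < (ε/2) * Real.log x := lt_of_le_of_lt hkx h5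
  have h8 : |C| + 1 ≤ (ε/2) * Real.log x := by rw [← hM2]; exact hL
  nlinarith [h7, h8, habs, hε]
end

section
/- Let 0 < s ≤ 1 and let g be a real-valued function on the punctured closed disk Δ_s*. Suppose there exist real numbers a, a' and subpolynomial functions μ, μ' such that −log μ(1/|z|) ≤ g(z) + a·log|z| ≤ log μ(1/|z|) and −log μ'(1/|z|) ≤ g(z) + a'·log|z| ≤ log μ'(1/|z|) for all z with 0 < |z| ≤ s. Then a = a'. (The local content of Proposition 2.7 of the paper: uniqueness of the subpolynomial Lear extension coefficient.) -/
open Filter Real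

/-! Subtracting the two bounds at `z = 1/x` gives `|a - a'| log x ≤ log μ(x) + log μ'(x)` for all
large `x`, while subpolynomial growth makes the right-hand side at most `ε log x` for every
`ε > 0`. -/

namespace Subpolynomial

variable {μ μ' : ℝ → ℝ}

theorem eventually_log_le_mul_log (hμ : Subpolynomial μ) {n : ℝ} (hn : 0 < n) :
    ∀ᶠ x in atTop, log (μ x) ≤ n * log x := by
  filter_upwards [(hμ.2 n hn).eventually (gt_mem_nhds one_pos), eventually_gt_atTop 0]
    with x hlt hx
  rw [div_lt_one (rpow_pos_of_pos hx n)] at hlt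
  calc log (μ x) ≤ log (x ^ n) := log_le_log (hμ.1 x hx) hlt.le
    _ = n * log x := log_rpow hx n

theorem eq_zero_of_eventually_abs_mul_log_le (hμ : Subpolynomial μ) (hμ' : Subpolynomial μ')
    {c : ℝ} (h : ∀ᶠ x in atTop, |c| * log x ≤ log (μ x) + log (μ' x)) : c = 0 := by
  by_contra hc
  have hn : 0 < |c| / 4 := by positivity
  obtain ⟨x, hx, hμx, hμ'x, hlog⟩ := (h.and <| (hμ.eventually_log_le_mul_log hn).and <|
    (hμ'.eventually_log_le_mul_log hn).and <| tendsto_log_atTop.eventually_gt_atTop 0).exists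
  nlinarith [abs_pos.mpr hc]

end Subpolynomial

theorem stmt5_general (s : ℝ) (hs0 : 0 < s)
    (g : ℂ → ℝ)
    (a a' : ℝ) (μ μ' : ℝ → ℝ) (hμ : Subpolynomial μ) (hμ' : Subpolynomial μ')
    (hbound : ∀ z : ℂ, z ≠ 0 → ‖z‖ ≤ s →
      -Real.log (μ (1 / ‖z‖)) ≤ g z + a * Real.log (‖z‖) ∧
        g z + a * Real.log (‖z‖) ≤ Real.log (μ (1 / ‖z‖)))
    (hbound' : ∀ z : ℂ, z ≠ 0 → ‖z‖ ≤ s →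
      -Real.log (μ' (1 / ‖z‖)) ≤ g z + a' * Real.log (‖z‖) ∧
        g z + a' * Real.log (‖z‖) ≤ Real.log (μ' (1 / ‖z‖))) :
    a = a' := by
  refine sub_eq_zero.mp (hμ.eq_zero_of_eventually_abs_mul_log_le hμ' ?_)
  filter_upwards [eventually_ge_atTop (1 / s), eventually_gt_atTop 1] with x hxs hx1
  have hx0 : 0 < x := one_pos.trans hx1
  have hz : ‖((x⁻¹ : ℝ) : ℂ)‖ = x⁻¹ := by simp [hx0.le]
  have hz0 : ((x⁻¹ : ℝ) : ℂ) ≠ 0 := by simpa using hx0.ne'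
  have hzs : ‖((x⁻¹ : ℝ) : ℂ)‖ ≤ s := by
    rw [hz]; exact inv_le_of_inv_le₀ hs0 (by rwa [← one_div])
  have h := hbound _ hz0 hzs
  have h' := hbound' _ hz0 hzs
  rw [hz, one_div, inv_inv, log_inv] at h h'
  rw [abs_sub_comm, ← abs_of_pos (log_pos hx1), ← abs_mul, abs_le]
  constructor <;> linarith [h.1, h.2, h'.1, h'.2]

/-- Local content of Proposition 2.7: if a function `g` on the punctured closed disk of
radius `s` satisfies two-sided subpolynomial growth bounds with coefficients `a` and
`a'`, then `a = a'` (uniqueness of the subpolynomial Lear extension coefficient). -/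
theorem stmt5 (s : ℝ) (hs0 : 0 < s) (hs1 : s ≤ 1)
    (g : ℂ → ℝ)
    (a a' : ℝ) (μ μ' : ℝ → ℝ) (hμ : Subpolynomial μ) (hμ' : Subpolynomial μ')
    (hbound : ∀ z : ℂ, z ≠ 0 → ‖z‖ ≤ s →
      -Real.log (μ (1 / ‖z‖)) ≤ g z + a * Real.log (‖z‖) ∧
        g z + a * Real.log (‖z‖) ≤ Real.log (μ (1 / ‖z‖)))
    (hbound' : ∀ z : ℂ, z ≠ 0 → ‖z‖ ≤ s →
      -Real.log (μ' (1 / ‖z‖)) ≤ g z + a' * Real.log (‖z‖) ∧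
        g z + a' * Real.log (‖z‖) ≤ Real.log (μ' (1 / ‖z‖))) :
    a = a' :=
  stmt5_general s hs0 g a a' μ μ' hμ hμ' hbound hbound'
end

section
/- Let n ≥ 1 and 1 ≤ r ≤ n. Let D° ⊂ ℂ be the open unit disk, let U = {z ∈ (D°)ⁿ : z_i ≠ 0 for i = 1, …, r}, and let g : U → ℝ be a smooth function with semipositive Levi form on U. Assume that for each i ∈ {1, …, r} there is a real number a_i such that for every point p ∈ (D°)ⁿ with p_i = 0 and p_j ≠ 0 for all j ∈ {1, …, r} with j ≠ i, there exist an open neighbourhood V ⊆ (D°)ⁿ of p and a subpolynomial function μ with |g(z) + a_i·log|z_i|| ≤ log μ(1/|z_i|) for all z ∈ V ∩ U. Let φ : D° → (D°)ⁿ be a holomorphic map with φ(t) ∈ U for all t ≠ 0 and with φ(0)_i = 0 for i = 1, …, r, and let m_i ∈ ℤ_{>0} be the order of vanishing of the coordinate function φ_i at t = 0. Suppose there exist a_C ∈ ℝ, a subpolynomial function μ_C and ε > 0 such that |g(φ(t)) + a_C·log|t|| ≤ log μ_C(1/|t|) for all t with 0 < |t| ≤ ε. Then a_C ≤ Σ_{i=1}^r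 m_i a_i; equivalently, the height jump Σ_{i=1}^r m_i a_i − a_C is nonnegative. (Theorem 3.2 of the paper, the main theorem, expressed in local coordinates on a polydisc with normal crossings boundary divisor.) -/
open Filter Real Topology

/-- The open unit polydisc `(D°)ⁿ` in `ℂⁿ`. -/
def openPolydisc (n : ℕ) : Set (Fin n → ℂ) :=
  {z | ∀ j, ‖z j‖ < 1}

/-- `U = {z ∈ (D°)ⁿ : z_i ≠ 0 for i = 1, …, r}`, the complement of the normal
crossings divisor `z_1 ⋯ z_r = 0` in the open unit polydisc. -/
def polydiscU (n r : ℕ) (hrn : r ≤ n) : Set (Fin n → ℂ) :=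
  {z | (∀ j, ‖z j‖ < 1) ∧ ∀ i : Fin r, z (Fin.castLE hrn i) ≠ 0}

/-- `g` has semipositive Levi form on `U`: at every point of `U` and in every complex
direction `w`, the quantity `D²g(w,w) + D²g(iw,iw)`, which equals `4 w̄ᵀ H w` for the
complex Hessian `H = (∂²g/∂z_j∂z̄_k)`, is nonnegative. -/
def LeviSemipositiveOn {n : ℕ} (g : (Fin n → ℂ) → ℝ) (U : Set (Fin n → ℂ)) : Prop :=
  ∀ z ∈ U, ∀ w : Fin n → ℂ,
    0 ≤ iteratedFDeriv ℝ 2 g z ![w, w] +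
      iteratedFDeriv ℝ 2 g z ![fun j => Complex.I * w j, fun j => Complex.I * w j]


section Slice
variable {E : Type*} [NormedAddCommGroup E] [NormedSpace ℝ E]

lemma slice_hasDerivAt {f : E → ℝ} {Ω : Set E} (hΩ : IsOpen Ω) (hf : ContDiffOn ℝ 2 f Ω)
    {y : E} (v : E) {s : ℝ} (hs : y + s • v ∈ Ω) :
    HasDerivAt (fun s' : ℝ => f (y + s' • v)) (fderiv ℝ f (y + s • v) v) s := by
  have hdiff : DifferentiableAt ℝ f (y + s • v) :=
    (hf.contDiffAt (hΩ.mem_nhds hs)).differentiableAt (by norm_num)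
  have hline : HasDerivAt (fun s' : ℝ => y + s' • v) v s := by
    simpa using ((hasDerivAt_id s).smul_const v).const_add y
  exact hdiff.hasFDerivAt.comp_hasDerivAt s hline

lemma slice_second {f : E → ℝ} {Ω : Set E} (hΩ : IsOpen Ω) (hf : ContDiffOn ℝ 2 f Ω)
    {y : E} (hy : y ∈ Ω) (v : E) :
    HasDerivAt (fun s : ℝ => fderiv ℝ f (y + s • v) v)
      (iteratedFDeriv ℝ 2 f y ![v, v]) 0 := by
  have hf2 : ContDiffAt ℝ 2 f y := hf.contDiffAt (hΩ.mem_nhds hy)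
  have h2 : DifferentiableAt ℝ (fderiv ℝ f) y :=
    (hf2.fderiv_right (m := 1) (by norm_num)).differentiableAt (by norm_num)
  have hline : HasDerivAt (fun s : ℝ => y + s • v) v 0 := by
    simpa using ((hasDerivAt_id (0:ℝ)).smul_const v).const_add y
  have hcomp : HasDerivAt (fun s : ℝ => fderiv ℝ f (y + s • v))
      (fderiv ℝ (fderiv ℝ f) y v) 0 := by
    have h2' : HasFDerivAt (fderiv ℝ f) (fderiv ℝ (fderiv ℝ f) y) (y + (0:ℝ) • v) := by
      simpa using h2.hasFDerivAt
    exact h2'.comp_hasDerivAt 0 hline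
  have := hcomp.clm_apply (hasDerivAt_const 0 v)
  rw [iteratedFDeriv_two_apply]
  simpa using this

lemma eventually_line_mem {Ω : Set E} (hΩ : IsOpen Ω) {y : E} (hy : y ∈ Ω) (v : E) :
    ∀ᶠ s in 𝓝 (0:ℝ), y + s • v ∈ Ω := by
  have hc : ContinuousAt (fun s : ℝ => y + s • v) 0 := by fun_prop
  have : (fun s : ℝ => y + s • v) 0 = y := by simp
  exact hc (by rw [this]; exact hΩ.mem_nhds hy)

lemma second_deriv_eq {f : E → ℝ} {Ω : Set E} (hΩ : IsOpen Ω) (hf : ContDiffOn ℝ 2 f Ω)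
    {y : E} (hy : y ∈ Ω) (v : E) {p : ℝ → ℝ} {c : ℝ}
    (h1 : ∀ᶠ s in 𝓝 (0:ℝ), HasDerivAt (fun s' : ℝ => f (y + s' • v)) (p s) s)
    (h2 : HasDerivAt p c 0) :
    iteratedFDeriv ℝ 2 f y ![v, v] = c := by
  have hev := eventually_line_mem hΩ hy v
  have hq : p =ᶠ[𝓝 (0:ℝ)] fun s => fderiv ℝ f (y + s • v) v := by
    filter_upwards [h1, hev] with s hs1 hs2
    exact hs1.unique (slice_hasDerivAt hΩ hf v hs2)
  have h3 : HasDerivAt p (iteratedFDeriv ℝ 2 f y ![v, v]) 0 :=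
    (slice_second hΩ hf hy v).congr_of_eventuallyEq hq
  exact h3.unique h2
end Slice

lemma second_le_zero_of_isLocalMax {q p : ℝ → ℝ} {c : ℝ}
    (h1 : ∀ᶠ s in 𝓝 (0:ℝ), HasDerivAt q (p s) s)
    (h2 : HasDerivAt p c 0) (hmax : IsLocalMax q 0) : c ≤ 0 := by
  by_contra hc
  push_neg at hc
  have hp0 : p 0 = 0 := hmax.hasDerivAt_eq_zero h1.self_of_nhds
  have hslope : Tendsto (fun s : ℝ => p s / s) (𝓝[≠] (0:ℝ)) (𝓝 c) := by
    have := hasDerivAt_iff_tendsto_slope.1 h2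
    refine this.congr' ?_
    filter_upwards [self_mem_nhdsWithin] with s hs
    simp [slope_def_field, hp0]
  have hpos : ∀ᶠ s in 𝓝[>] (0:ℝ), 0 < p s := by
    have h4 : ∀ᶠ s in 𝓝[>] (0:ℝ), 0 < p s / s := by
      have := hslope.mono_left (nhdsWithin_mono _ (fun x hx => ne_of_gt hx))
      exact this.eventually_const_lt hc  -- 0 < c eventually p s / s
    filter_upwards [h4, self_mem_nhdsWithin] with s hs hs'
    have : (0:ℝ) < s := hs'
    by_contra hps
    push_neg at hps
    have : p s / s ≤ 0 := div_nonpos_of_nonpos_of_nonneg hps this.le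
    linarith
  -- extract an interval
  rcases (nhdsGT_basis (0:ℝ)).eventually_iff.mp hpos with ⟨η, hη, hηs⟩
  rcases Metric.eventually_nhds_iff.mp (h1.and hmax) with ⟨η', hη', hη's⟩
  set b := min η η' / 2 with hb
  have hb0 : 0 < b := by have := hη; have := hη'; positivity
  have hbη : b < η := by
    have h5 := min_le_left η η'
    rw [hb]; linarith
  have hbη' : b < η' := by
    have h5 := min_le_right η η'
    rw [hb]; linarith
  have hmono : StrictMonoOn q (Set.Icc 0 b) := by
    apply strictMonoOn_of_deriv_pos (convex_Icc 0 b)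
    · intro x hx
      have hd : dist x 0 < η' := by
        simp only [Real.dist_eq, sub_zero]
        rw [abs_of_nonneg hx.1]; linarith [hx.2]
      exact ((hη's hd).1.continuousAt).continuousWithinAt
    · intro x hx
      rw [interior_Icc] at hx
      have hd : dist x 0 < η' := by
        simp only [Real.dist_eq, sub_zero]
        rw [abs_of_nonneg hx.1.le]; linarith [hx.2]
      rw [(hη's hd).1.deriv]
      exact hηs ⟨hx.1, by linarith [hx.2]⟩
  have hlt : q 0 < q b := hmono (Set.left_mem_Icc.2 hb0.le) (Set.right_mem_Icc.2 hb0.le) hb0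
  have hd : dist b 0 < η' := by
    simp only [Real.dist_eq, sub_zero]
    rw [abs_of_nonneg hb0.le]; linarith
  exact absurd (hη's hd).2 (not_le.2 hlt)

noncomputable def ll (z : ℂ) : ℝ := Real.log (Complex.normSq z) / 2

lemma ll_eq (z : ℂ) : Real.log (‖z‖) = ll z := by
  rw [ll, Complex.norm_def, Real.log_sqrt (Complex.normSq_nonneg z)]

lemma contDiff_normSq : ContDiff ℝ (⊤ : ℕ∞) (fun z : ℂ => Complex.normSq z) := by
  have : (fun z : ℂ => Complex.normSq z) = fun z : ℂ => z.re * z.re + z.im * z.im := by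
    funext z; exact Complex.normSq_apply z
  rw [this]
  exact (Complex.reCLM.contDiff.mul Complex.reCLM.contDiff).add
    (Complex.imCLM.contDiff.mul Complex.imCLM.contDiff)

lemma contDiffAt_ll {z : ℂ} (hz : z ≠ 0) : ContDiffAt ℝ 2 ll z := by
  have h1 : Complex.normSq z ≠ 0 := by simpa [Complex.normSq_eq_zero] using hz
  exact ((Real.contDiffAt_log.2 h1).comp z
    ((contDiff_normSq.of_le (WithTop.coe_le_coe.2 le_top)).contDiffAt)).div_const 2

lemma contDiffOn_ll : ContDiffOn ℝ 2 ll {z : ℂ | z ≠ 0} :=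
  fun z hz => (contDiffAt_ll hz).contDiffWithinAt

-- the slice of normSq in direction 1
lemma nsq_slice_one (w : ℂ) (s : ℝ) :
    HasDerivAt (fun s' : ℝ => Complex.normSq (w + s' • (1:ℂ))) (2 * (w.re + s)) s := by
  have he : (fun s' : ℝ => Complex.normSq (w + s' • (1:ℂ)))
      = fun s' : ℝ => (w.re + s') ^ 2 + w.im ^ 2 := by
    funext s'
    simp [Complex.normSq_apply, Complex.real_smul]
    ring
  rw [he]
  have h1 : HasDerivAt (fun s' : ℝ => (w.re + s') ^ 2 + w.im ^ 2)
      (2 * (w.re + s) ^ 1 * 1) s :=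
    ((((hasDerivAt_id s).const_add w.re)).pow 2).add_const (w.im ^ 2)
  simpa using h1

lemma nsq_slice_I (w : ℂ) (s : ℝ) :
    HasDerivAt (fun s' : ℝ => Complex.normSq (w + s' • Complex.I)) (2 * (w.im + s)) s := by
  have he : (fun s' : ℝ => Complex.normSq (w + s' • Complex.I))
      = fun s' : ℝ => (w.im + s') ^ 2 + w.re ^ 2 := by
    funext s'
    simp [Complex.normSq_apply, Complex.real_smul]
    ring
  rw [he]
  have h1 : HasDerivAt (fun s' : ℝ => (w.im + s') ^ 2 + w.re ^ 2)
      (2 * (w.im + s) ^ 1 * 1) s :=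
    ((((hasDerivAt_id s).const_add w.im)).pow 2).add_const (w.re ^ 2)
  simpa using h1

lemma nsq_pos_of_ne {w : ℂ} (hw : w ≠ 0) : 0 < Complex.normSq w :=
  Complex.normSq_pos.2 hw

-- slice of ll in direction 1
lemma ll_slice_one {w : ℂ} {s : ℝ} (hw : w + (s:ℝ) • (1:ℂ) ≠ 0) :
    HasDerivAt (fun s' : ℝ => ll (w + s' • (1:ℂ)))
      ((w.re + s) / ((w.re + s) ^ 2 + w.im ^ 2)) s := by
  have hn : Complex.normSq (w + (s:ℝ) • (1:ℂ)) ≠ 0 := (nsq_pos_of_ne hw).ne'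
  have hval : Complex.normSq (w + (s:ℝ) • (1:ℂ)) = (w.re + s) ^ 2 + w.im ^ 2 := by
    simp [Complex.normSq_apply, Complex.real_smul]; ring
  have h1 := ((nsq_slice_one w s).log hn).div_const 2
  have : 2 * (w.re + s) / Complex.normSq (w + (s:ℝ) • (1:ℂ)) / 2
      = (w.re + s) / ((w.re + s) ^ 2 + w.im ^ 2) := by
    rw [hval]; ring
  rw [this] at h1
  exact h1

lemma ll_slice_I {w : ℂ} {s : ℝ} (hw : w + (s:ℝ) • Complex.I ≠ 0) :
    HasDerivAt (fun s' : ℝ => ll (w + s' • Complex.I))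
      ((w.im + s) / ((w.im + s) ^ 2 + w.re ^ 2)) s := by
  have hn : Complex.normSq (w + (s:ℝ) • Complex.I) ≠ 0 := (nsq_pos_of_ne hw).ne'
  have hval : Complex.normSq (w + (s:ℝ) • Complex.I) = (w.im + s) ^ 2 + w.re ^ 2 := by
    simp [Complex.normSq_apply, Complex.real_smul]; ring
  have h1 := ((nsq_slice_I w s).log hn).div_const 2
  have : 2 * (w.im + s) / Complex.normSq (w + (s:ℝ) • Complex.I) / 2
      = (w.im + s) / ((w.im + s) ^ 2 + w.re ^ 2) := by
    rw [hval]; ring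
  rw [this] at h1
  exact h1

-- second derivatives at 0 of the ll-slices
lemma ll_second_one {w : ℂ} (hw : w ≠ 0) :
    HasDerivAt (fun s : ℝ => (w.re + s) / ((w.re + s) ^ 2 + w.im ^ 2))
      ((w.im ^ 2 - w.re ^ 2) / (Complex.normSq w) ^ 2) 0 := by
  have hn : (w.re + 0) ^ 2 + w.im ^ 2 ≠ 0 := by
    have := nsq_pos_of_ne hw
    rw [Complex.normSq_apply] at this
    intro hcon; rw [add_zero] at hcon; nlinarith
  have hnum : HasDerivAt (fun s : ℝ => w.re + s) 1 0 := (hasDerivAt_id 0).const_add w.re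
  have hden : HasDerivAt (fun s : ℝ => (w.re + s) ^ 2 + w.im ^ 2) (2 * (w.re + 0)) 0 := by
    have := (((hasDerivAt_id (0:ℝ)).const_add w.re).pow 2).add_const (w.im ^ 2)
    simpa using this
  have h1 := hnum.div hden hn
  have : (1 * ((w.re + 0) ^ 2 + w.im ^ 2) - (w.re + 0) * (2 * (w.re + 0)))
       / ((w.re + 0) ^ 2 + w.im ^ 2) ^ 2 = (w.im ^ 2 - w.re ^ 2) / (Complex.normSq w) ^ 2 := by
    rw [Complex.normSq_apply]; ring_nf
  rw [this] at h1
  exact h1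

lemma ll_second_I {w : ℂ} (hw : w ≠ 0) :
    HasDerivAt (fun s : ℝ => (w.im + s) / ((w.im + s) ^ 2 + w.re ^ 2))
      ((w.re ^ 2 - w.im ^ 2) / (Complex.normSq w) ^ 2) 0 := by
  have hn : (w.im + 0) ^ 2 + w.re ^ 2 ≠ 0 := by
    have := nsq_pos_of_ne hw
    rw [Complex.normSq_apply] at this
    intro hcon; rw [add_zero] at hcon; nlinarith
  have hnum : HasDerivAt (fun s : ℝ => w.im + s) 1 0 := (hasDerivAt_id 0).const_add w.im
  have hden : HasDerivAt (fun s : ℝ => (w.im + s) ^ 2 + w.re ^ 2) (2 * (w.im + 0)) 0 := by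
    have := (((hasDerivAt_id (0:ℝ)).const_add w.im).pow 2).add_const (w.re ^ 2)
    simpa using this
  have h1 := hnum.div hden hn
  have : (1 * ((w.im + 0) ^ 2 + w.re ^ 2) - (w.im + 0) * (2 * (w.im + 0)))
       / ((w.im + 0) ^ 2 + w.re ^ 2) ^ 2 = (w.re ^ 2 - w.im ^ 2) / (Complex.normSq w) ^ 2 := by
    rw [Complex.normSq_apply]; ring_nf
  rw [this] at h1
  exact h1

lemma maxPrinciple (u : ℂ → ℝ) (ρ R M : ℝ) (hρ : 0 < ρ) (hρR : ρ < R)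
    (hC : ∀ w : ℂ, ρ ≤ ‖w‖ → ‖w‖ ≤ R → ContDiffAt ℝ 2 u w)
    (hsub : ∀ w : ℂ, ρ < ‖w‖ → ‖w‖ < R →
      0 ≤ iteratedFDeriv ℝ 2 u w ![1, 1] +
          iteratedFDeriv ℝ 2 u w ![Complex.I, Complex.I])
    (hbd : ∀ w : ℂ, ‖w‖ = ρ ∨ ‖w‖ = R → u w ≤ M) :
    ∀ w : ℂ, ρ ≤ ‖w‖ → ‖w‖ ≤ R → u w ≤ M := by
  intro w hw1 hw2
  have hR : 0 < R := hρ.trans hρR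
  refine le_of_forall_pos_le_add (fun ε hε => ?_)
  set δ : ℝ := ε / R ^ 2 with hδdef
  have hδ : 0 < δ := by positivity
  set A : Set ℂ := (fun z : ℂ => ‖z‖) ⁻¹' (Set.Icc ρ R) with hA
  have hAclosed : IsClosed A := isClosed_Icc.preimage continuous_norm
  have hAbdd : Bornology.IsBounded A := by
    apply Bornology.IsBounded.subset (Metric.isBounded_closedBall (x := (0:ℂ)) (r := R))
    intro y hy
    simp only [Metric.mem_closedBall]
    rw [dist_zero_right] at *
    exact hy.2
  have hAcomp : IsCompact A := Metric.isCompact_of_isClosed_isBounded hAclosed hAbdd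
  have hAne : A.Nonempty := ⟨(ρ:ℂ), by simp [hA, Complex.norm_real, abs_of_pos hρ, hρR.le]⟩
  set v : ℂ → ℝ := fun y => u y + δ * Complex.normSq y with hv
  have hvc : ContinuousOn v A := by
    intro y hy
    have := (hC y hy.1 hy.2).continuousAt
    exact (this.add ((continuous_const.mul Complex.continuous_normSq).continuousAt)).continuousWithinAt
  obtain ⟨z, hzA, hz⟩ := hAcomp.exists_isMaxOn hAne hvc
  have hwA : w ∈ A := ⟨hw1, hw2⟩
  have step1 : u w ≤ v z := by
    have : u w ≤ v w := by
      have := Complex.normSq_nonneg w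
      simp only [hv]; nlinarith
    exact this.trans (hz hwA)
  have hnszR : Complex.normSq z ≤ R ^ 2 := by
    rw [Complex.normSq_eq_norm_sq]
    exact pow_le_pow_left₀ (norm_nonneg z) hzA.2 2
  have step2 : v z ≤ M + ε := by
    by_cases hbc : ‖z‖ = ρ ∨ ‖z‖ = R
    · have := hbd z hbc
      have hδR : δ * Complex.normSq z ≤ ε := by
        calc δ * Complex.normSq z ≤ δ * R ^ 2 := by nlinarith
        _ = ε := by rw [hδdef]; field_simp [hR.ne']
      simp only [hv]; linarith
    · exfalso
      push_neg at hbc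
      have hz1 : ρ < ‖z‖ := lt_of_le_of_ne hzA.1 (Ne.symm hbc.1)
      have hz2 : ‖z‖ < R := lt_of_le_of_ne hzA.2 hbc.2
      set Ω : Set ℂ := (fun z : ℂ => ‖z‖) ⁻¹' (Set.Ioo ρ R) with hΩ
      have hΩopen : IsOpen Ω := isOpen_Ioo.preimage continuous_norm
      have hzΩ : z ∈ Ω := ⟨hz1, hz2⟩
      have huΩ : ContDiffOn ℝ 2 u Ω := fun y hy =>
        (hC y hy.1.le hy.2.le).contDiffWithinAt
      have hΩA : Ω ⊆ A := fun y hy => ⟨hy.1.le, hy.2.le⟩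
      have hlm : IsLocalMax v z := hz.isLocalMax (mem_nhds_iff.2 ⟨Ω, hΩA, hΩopen, hzΩ⟩)
      -- slice local maxima
      have hslm : ∀ dir : ℂ, IsLocalMax (fun s : ℝ => v (z + s • dir)) 0 := by
        intro dir
        have hcont : ContinuousAt (fun s : ℝ => z + s • dir) 0 := by fun_prop
        have htd : Filter.Tendsto (fun s : ℝ => z + s • dir) (𝓝 0) (𝓝 z) := by
          have h0 : z + (0:ℝ) • dir = z := by simp
          simpa [ContinuousAt, h0] using hcont
        have hev := htd.eventually hlm
        have h0 : z + (0:ℝ) • dir = z := by simp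
        unfold IsLocalMax IsMaxFilter
        simpa [h0] using hev
      -- packages in direction 1
      have hpkg : ∀ dir : ℂ, (∀ s : ℝ, HasDerivAt (fun s' : ℝ => Complex.normSq (z + s' • dir))
            (2 * ((if dir = 1 then z.re else z.im) + s)) s) →
          iteratedFDeriv ℝ 2 u z ![dir, dir] + 2 * δ ≤ 0 := by
        intro dir hnsq
        have h1 : ∀ᶠ s in 𝓝 (0:ℝ), HasDerivAt (fun s' : ℝ => v (z + s' • dir))
            (fderiv ℝ u (z + s • dir) dir + δ * (2 * ((if dir = 1 then z.re else z.im) + s))) s := by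
          filter_upwards [eventually_line_mem hΩopen hzΩ dir] with s hs
          exact (slice_hasDerivAt hΩopen huΩ dir hs).add ((hnsq s).const_mul δ)
        have h2 : HasDerivAt
            (fun s : ℝ => fderiv ℝ u (z + s • dir) dir
              + δ * (2 * ((if dir = 1 then z.re else z.im) + s)))
            (iteratedFDeriv ℝ 2 u z ![dir, dir] + 2 * δ) 0 := by
          have ha := slice_second hΩopen huΩ hzΩ dir
          have hb : HasDerivAt (fun s : ℝ => δ * (2 * ((if dir = 1 then z.re else z.im) + s)))
              (2 * δ) 0 := by
            have : HasDerivAt (fun s : ℝ => (if dir = 1 then z.re else z.im) + s) 1 0 :=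
              (hasDerivAt_id 0).const_add _
            have := (this.const_mul 2).const_mul δ
            exact this.congr_deriv (by ring)
          exact ha.add hb
        exact second_le_zero_of_isLocalMax h1 h2 (hslm dir)
      have hI1 : iteratedFDeriv ℝ 2 u z ![1, 1] + 2 * δ ≤ 0 := by
        apply hpkg 1
        intro s
        simpa using nsq_slice_one z s
      have hI2 : iteratedFDeriv ℝ 2 u z ![Complex.I, Complex.I] + 2 * δ ≤ 0 := by
        apply hpkg Complex.I
        intro s
        have : (Complex.I : ℂ) ≠ 1 := by
          intro hcon
          have := congrArg Complex.im hcon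
          simp at this
        simpa [this] using nsq_slice_I z s
      have := hsub z hz1 hz2
      linarith
  linarith
lemma lap_pert {u : ℂ → ℝ} {Ω : Set ℂ} (hΩ : IsOpen Ω) (hΩ0 : ∀ ζ ∈ Ω, ζ ≠ 0)
    (hu : ContDiffOn ℝ 2 u Ω) {w : ℂ} (hw : w ∈ Ω) (b c0 : ℝ) :
    iteratedFDeriv ℝ 2 (fun ζ => u ζ + (b * ll ζ + c0)) w ![1, 1]
      + iteratedFDeriv ℝ 2 (fun ζ => u ζ + (b * ll ζ + c0)) w ![Complex.I, Complex.I]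
    = iteratedFDeriv ℝ 2 u w ![1, 1] + iteratedFDeriv ℝ 2 u w ![Complex.I, Complex.I] := by
  have hw0 : w ≠ 0 := hΩ0 w hw
  set Ω' : Set ℂ := Ω ∩ {ζ : ℂ | ζ ≠ 0} with hΩ'
  have hΩ'open : IsOpen Ω' := hΩ.inter (isOpen_compl_singleton)
  have hwΩ' : w ∈ Ω' := ⟨hw, hw0⟩
  have hu' : ContDiffOn ℝ 2 (fun ζ => u ζ + (b * ll ζ + c0)) Ω' := by
    exact (hu.mono Set.inter_subset_left).add
      ((contDiffOn_const.mul (contDiffOn_ll.mono Set.inter_subset_right)).add contDiffOn_const)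
  have huΩ' : ContDiffOn ℝ 2 u Ω' := hu.mono Set.inter_subset_left
  have e1 : iteratedFDeriv ℝ 2 (fun ζ => u ζ + (b * ll ζ + c0)) w ![1, 1]
      = iteratedFDeriv ℝ 2 u w ![1, 1]
        + b * ((w.im ^ 2 - w.re ^ 2) / (Complex.normSq w) ^ 2) := by
    apply second_deriv_eq hΩ'open hu' hwΩ' (1:ℂ)
      (p := fun s => fderiv ℝ u (w + s • (1:ℂ)) 1
        + b * ((w.re + s) / ((w.re + s) ^ 2 + w.im ^ 2)))
    · filter_upwards [eventually_line_mem hΩ'open hwΩ' (1:ℂ)] with s hs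
      have hne : w + (s:ℝ) • (1:ℂ) ≠ 0 := hs.2
      exact (slice_hasDerivAt hΩ'open huΩ' (1:ℂ) hs).add
        (((ll_slice_one hne).const_mul b).add_const c0 |>.congr_deriv rfl)
    · exact (slice_second hΩ'open huΩ' hwΩ' (1:ℂ)).add ((ll_second_one hw0).const_mul b)
  have e2 : iteratedFDeriv ℝ 2 (fun ζ => u ζ + (b * ll ζ + c0)) w ![Complex.I, Complex.I]
      = iteratedFDeriv ℝ 2 u w ![Complex.I, Complex.I]
        + b * ((w.re ^ 2 - w.im ^ 2) / (Complex.normSq w) ^ 2) := by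
    apply second_deriv_eq hΩ'open hu' hwΩ' (Complex.I)
      (p := fun s => fderiv ℝ u (w + s • Complex.I) Complex.I
        + b * ((w.im + s) / ((w.im + s) ^ 2 + w.re ^ 2)))
    · filter_upwards [eventually_line_mem hΩ'open hwΩ' Complex.I] with s hs
      have hne : w + (s:ℝ) • Complex.I ≠ 0 := hs.2
      exact (slice_hasDerivAt hΩ'open huΩ' Complex.I hs).add
        (((ll_slice_I hne).const_mul b).add_const c0 |>.congr_deriv rfl)
    · exact (slice_second hΩ'open huΩ' hwΩ' Complex.I).add ((ll_second_I hw0).const_mul b)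
  rw [e1, e2]
  ring
lemma stepLemma (u : ℂ → ℝ) (R : ℝ) (hR0 : 0 < R) (hR1 : R < 1)
    (hC : ∀ w : ℂ, 0 < ‖w‖ → ‖w‖ < 1 → ContDiffAt ℝ 2 u w)
    (hsub : ∀ w : ℂ, 0 < ‖w‖ → ‖w‖ < 1 →
      0 ≤ iteratedFDeriv ℝ 2 u w ![1, 1] +
          iteratedFDeriv ℝ 2 u w ![Complex.I, Complex.I])
    (ε C ρ₀ : ℝ) (hε : 0 < ε) (hρ₀ : 0 < ρ₀)
    (hgrow : ∀ w : ℂ, 0 < ‖w‖ → ‖w‖ ≤ ρ₀ →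
      u w ≤ ε * Real.log (1 / ‖w‖) + C)
    (w₀ : ℂ) (h₁ : 0 < ‖w₀‖) (h₂ : ‖w₀‖ ≤ R) :
    ∃ ζ : ℂ, ‖ζ‖ = R ∧
      u w₀ ≤ u ζ + ε * (Real.log R - Real.log (‖w₀‖)) := by
  set S : Set ℂ := (fun z : ℂ => ‖z‖) ⁻¹' {R} with hS
  have hSclosed : IsClosed S := (isClosed_singleton).preimage continuous_norm
  have hSbdd : Bornology.IsBounded S := by
    apply Bornology.IsBounded.subset (Metric.isBounded_closedBall (x := (0:ℂ)) (r := R))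
    intro y hy
    simp only [Metric.mem_closedBall, dist_zero_right]
    exact le_of_eq hy
  have hScomp : IsCompact S := Metric.isCompact_of_isClosed_isBounded hSclosed hSbdd
  have hSne : S.Nonempty := ⟨(R:ℂ), by simp [hS, Complex.norm_real, abs_of_pos hR0]⟩
  have hScont : ContinuousOn u S := by
    intro y hy
    have hy' : ‖y‖ = R := hy
    exact ((hC y (hy' ▸ hR0) (hy' ▸ hR1)).continuousAt).continuousWithinAt
  obtain ⟨ζ, hζS, hζ⟩ := hScomp.exists_isMaxOn hSne hScont
  have hζR : ‖ζ‖ = R := hζS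
  set M : ℝ := u ζ with hM
  refine ⟨ζ, hζR, ?_⟩
  set σ : ℝ := ‖w₀‖ with hσ
  rcases eq_or_lt_of_le h₂ with hcase | hcase
  · have h3 : u w₀ ≤ M := hζ (by simpa [hS] using hcase)
    have hz : Real.log R - Real.log σ = 0 := by rw [hcase]; ring
    rw [hz]
    linarith
  have hσ0 : 0 < σ := h₁
  have hσR : σ < R := hcase
  have hεview : ∀ ρ : ℝ, 0 < ρ → ρ < σ → ρ ≤ ρ₀ →
      u w₀ ≤ M + (M - (ε * Real.log (1/ρ) + C)) / (Real.log R - Real.log ρ)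
        * (Real.log σ - Real.log R) := by
    intro ρ hρ0 hρσ hρρ₀
    set L : ℝ := ε * Real.log (1/ρ) + C with hL
    have hlog : Real.log ρ < Real.log R := Real.log_lt_log hρ0 (hρσ.trans hσR)
    have hlogne : Real.log R - Real.log ρ ≠ 0 := sub_ne_zero.2 (ne_of_gt hlog)
    set β : ℝ := (M - L) / (Real.log R - Real.log ρ) with hβ
    have hβval : β * (Real.log R - Real.log ρ) = M - L := by
      rw [hβ]; field_simp
    set u' : ℂ → ℝ := fun y => u y + ((-β) * ll y + (β * Real.log R - M)) with hu'
    have key : ∀ w : ℂ, ρ ≤ ‖w‖ → ‖w‖ ≤ R → u' w ≤ 0 := by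
      apply maxPrinciple u' ρ R 0 hρ0 (hρσ.trans hσR)
      · intro w hw1 hw2
        have hw0 : 0 < ‖w‖ := lt_of_lt_of_le hρ0 hw1
        have hwne : w ≠ 0 := by
          intro hcon; rw [hcon] at hw0; simp at hw0
        exact (hC w hw0 (lt_of_le_of_lt hw2 hR1)).add
          ((contDiffAt_const.mul (contDiffAt_ll hwne)).add contDiffAt_const)
      · intro w hw1 hw2
        have hw0' : 0 < ‖w‖ := hρ0.trans hw1
        have hww : ‖w‖ < 1 := hw2.trans hR1
        set Ω : Set ℂ := (fun z : ℂ => ‖z‖) ⁻¹' (Set.Ioo 0 1) with hΩ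
        have hΩopen : IsOpen Ω := isOpen_Ioo.preimage continuous_norm
        have hΩ0 : ∀ y (hy : y ∈ Ω), y ≠ 0 := by
          intro y hy hcon
          rw [hcon] at hy
          simpa using hy.1
        have huΩ : ContDiffOn ℝ 2 u Ω := fun y hy => (hC y hy.1 hy.2).contDiffWithinAt
        have hwΩ : w ∈ Ω := ⟨hw0', hww⟩
        rw [hu', lap_pert hΩopen hΩ0 huΩ hwΩ (-β) (β * Real.log R - M)]
        exact hsub w hw0' hww
      · intro w hwb
        have hal : ll w = Real.log (‖w‖) := (ll_eq w).symm
        rcases hwb with hwb | hwb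
        · have hgw : u w ≤ L := by
            rw [hL, ← hwb]
            exact hgrow w (by rw [hwb]; exact hρ0) (by rw [hwb]; exact hρρ₀)
          have hlin : (-β) * ll w + (β * Real.log R - M) = -L := by
            rw [hal, hwb]
            nlinarith [hβval]
          rw [hu']
          simp only
          rw [hlin]
          linarith
        · have hgw : u w ≤ M := hζ (by simpa [hS] using hwb)
          have hlin : (-β) * ll w + (β * Real.log R - M) = -M := by
            rw [hal, hwb]; ring
          rw [hu']
          simp only
          rw [hlin]
          linarith
    have hk := key w₀ hρσ.le h₂
    rw [hu'] at hk
    simp only at hk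
    have hllw₀ : ll w₀ = Real.log σ := by rw [← ll_eq]
    rw [hllw₀] at hk
    nlinarith [hk]
  -- limit as ρ → 0⁺
  have hKden : Tendsto (fun ℓ : ℝ => Real.log R - ℓ) atBot atTop := by
    have h1 : Tendsto (fun ℓ : ℝ => -ℓ) atBot atTop := tendsto_neg_atBot_atTop
    have := tendsto_atTop_add_const_left atBot (Real.log R) h1
    simpa [sub_eq_add_neg] using this
  have hF : Tendsto (fun ℓ : ℝ => (M - C + ε * ℓ) / (Real.log R - ℓ)) atBot (𝓝 (-ε)) := by
    have h1 : Tendsto (fun ℓ : ℝ => -ε + (M - C + ε * Real.log R) * (Real.log R - ℓ)⁻¹)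
        atBot (𝓝 (-ε + (M - C + ε * Real.log R) * 0)) :=
      tendsto_const_nhds.add (tendsto_const_nhds.mul hKden.inv_tendsto_atTop)
    rw [mul_zero, add_zero] at h1
    apply h1.congr'
    filter_upwards [eventually_lt_atBot (Real.log R)] with ℓ hℓ
    have hne : Real.log R - ℓ ≠ 0 := sub_ne_zero.2 (ne_of_gt hℓ)
    field_simp
    ring
  have hβtend : Tendsto (fun ρ : ℝ => (M - (ε * Real.log (1/ρ) + C)) / (Real.log R - Real.log ρ))
      (𝓝[>] (0:ℝ)) (𝓝 (-ε)) := by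
    have hcomp := hF.comp Real.tendsto_log_nhdsGT_zero
    apply hcomp.congr
    intro ρ
    simp only [Function.comp]
    rw [one_div, Real.log_inv]
    ring_nf
  have htend : Tendsto (fun ρ : ℝ => M + (M - (ε * Real.log (1/ρ) + C)) / (Real.log R - Real.log ρ)
      * (Real.log σ - Real.log R)) (𝓝[>] (0:ℝ))
      (𝓝 (M + (-ε) * (Real.log σ - Real.log R))) :=
    tendsto_const_nhds.add (hβtend.mul tendsto_const_nhds)
  have hfin : u w₀ ≤ M + (-ε) * (Real.log σ - Real.log R) := by
    apply ge_of_tendsto htend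
    filter_upwards [Ioo_mem_nhdsGT_of_mem (Set.left_mem_Ico.2 (lt_min hσ0 hρ₀))] with ρ hρ
    exact hεview ρ hρ.1 (lt_of_lt_of_le hρ.2 (min_le_left _ _))
      (le_of_lt (lt_of_lt_of_le hρ.2 (min_le_right _ _)))
  have : M + (-ε) * (Real.log σ - Real.log R) = M + ε * (Real.log R - Real.log σ) := by ring
  linarith [hfin, this ▸ hfin]

lemma isOpen_polydiscU (n r : ℕ) (hrn : r ≤ n) : IsOpen (polydiscU n r hrn) := by
  have h1 : polydiscU n r hrn =
      (⋂ j : Fin n, {z : Fin n → ℂ | ‖z j‖ < 1}) ∩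
      (⋂ i : Fin r, {z : Fin n → ℂ | z (Fin.castLE hrn i) ≠ 0}) := by
    ext z
    simp [polydiscU, Set.mem_iInter]
  rw [h1]
  apply IsOpen.inter
  · apply isOpen_iInter_of_finite
    intro j
    have : Continuous fun z : Fin n → ℂ => ‖z j‖ :=
      continuous_norm.comp (continuous_apply j)
    exact isOpen_lt this continuous_const
  · apply isOpen_iInter_of_finite
    intro i
    exact isOpen_ne.preimage (continuous_apply (Fin.castLE hrn i))

lemma subpoly_log_s10 {μ : ℝ → ℝ} (hμ : Subpolynomial μ) {ε : ℝ} (hε : 0 < ε) :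
    ∃ x₀ : ℝ, 1 < x₀ ∧ ∀ x : ℝ, x₀ ≤ x → Real.log (μ x) ≤ ε * Real.log x := by
  have h1 := (hμ.2 ε hε).eventually (eventually_le_nhds (by norm_num : (0:ℝ) < 1))
  rcases (eventually_atTop.1 h1) with ⟨x₁, hx₁⟩
  refine ⟨max x₁ 2, by norm_num [lt_max_iff], fun x hx => ?_⟩
  have hx2 : (2:ℝ) ≤ x := le_trans (le_max_right _ _) hx
  have hx0 : (0:ℝ) < x := by linarith
  have hxpow : (0:ℝ) < x ^ ε := Real.rpow_pos_of_pos hx0 ε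
  have hq := hx₁ x (le_trans (le_max_left _ _) hx)
  have hμx : μ x ≤ x ^ ε := by
    rw [div_le_iff₀ hxpow, one_mul] at hq
    exact hq
  calc Real.log (μ x) ≤ Real.log (x ^ ε) := Real.log_le_log (hμ.1 x hx0) hμx
  _ = ε * Real.log x := Real.log_rpow hx0 ε
noncomputable def GG (n r : ℕ) (hrn : r ≤ n) (g : (Fin n → ℂ) → ℝ) (a : Fin r → ℝ) :
    (Fin n → ℂ) → ℝ :=
  fun z => g z + ∑ i : Fin r, a i * ll (z (Fin.castLE hrn i))

lemma slice_props (n r : ℕ) (hrn : r ≤ n)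
    (g : (Fin n → ℂ) → ℝ)
    (hg : ContDiffOn ℝ 2 g (polydiscU n r hrn))
    (hLevi : LeviSemipositiveOn g (polydiscU n r hrn))
    (a : Fin r → ℝ) (z' : Fin n → ℂ) (k : Fin r)
    (hz1 : ∀ j, ‖z' j‖ < 1)
    (hz2 : ∀ i : Fin r, i ≠ k → z' (Fin.castLE hrn i) ≠ 0) :
    (∀ w : ℂ, 0 < ‖w‖ → ‖w‖ < 1 →
      ContDiffAt ℝ 2 (fun w' => GG n r hrn g a (Function.update z' (Fin.castLE hrn k) w')) w)
    ∧ (∀ w : ℂ, 0 < ‖w‖ → ‖w‖ < 1 →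
      0 ≤ iteratedFDeriv ℝ 2
            (fun w' => GG n r hrn g a (Function.update z' (Fin.castLE hrn k) w')) w ![1, 1]
        + iteratedFDeriv ℝ 2
            (fun w' => GG n r hrn g a (Function.update z' (Fin.castLE hrn k) w')) w
            ![Complex.I, Complex.I]) := by
  set U : Set (Fin n → ℂ) := polydiscU n r hrn with hU
  have hUopen : IsOpen U := isOpen_polydiscU n r hrn
  set j : Fin n := Fin.castLE hrn k with hj
  set c : ℝ := ∑ i ∈ Finset.univ.erase k, a i * ll (z' (Fin.castLE hrn i)) with hc
  set uk : ℂ → ℝ := fun w' => GG n r hrn g a (Function.update z' j w') with huk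
  have hinj : Function.Injective (Fin.castLE hrn) := Fin.castLE_injective hrn
  have hformula : ∀ w' : ℂ,
      uk w' = g (Function.update z' j w') + (a k * ll w' + c) := by
    intro w'
    rw [huk]
    simp only [GG]
    congr 1
    rw [← Finset.sum_erase_add Finset.univ _ (Finset.mem_univ k)]
    rw [add_comm]
    congr 1
    · rw [hj, Function.update_self]
    · rw [hc]
      apply Finset.sum_congr rfl
      intro i hi
      have hik : i ≠ k := (Finset.mem_erase.1 hi).1
      rw [Function.update_of_ne (fun hcon => hik (hinj hcon))]
  set Ωk : Set ℂ := (fun z : ℂ => ‖z‖) ⁻¹' (Set.Ioo 0 1) with hΩk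
  have hΩkopen : IsOpen Ωk := isOpen_Ioo.preimage continuous_norm
  have hΩkne : ∀ w ∈ Ωk, w ≠ 0 := by
    intro w hw hcon
    rw [hcon] at hw
    simpa using hw.1
  have hmemU : ∀ w ∈ Ωk, Function.update z' j w ∈ U := by
    intro w hw
    refine ⟨fun j' => ?_, fun i => ?_⟩
    · rcases eq_or_ne j' j with h | h
      · rw [h, Function.update_self]; exact hw.2
      · rw [Function.update_of_ne h]; exact hz1 j'
    · rcases eq_or_ne i k with h | h
      · rw [h, ← hj, Function.update_self]; exact hΩkne w hw
      · rw [Function.update_of_ne (fun hcon => h (hinj hcon))]; exact hz2 i h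
  have hgU : ContDiffOn ℝ 2 g U := hg
  have hcdA : ContDiff ℝ 2 (Function.update z' j) := contDiff_update 2 z' j
  have hllΩ : ContDiffOn ℝ 2 ll Ωk := contDiffOn_ll.mono (fun w hw => hΩkne w hw)
  have hukC : ContDiffOn ℝ 2 uk Ωk := by
    have he : uk = fun w' => g (Function.update z' j w') + (a k * ll w' + c) :=
      funext hformula
    rw [he]
    exact (hgU.comp hcdA.contDiffOn hmemU).add
      ((contDiffOn_const.mul hllΩ).add contDiffOn_const)
  constructor
  · intro w hw1 hw2
    exact hukC.contDiffAt (hΩkopen.mem_nhds ⟨hw1, hw2⟩)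
  · intro w hw1 hw2
    have hwΩ : w ∈ Ωk := ⟨hw1, hw2⟩
    have hwne : w ≠ 0 := hΩkne w hwΩ
    set ej : Fin n → ℂ := Pi.single j 1 with hej
    set yw : Fin n → ℂ := Function.update z' j w with hyw
    have hywU : yw ∈ U := hmemU w hwΩ
    have update_line : ∀ (v : ℂ) (s : ℝ),
        Function.update z' j (w + s • v) = yw + s • (v • ej) := by
      intro v s
      funext j'
      rcases eq_or_ne j' j with h | h
      · subst h
        simp [hyw, hej, Function.update_self, Pi.single_eq_same]
      · simp [hyw, hej, Function.update_of_ne h, Pi.single_eq_of_ne h]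
    -- direction 1
    have hsd : ∀ (v : ℂ) (llp : ℝ → ℝ) (llc : ℝ)
        (hllp : ∀ s : ℝ, w + (s:ℝ) • v ≠ 0 →
          HasDerivAt (fun s' : ℝ => ll (w + s' • v)) (llp s) s)
        (hllc : HasDerivAt llp llc 0),
        iteratedFDeriv ℝ 2 uk w ![v, v]
          = iteratedFDeriv ℝ 2 g yw ![v • ej, v • ej] + a k * llc := by
      intro v llp llc hllp hllc
      apply second_deriv_eq hΩkopen hukC hwΩ v
        (p := fun s => fderiv ℝ g (yw + s • (v • ej)) (v • ej) + (a k * llp s + 0))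
      · filter_upwards [eventually_line_mem hΩkopen hwΩ v] with s hs
        have hslice : (fun s' : ℝ => uk (w + s' • v))
            = fun s' : ℝ => g (yw + s' • (v • ej)) + (a k * ll (w + s' • v) + c) := by
          funext s'
          rw [hformula, update_line]
        rw [hslice]
        have hgpart : HasDerivAt (fun s' : ℝ => g (yw + s' • (v • ej)))
            (fderiv ℝ g (yw + s • (v • ej)) (v • ej)) s := by
          apply slice_hasDerivAt hUopen hgU (v • ej)
          rw [← update_line]
          exact hmemU _ hs
        have hllpart : HasDerivAt (fun s' : ℝ => a k * ll (w + s' • v) + c)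
            (a k * llp s + 0) s := by
          exact ((hllp s (hΩkne _ hs)).const_mul (a k)).add (hasDerivAt_const s c)
        exact hgpart.add hllpart
      · have h2a := slice_second hUopen hgU hywU (v • ej)
        have h2b : HasDerivAt (fun s => a k * llp s + 0) (a k * llc) 0 := by
          simpa using (hllc.const_mul (a k)).add_const 0
        exact h2a.add h2b
    have e1 := hsd 1 (fun s => (w.re + s) / ((w.re + s) ^ 2 + w.im ^ 2))
      ((w.im ^ 2 - w.re ^ 2) / (Complex.normSq w) ^ 2)
      (fun s hs => ll_slice_one hs) (ll_second_one hwne)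
    have e2 := hsd Complex.I (fun s => (w.im + s) / ((w.im + s) ^ 2 + w.re ^ 2))
      ((w.re ^ 2 - w.im ^ 2) / (Complex.normSq w) ^ 2)
      (fun s hs => ll_slice_I hs) (ll_second_I hwne)
    rw [e1, e2]
    have hone : (1 : ℂ) • ej = ej := one_smul _ _
    have hI : Complex.I • ej = fun j' => Complex.I * ej j' := by
      funext j'
      simp [Pi.smul_apply, smul_eq_mul]
    have hL := hLevi yw hywU ej
    rw [← hI] at hL
    rw [hone]
    have : a k * ((w.im ^ 2 - w.re ^ 2) / (Complex.normSq w) ^ 2)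
        + a k * ((w.re ^ 2 - w.im ^ 2) / (Complex.normSq w) ^ 2) = 0 := by ring
    linarith [hL, this]
lemma GG_update (n r : ℕ) (hrn : r ≤ n) (g : (Fin n → ℂ) → ℝ) (a : Fin r → ℝ)
    (z' : Fin n → ℂ) (k : Fin r) (w' : ℂ) :
    GG n r hrn g a (Function.update z' (Fin.castLE hrn k) w')
      = g (Function.update z' (Fin.castLE hrn k) w')
        + (a k * ll w'
          + ∑ i ∈ Finset.univ.erase k, a i * ll (z' (Fin.castLE hrn i))) := by
  have hinj : Function.Injective (Fin.castLE hrn) := Fin.castLE_injective hrn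
  simp only [GG]
  congr 1
  rw [← Finset.sum_erase_add Finset.univ _ (Finset.mem_univ k)]
  rw [add_comm]
  congr 1
  · rw [Function.update_self]
  · apply Finset.sum_congr rfl
    intro i hi
    have hik : i ≠ k := (Finset.mem_erase.1 hi).1
    rw [Function.update_of_ne (fun hcon => hik (hinj hcon))]

lemma coeff_nonpos {c CT L₀ : ℝ} (hL₀ : 1 ≤ L₀) (hb : ∀ L : ℝ, L₀ ≤ L → c * L ≤ CT) :
    c ≤ 0 := by
  by_contra hc
  push_neg at hc
  have h1 : L₀ ≤ max L₀ ((CT + 1)/c) := le_max_left _ _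
  have h2 := hb _ h1
  have h3 : (CT + 1)/c ≤ max L₀ ((CT + 1)/c) := le_max_right _ _
  have h4 : CT + 1 ≤ c * max L₀ ((CT + 1)/c) := by
    rw [div_le_iff₀ hc] at h3
    linarith [h3]
  linarith

set_option maxHeartbeats 2000000 in
/-- Theorem 3.2 (the main theorem), in local coordinates on a polydisc with normal
crossings boundary divisor: semipositivity of the metric forces the height jump
`Σ m_i a_i − a_C` to be nonnegative. -/
theorem stmt10 (n r : ℕ) (hr1 : 1 ≤ r) (hrn : r ≤ n)
    (g : (Fin n → ℂ) → ℝ)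
    (hg : ContDiffOn ℝ (⊤ : ℕ∞) g (polydiscU n r hrn))
    (hLevi : LeviSemipositiveOn g (polydiscU n r hrn))
    (a : Fin r → ℝ)
    (ha : ∀ i : Fin r, ∀ p : Fin n → ℂ, p ∈ openPolydisc n →
      p (Fin.castLE hrn i) = 0 →
      (∀ i' : Fin r, i' ≠ i → p (Fin.castLE hrn i') ≠ 0) →
      ∃ V : Set (Fin n → ℂ), IsOpen V ∧ p ∈ V ∧ V ⊆ openPolydisc n ∧
        ∃ μ : ℝ → ℝ, Subpolynomial μ ∧
          ∀ z ∈ V ∩ polydiscU n r hrn,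
            |g z + a i * Real.log (‖z (Fin.castLE hrn i)‖)| ≤
              Real.log (μ (1 / ‖z (Fin.castLE hrn i)‖)))
    (φ : ℂ → Fin n → ℂ)
    (hφdiff : DifferentiableOn ℂ φ (Metric.ball 0 1))
    (hφmaps : ∀ t ∈ Metric.ball (0:ℂ) 1, φ t ∈ openPolydisc n)
    (hφU : ∀ t ∈ Metric.ball (0:ℂ) 1, t ≠ 0 → φ t ∈ polydiscU n r hrn)
    (hφ0 : ∀ i : Fin r, φ 0 (Fin.castLE hrn i) = 0)
    (m : Fin r → ℕ) (hm : ∀ i, 0 < m i)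
    (h : Fin r → ℂ → ℂ)
    (hh : ∀ i : Fin r, DifferentiableOn ℂ (h i) (Metric.ball 0 1) ∧ h i 0 ≠ 0 ∧
      ∀ t ∈ Metric.ball (0:ℂ) 1, φ t (Fin.castLE hrn i) = t ^ (m i) * h i t)
    (aC : ℝ) (μC : ℝ → ℝ) (hμC : Subpolynomial μC)
    (ε : ℝ) (hε0 : 0 < ε) (hε1 : ε < 1)
    (hbC : ∀ t : ℂ, t ≠ 0 → ‖t‖ ≤ ε →
      |g (φ t) + aC * Real.log (‖t‖)| ≤ Real.log (μC (1 / ‖t‖))) :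
    aC ≤ ∑ i : Fin r, (m i : ℝ) * a i := by
  set Smul : ℝ := ∑ i : Fin r, (m i : ℝ) * a i with hSmul
  set Sm : ℝ := ∑ i : Fin r, (m i : ℝ) with hSm
  have hSm0 : 0 ≤ Sm := Finset.sum_nonneg (fun i _ => Nat.cast_nonneg _)
  suffices H : ∀ ε' : ℝ, 0 < ε' → aC ≤ Smul + ε' * (Sm + 1) by
    by_contra hcon
    push_neg at hcon
    have hd : 0 < aC - Smul := sub_pos.2 hcon
    have hden : 0 < 2 * (Sm + 1) := by linarith
    set ε' := (aC - Smul) / (2 * (Sm + 1)) with hε'def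
    have hε'0 : 0 < ε' := div_pos hd hden
    have hH := H ε' hε'0
    have : ε' * (Sm + 1) = (aC - Smul) / 2 := by
      rw [hε'def]
      field_simp
    rw [this] at hH
    linarith
  intro ε' hε'
  -- basic facts
  have hUopen : IsOpen (polydiscU n r hrn) := isOpen_polydiscU n r hrn
  have hgU : ContDiffOn ℝ 2 g (polydiscU n r hrn) := hg.of_le (WithTop.coe_le_coe.2 le_top)
  have hballsub : Metric.closedBall (0:ℂ) ε ⊆ Metric.ball (0:ℂ) 1 := by
    intro t ht
    rw [Metric.mem_closedBall] at ht
    rw [Metric.mem_ball]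
    linarith
  have htball : ∀ t : ℂ, ‖t‖ ≤ ε → t ∈ Metric.ball (0:ℂ) 1 := by
    intro t ht
    rw [Metric.mem_ball, dist_zero_right]
    linarith
  have hφcont : ContinuousOn φ (Metric.closedBall (0:ℂ) ε) :=
    (hφdiff.continuousOn).mono hballsub
  have hcompε : IsCompact (Metric.closedBall (0:ℂ) ε) := isCompact_closedBall _ _
  have hneε : (Metric.closedBall (0:ℂ) ε).Nonempty := ⟨0, by simp [hε0.le]⟩
  -- coordinatewise sup of |φ| on the closed ball
  have hBj : ∀ j : Fin n, ∃ Mj : ℝ, 0 ≤ Mj ∧ Mj < 1 ∧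
      ∀ t : ℂ, ‖t‖ ≤ ε → ‖φ t j‖ ≤ Mj := by
    intro j
    have hcont : ContinuousOn (fun t => ‖φ t j‖) (Metric.closedBall (0:ℂ) ε) :=
      continuous_norm.comp_continuousOn ((continuous_apply j).comp_continuousOn hφcont)
    obtain ⟨ts, hts, hmax⟩ := hcompε.exists_isMaxOn hneε hcont
    refine ⟨‖φ ts j‖, norm_nonneg _, hφmaps ts (hballsub hts) j, ?_⟩
    intro t ht
    exact hmax (by rwa [Metric.mem_closedBall, dist_zero_right])
  choose B hB0 hB1 hB2 using hBj
  have hnr : 0 < n := lt_of_lt_of_le hr1 hrn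
  have hFinNne : (Finset.univ : Finset (Fin n)).Nonempty := ⟨⟨0, hnr⟩, Finset.mem_univ _⟩
  set r₀ : ℝ := Finset.univ.sup' hFinNne B with hr₀
  have hr₀0 : 0 ≤ r₀ := le_trans (hB0 ⟨0, hnr⟩) (Finset.le_sup' B (Finset.mem_univ _))
  have hr₀1 : r₀ < 1 := by
    rw [hr₀, Finset.sup'_lt_iff]
    intro j _
    exact hB1 j
  have hr₀B : ∀ j : Fin n, ∀ t : ℂ, ‖t‖ ≤ ε → ‖φ t j‖ ≤ r₀ := by
    intro j t ht
    exact le_trans (hB2 j t ht) (Finset.le_sup' B (Finset.mem_univ j))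
  set r₁ : ℝ := (1 + r₀) / 2 with hr₁
  have hr₁0 : 0 < r₁ := by rw [hr₁]; linarith
  have hr₁1 : r₁ < 1 := by rw [hr₁]; linarith
  have hr₀r₁ : r₀ < r₁ := by rw [hr₁]; linarith
  -- the compact torus-times-ball set K and the bound CK
  set K : Set (Fin n → ℂ) := {y | (∀ i : Fin r, ‖y (Fin.castLE hrn i)‖ = r₁) ∧
      ∀ j : Fin n, ‖y j‖ ≤ r₁} with hK
  have hKU : K ⊆ polydiscU n r hrn := by
    intro y hy
    refine ⟨fun j => lt_of_le_of_lt (hy.2 j) hr₁1, fun i => ?_⟩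
    intro hcon
    have := hy.1 i
    rw [hcon] at this
    simp at this
    linarith [hr₁0, this]
  have hKclosed : IsClosed K := by
    have h1 : K = (⋂ i : Fin r, {y : Fin n → ℂ | ‖y (Fin.castLE hrn i)‖ = r₁}) ∩
        (⋂ j : Fin n, {y : Fin n → ℂ | ‖y j‖ ≤ r₁}) := by
      ext y
      simp only [hK, Set.mem_setOf_eq, Set.mem_inter_iff, Set.mem_iInter]
    rw [h1]
    apply IsClosed.inter
    · exact isClosed_iInter fun i => isClosed_eq
        (continuous_norm.comp (continuous_apply _)) continuous_const
    · exact isClosed_iInter fun j => isClosed_le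
        (continuous_norm.comp (continuous_apply _)) continuous_const
  have hKbdd : Bornology.IsBounded K := by
    apply Bornology.IsBounded.subset (Metric.isBounded_closedBall (x := (0 : Fin n → ℂ)) (r := 1))
    intro y hy
    rw [Metric.mem_closedBall, dist_zero_right]
    rw [pi_norm_le_iff_of_nonneg (by norm_num : (0:ℝ) ≤ 1)]
    intro j
    exact le_trans (hy.2 j) hr₁1.le
  have hKcomp : IsCompact K := Metric.isCompact_of_isClosed_isBounded hKclosed hKbdd
  have hGGcont : ContinuousOn (GG n r hrn g a) (polydiscU n r hrn) := by
    apply ContinuousOn.add (hg.continuousOn)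
    apply continuousOn_finset_sum
    intro i _
    intro z hz
    apply ContinuousWithinAt.mono ?_ (Set.subset_univ _)
    apply ContinuousAt.continuousWithinAt
    have h1 : ContinuousAt ll (z (Fin.castLE hrn i)) := (contDiffAt_ll (hz.2 i)).continuousAt
    have h2 : ContinuousAt (fun y : Fin n → ℂ => y (Fin.castLE hrn i)) z :=
      (continuous_apply _).continuousAt
    exact continuousAt_const.mul (show ContinuousAt (ll ∘ fun y : Fin n → ℂ => y (Fin.castLE hrn i)) z from ContinuousAt.comp (f := fun y : Fin n → ℂ => y (Fin.castLE hrn i)) (x := z) h1 h2)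
  obtain ⟨CK, hCK'⟩ := hKcomp.exists_bound_of_continuousOn (hGGcont.mono hKU)
  have hCK : ∀ y ∈ K, GG n r hrn g a y ≤ CK := by
    intro y hy
    have := hCK' y hy
    rw [Real.norm_eq_abs] at this
    exact le_trans (le_abs_self _) this
  have hinj : Function.Injective (Fin.castLE hrn) := Fin.castLE_injective hrn
  -- the coordinate-by-coordinate chain
  have chain : ∀ t : ℂ, t ≠ 0 → ‖t‖ ≤ ε → ∀ k : ℕ, k ≤ r →
      ∃ z' : Fin n → ℂ,
      (∀ i : Fin r, (i:ℕ) < k → ‖z' (Fin.castLE hrn i)‖ = r₁) ∧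
      (∀ i : Fin r, k ≤ (i:ℕ) → z' (Fin.castLE hrn i) = φ t (Fin.castLE hrn i)) ∧
      (∀ j : Fin n, ‖z' j‖ ≤ r₁) ∧
      GG n r hrn g a (φ t) ≤ GG n r hrn g a z'
        + ε' * ∑ i : Fin r, (if (i:ℕ) < k then
            (Real.log r₁ - Real.log (‖φ t (Fin.castLE hrn i)‖)) else 0) := by
    intro t ht hte
    intro k
    induction k with
    | zero =>
      intro _
      refine ⟨φ t, fun i hi => absurd hi (Nat.not_lt_zero _), fun i _ => rfl, ?_, ?_⟩
      · intro j
        exact le_trans (hr₀B j t hte) hr₀r₁.le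
      · simp
    | succ k ih =>
      intro hk1
      obtain ⟨z', hA, hBeq, hmod, hbound⟩ := ih (Nat.le_of_succ_le hk1)
      have hkr : k < r := hk1
      set kk : Fin r := ⟨k, hkr⟩ with hkk
      have hkkval : (kk : ℕ) = k := rfl
      set j : Fin n := Fin.castLE hrn kk with hj
      have hz1 : ∀ j' : Fin n, ‖z' j'‖ < 1 := fun j' =>
        lt_of_le_of_lt (hmod j') hr₁1
      have hz2 : ∀ i : Fin r, i ≠ kk → z' (Fin.castLE hrn i) ≠ 0 := by
        intro i hik
        by_cases hcase : (i:ℕ) < k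
        · intro hcon
          have := hA i hcase
          rw [hcon] at this
          simp at this
          linarith [hr₁0]
        · have hival : k ≤ (i:ℕ) := Nat.le_of_not_lt hcase
          rw [hBeq i hival]
          exact (hφU t (htball t hte) ht).2 i
      obtain ⟨hCdiff, hsubh⟩ := slice_props n r hrn g hgU hLevi a z' kk hz1 hz2
      -- growth bound near w = 0 from ha
      set p : Fin n → ℂ := Function.update z' j 0 with hp
      have hp_poly : p ∈ openPolydisc n := by
        intro j'
        rcases eq_or_ne j' j with hcase | hcase
        · rw [hp, hcase, Function.update_self]
          simpa using zero_lt_one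
        · rw [hp, Function.update_of_ne hcase]
          exact hz1 j'
      have hp0 : p (Fin.castLE hrn kk) = 0 := by rw [hp, ← hj, Function.update_self]
      have hpne : ∀ i' : Fin r, i' ≠ kk → p (Fin.castLE hrn i') ≠ 0 := by
        intro i' hi'
        rw [hp, Function.update_of_ne (fun hcon => hi' (hinj (hj ▸ hcon)))]
        exact hz2 i' hi'
      obtain ⟨V, hVopen, hpV, hVsub, μ, hμ, hμbound⟩ := ha kk p hp_poly hp0 hpne
      obtain ⟨x₀, hx₀1, hx₀⟩ := subpoly_log_s10 hμ hε'
      obtain ⟨η, hη0, hηV⟩ := Metric.isOpen_iff.1 hVopen p hpV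
      set c : ℝ := ∑ i ∈ Finset.univ.erase kk, a i * ll (z' (Fin.castLE hrn i)) with hc
      set ρ₀ : ℝ := min (η/2) (min (1/x₀) r₁) with hρ₀def
      have hx₀0 : 0 < x₀ := lt_trans zero_lt_one hx₀1
      have hρ₀0 : 0 < ρ₀ := by
        apply lt_min (by linarith)
        exact lt_min (by positivity) hr₁0
      -- update membership in U for |w| ∈ (0,1)
      have hFU : ∀ w : ℂ, 0 < ‖w‖ → ‖w‖ < 1 →
          Function.update z' j w ∈ polydiscU n r hrn := by
        intro w hw0 hw1
        refine ⟨fun j' => ?_, fun i => ?_⟩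
        · rcases eq_or_ne j' j with hcase | hcase
          · rw [hcase, Function.update_self]; exact hw1
          · rw [Function.update_of_ne hcase]; exact hz1 j'
        · rcases eq_or_ne i kk with hcase | hcase
          · rw [hcase, ← hj, Function.update_self]
            intro hcon
            rw [hcon] at hw0
            simp at hw0
          · rw [Function.update_of_ne (fun hcon => hcase (hinj (hj ▸ hcon)))]
            exact hz2 i hcase
      have hgrow : ∀ w : ℂ, 0 < ‖w‖ → ‖w‖ ≤ ρ₀ →
          GG n r hrn g a (Function.update z' j w) ≤ ε' * Real.log (1 / ‖w‖) + c := by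
        intro w hw0 hwρ
        have hw1 : ‖w‖ < 1 := lt_of_le_of_lt (le_trans hwρ
          (le_trans (min_le_right _ _) (min_le_right _ _))) hr₁1
        have hwV : Function.update z' j w ∈ V := by
          apply hηV
          rw [Metric.mem_ball]
          have : dist (Function.update z' j w) p < η := by
            rw [dist_pi_lt_iff hη0]
            intro b
            rcases eq_or_ne b j with hcase | hcase
            · rw [hcase, hp, Function.update_self, Function.update_self]
              rw [Complex.dist_eq, sub_zero]
              calc ‖w‖ ≤ ρ₀ := hwρ
              _ ≤ η / 2 := min_le_left _ _
              _ < η := by linarith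
            · rw [hp, Function.update_of_ne hcase, Function.update_of_ne hcase]
              simpa using hη0
          exact this
        have hwU : Function.update z' j w ∈ polydiscU n r hrn := hFU w hw0 hw1
        have hb := hμbound _ ⟨hwV, hwU⟩
        rw [← hj, Function.update_self] at hb
        have hb2 : g (Function.update z' j w) + a kk * Real.log (‖w‖)
            ≤ Real.log (μ (1 / ‖w‖)) := le_trans (le_abs_self _) hb
        have hx : x₀ ≤ 1 / ‖w‖ := by
          rw [le_div_iff₀ hw0]
          have : ‖w‖ ≤ 1/x₀ := le_trans hwρ
            (le_trans (min_le_right _ _) (min_le_left _ _))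
          calc x₀ * ‖w‖ ≤ x₀ * (1/x₀) := by
                apply mul_le_mul_of_nonneg_left this hx₀0.le
          _ = 1 := by field_simp
        have hb3 : Real.log (μ (1 / ‖w‖)) ≤ ε' * Real.log (1 / ‖w‖) :=
          hx₀ _ hx
        rw [GG_update n r hrn g a z' kk w, ← hj, ← hc]
        have hllw : ll w = Real.log (‖w‖) := (ll_eq w).symm
        rw [hllw]
        linarith
      -- apply the step lemma
      have hw₀eq : z' (Fin.castLE hrn kk) = φ t (Fin.castLE hrn kk) := hBeq kk (le_refl k)
      have hw₀0 : 0 < ‖z' (Fin.castLE hrn kk)‖ := by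
        rw [hw₀eq]
        have := (hφU t (htball t hte) ht).2 kk
        simpa [norm_pos_iff] using this
      have hw₀R : ‖z' (Fin.castLE hrn kk)‖ ≤ r₁ := hmod _
      obtain ⟨ζ, hζr₁, hstep⟩ := stepLemma
        (fun w' => GG n r hrn g a (Function.update z' (Fin.castLE hrn kk) w'))
        r₁ hr₁0 hr₁1 hCdiff hsubh ε' c ρ₀ hε' hρ₀0 hgrow
        (z' (Fin.castLE hrn kk)) hw₀0 hw₀R
      rw [Function.update_eq_self] at hstep
      set z'' : Fin n → ℂ := Function.update z' j ζ with hz''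
      refine ⟨z'', ?_, ?_, ?_, ?_⟩
      · intro i hik1
        by_cases hcase : (i:ℕ) < k
        · have hine : i ≠ kk := by
            intro hcon
            rw [hcon] at hcase
            exact absurd hcase (lt_irrefl k)
          rw [hz'', Function.update_of_ne (fun hcon => hine (hinj (hj ▸ hcon)))]
          exact hA i hcase
        · have hieq : i = kk := by
            rw [Fin.ext_iff, hkkval]
            omega
          rw [hieq, hz'', ← hj, Function.update_self]
          exact hζr₁
      · intro i hik1
        have hine : i ≠ kk := by
          intro hcon
          rw [hcon, hkkval] at hik1
          omega
        rw [hz'', Function.update_of_ne (fun hcon => hine (hinj (hj ▸ hcon)))]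
        exact hBeq i (by omega)
      · intro j'
        rcases eq_or_ne j' j with hcase | hcase
        · rw [hz'', hcase, Function.update_self, hζr₁]
        · rw [hz'', Function.update_of_ne hcase]
          exact hmod j'
      · have hsum : ∑ i : Fin r, (if (i:ℕ) < k + 1 then
              (Real.log r₁ - Real.log (‖φ t (Fin.castLE hrn i)‖)) else 0)
            = (∑ i : Fin r, (if (i:ℕ) < k then
              (Real.log r₁ - Real.log (‖φ t (Fin.castLE hrn i)‖)) else 0))
            + (Real.log r₁ - Real.log (‖φ t (Fin.castLE hrn kk)‖)) := by
          have hterm : ∀ i : Fin r, (if (i:ℕ) < k + 1 then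
              (Real.log r₁ - Real.log (‖φ t (Fin.castLE hrn i)‖)) else 0)
            = (if (i:ℕ) < k then
              (Real.log r₁ - Real.log (‖φ t (Fin.castLE hrn i)‖)) else 0)
            + (if i = kk then
              (Real.log r₁ - Real.log (‖φ t (Fin.castLE hrn i)‖)) else 0) := by
            intro i
            have hiv : i = kk ↔ (i:ℕ) = k := by
              rw [Fin.ext_iff, hkkval]
            rcases Nat.lt_trichotomy (i:ℕ) k with hlt | heq | hgt
            · have hne : ¬ i = kk := by rw [hiv]; omega
              have hlt1 : (i:ℕ) < k + 1 := by omega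
              simp [hlt, hlt1, hne]
            · have heqf : i = kk := by rw [hiv]; exact heq
              have h1 : (i:ℕ) < k + 1 := by omega
              have h2 : ¬ (i:ℕ) < k := by omega
              simp [h1, h2, heqf, hkkval]
            · have h1 : ¬ (i:ℕ) < k + 1 := by omega
              have h2 : ¬ (i:ℕ) < k := by omega
              have hne : ¬ i = kk := by rw [hiv]; omega
              simp [h1, h2, hne]
          rw [Finset.sum_congr rfl (fun i _ => hterm i), Finset.sum_add_distrib]
          congr 1
          rw [Finset.sum_ite_eq' Finset.univ kk]
          simp
        rw [hsum]
        have : GG n r hrn g a z'' = GG n r hrn g a (Function.update z' (Fin.castLE hrn kk) ζ) := by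
          rw [hz'', hj]
        rw [this]
        rw [hw₀eq] at hstep
        linarith
  -- bounds on log |h i t|
  have hhb : ∀ i : Fin r, ∃ Bi : ℝ, 0 ≤ Bi ∧ ∀ t : ℂ, ‖t‖ ≤ ε →
      |Real.log (‖h i t‖)| ≤ Bi := by
    intro i
    have hhc : ContinuousOn (fun t => ‖h i t‖) (Metric.closedBall (0:ℂ) ε) :=
      continuous_norm.comp_continuousOn (((hh i).1.continuousOn).mono hballsub)
    obtain ⟨tmin, htminm, hmin⟩ := hcompε.exists_isMinOn hneε hhc
    obtain ⟨tmax, _, hmax⟩ := hcompε.exists_isMaxOn hneε hhc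
    have hne0 : ∀ t : ℂ, ‖t‖ ≤ ε → h i t ≠ 0 := by
      intro t ht
      rcases eq_or_ne t 0 with rfl | htne
      · exact (hh i).2.1
      · intro hcon
        have hφi := (hh i).2.2 t (htball t ht)
        have hU := (hφU t (htball t ht) htne).2 i
        rw [hφi, hcon, mul_zero] at hU
        exact hU rfl
    have htminε : ‖tmin‖ ≤ ε := by
      rwa [Metric.mem_closedBall, dist_zero_right] at htminm
    have hminpos : 0 < ‖h i tmin‖ := by
      have := hne0 tmin htminε
      simpa [norm_pos_iff] using this
    refine ⟨max |Real.log (‖h i tmin‖)| |Real.log (‖h i tmax‖)|,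
      le_trans (abs_nonneg _) (le_max_left _ _), ?_⟩
    intro t ht
    have htm : t ∈ Metric.closedBall (0:ℂ) ε := by
      rwa [Metric.mem_closedBall, dist_zero_right]
    have h1 : ‖h i tmin‖ ≤ ‖h i t‖ := hmin htm
    have h2 : ‖h i t‖ ≤ ‖h i tmax‖ := hmax htm
    have hl1 : Real.log (‖h i tmin‖) ≤ Real.log (‖h i t‖) :=
      Real.log_le_log hminpos h1
    have hl2 : Real.log (‖h i t‖) ≤ Real.log (‖h i tmax‖) :=
      Real.log_le_log (lt_of_lt_of_le hminpos h1) h2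
    rw [abs_le]
    constructor
    · have h3 : -|Real.log (‖h i tmin‖)| ≤ Real.log (‖h i tmin‖) :=
        neg_abs_le _
      have h4 : |Real.log (‖h i tmin‖)| ≤ max |Real.log (‖h i tmin‖)|
          |Real.log (‖h i tmax‖)| := le_max_left _ _
      linarith
    · have h3 : Real.log (‖h i tmax‖) ≤ |Real.log (‖h i tmax‖)| :=
        le_abs_self _
      have h4 : |Real.log (‖h i tmax‖)| ≤ max |Real.log (‖h i tmin‖)|
          |Real.log (‖h i tmax‖)| := le_max_right _ _
      linarith
  choose Bh hBh0 hBh using hhb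
  have hlogφ : ∀ i : Fin r, ∀ t : ℂ, t ≠ 0 → ‖t‖ ≤ ε →
      Real.log (‖φ t (Fin.castLE hrn i)‖)
        = (m i : ℝ) * Real.log (‖t‖) + Real.log (‖h i t‖) := by
    intro i t ht hte
    have hh0 : h i t ≠ 0 := by
      intro hcon
      have hφi := (hh i).2.2 t (htball t hte)
      have hU := (hφU t (htball t hte) ht).2 i
      rw [hφi, hcon, mul_zero] at hU
      exact hU rfl
    rw [(hh i).2.2 t (htball t hte), norm_mul, norm_pow]
    rw [Real.log_mul (pow_ne_zero _ (by simpa [norm_ne_zero_iff] using ht))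
      (by simpa [norm_ne_zero_iff] using hh0)]
    rw [Real.log_pow]
  obtain ⟨xC, hxC1, hxC⟩ := subpoly_log_s10 hμC hε'
  set A : ℝ := ∑ i : Fin r, (Real.log r₁ + Bh i) with hA
  set CT : ℝ := CK + ε' * A + ∑ i : Fin r, |a i| * Bh i with hCT
  have main : ∀ t : ℂ, t ≠ 0 → ‖t‖ ≤ ε → xC ≤ 1 / ‖t‖ →
      (aC - Smul - ε' * (Sm + 1)) * Real.log (1 / ‖t‖) ≤ CT := by
    intro t ht hte hxt
    set L : ℝ := Real.log (1 / ‖t‖) with hL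
    have habs0 : 0 < ‖t‖ := by
      simpa [norm_pos_iff] using ht
    have hLlog : Real.log (‖t‖) = -L := by
      rw [hL, one_div, Real.log_inv]; ring
    obtain ⟨z', hz1, hz2, hz3, hz4⟩ := chain t ht hte r (le_refl r)
    have hz'K : z' ∈ K := ⟨fun i => hz1 i i.isLt, hz3⟩
    have hGz' : GG n r hrn g a z' ≤ CK := hCK z' hz'K
    have hifsum : ∑ i : Fin r, (if (i:ℕ) < r then
          (Real.log r₁ - Real.log (‖φ t (Fin.castLE hrn i)‖)) else 0)
        = ∑ i : Fin r, (Real.log r₁ - Real.log (‖φ t (Fin.castLE hrn i)‖)) := by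
      apply Finset.sum_congr rfl
      intro i _
      simp [i.isLt]
    rw [hifsum] at hz4
    have hsumb : ∑ i : Fin r, (Real.log r₁ - Real.log (‖φ t (Fin.castLE hrn i)‖))
        ≤ A + Sm * L := by
      have hSmL : Sm * L = ∑ i : Fin r, (m i : ℝ) * L := by rw [hSm, Finset.sum_mul]
      rw [hSmL, hA, ← Finset.sum_add_distrib]
      apply Finset.sum_le_sum
      intro i _
      rw [hlogφ i t ht hte, hLlog]
      have hB := abs_le.1 (hBh i t hte)
      have := hB.1
      nlinarith [hB.1]
    have hGφ : GG n r hrn g a (φ t) = g (φ t)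
        + ∑ i : Fin r, a i * Real.log (‖φ t (Fin.castLE hrn i)‖) := by
      simp only [GG]
      congr 1
      apply Finset.sum_congr rfl
      intro i _
      rw [← ll_eq]
    have hbc1 := (abs_le.1 (hbC t ht hte)).1
    rw [hLlog] at hbc1
    have hbc3 : Real.log (μC (1 / ‖t‖)) ≤ ε' * L := by
      have := hxC _ hxt
      rwa [← hL] at this
    have haC : aC * L ≤ g (φ t) + ε' * L := by nlinarith [hbc1, hbc3]
    have hasum : -(∑ i : Fin r, a i * Real.log (‖φ t (Fin.castLE hrn i)‖))
        ≤ Smul * L + ∑ i : Fin r, |a i| * Bh i := by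
      have hSmulL : Smul * L = ∑ i : Fin r, ((m i : ℝ) * a i) * L := by
        rw [hSmul, Finset.sum_mul]
      rw [hSmulL, ← Finset.sum_add_distrib, ← Finset.sum_neg_distrib]
      apply Finset.sum_le_sum
      intro i _
      rw [hlogφ i t ht hte, hLlog]
      have hB := hBh i t hte
      have hax : -(a i * Real.log (‖h i t‖)) ≤ |a i| * Bh i := by
        calc -(a i * Real.log (‖h i t‖))
            ≤ |a i * Real.log (‖h i t‖)| := neg_le_abs _
        _ = |a i| * |Real.log (‖h i t‖)| := abs_mul _ _
        _ ≤ |a i| * Bh i := mul_le_mul_of_nonneg_left hB (abs_nonneg _)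
      nlinarith [hax]
    have h5 : ε' * (∑ i : Fin r, (Real.log r₁ - Real.log (‖φ t (Fin.castLE hrn i)‖)))
        ≤ ε' * (A + Sm * L) := mul_le_mul_of_nonneg_left hsumb hε'.le
    have hexpand : (aC - Smul - ε' * (Sm + 1)) * L
        = aC * L - Smul * L - ε' * Sm * L - ε' * L := by ring
    have h6 : ε' * (A + Sm * L) = ε' * A + ε' * Sm * L := by ring
    rw [hexpand, hCT]
    linarith [hz4, hGz', h5, h6, hGφ, haC, hasum]
  have hforall : ∀ L : ℝ, max 1 (max (Real.log (1/ε)) (Real.log xC)) ≤ L →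
      (aC - Smul - ε' * (Sm + 1)) * L ≤ CT := by
    intro L hLge
    set t : ℂ := ((Real.exp (-L) : ℝ) : ℂ) with htdef
    have habs : ‖t‖ = Real.exp (-L) := by
      rw [htdef, Complex.norm_real, Real.norm_eq_abs, abs_of_pos (Real.exp_pos _)]
    have ht0 : t ≠ 0 := by
      intro hcon
      rw [hcon] at habs
      simp at habs
      exact absurd habs.symm (Real.exp_pos _).ne'
    have hte : ‖t‖ ≤ ε := by
      rw [habs]
      have h1 : Real.log (1/ε) ≤ L :=
        le_trans (le_trans (le_max_left _ _) (le_max_right _ _)) hLge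
      calc Real.exp (-L) ≤ Real.exp (-(Real.log (1/ε))) := Real.exp_le_exp.2 (by linarith)
      _ = ε := by rw [one_div, Real.log_inv, neg_neg, Real.exp_log hε0]
    have hinv : 1 / ‖t‖ = Real.exp L := by
      rw [habs, one_div, ← Real.exp_neg, neg_neg]
    have hxt : xC ≤ 1 / ‖t‖ := by
      rw [hinv]
      calc xC = Real.exp (Real.log xC) := (Real.exp_log (by linarith)).symm
      _ ≤ Real.exp L := Real.exp_le_exp.2
          (le_trans (le_trans (le_max_right _ _) (le_max_right _ _)) hLge)
    have hLeq : Real.log (1 / ‖t‖) = L := by rw [hinv, Real.log_exp]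
    have := main t ht0 hte hxt
    rwa [hLeq] at this
  have hcoef : aC - Smul - ε' * (Sm + 1) ≤ 0 :=
    coeff_nonpos (le_max_left _ _) hforall
  linarith
end
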